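/- arXiv:2111.07669 — 4 statements merged into one kernel-verified Lean document; each statement's English description precedes it below -/
import Mathlib

section
/- Boundedness of solutions to the extended radial system (Lemma 2.7): Let N ≥ 2 be an integer, ε > 0, η > 0, let W : (-∞,1] → ℝ be C² with W(0)=0, W ≥ 0 on (-∞,1], W'' ≥ 0 on (-∞,1] \ {0}, and let W̃ : [0,∞) → ℝ be C² with W̃(0)=0, W̃ ≥ 0 on [0,∞), W̃'' ≥ 0 on (0,∞). If (f,g) is a solution of the extended radial system, then f(r)² + g(r)² < 1 for every r ∈ (0,1); moreover f(r) → 0 and g'(r) → 0 as r → 0⁺. -/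
open Set MeasureTheory Filter

noncomputable section

/-- `(f,g)` (with derivatives `f',f''`, `g',g''` on `(0,1]`) is a solution of
the extended radial system with parameters `ε, η` and potential derivatives
`W'` (of `W`, defined on `(-∞,1]`) and `Wt'` (of `W̃`, defined on `[0,∞)`). -/
structure ExtSol (N : ℕ) (ε η : ℝ) (W' Wt' : ℝ → ℝ)
    (f f' f'' g g' g'' : ℝ → ℝ) : Prop where
  hf1 : ∀ r ∈ Ioc (0:ℝ) 1, HasDerivWithinAt f (f' r) (Ioc 0 1) r
  hf2 : ∀ r ∈ Ioc (0:ℝ) 1, HasDerivWithinAt f' (f'' r) (Ioc 0 1) r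
  hf2c : ContinuousOn f'' (Ioc 0 1)
  hg1 : ∀ r ∈ Ioc (0:ℝ) 1, HasDerivWithinAt g (g' r) (Ioc 0 1) r
  hg2 : ∀ r ∈ Ioc (0:ℝ) 1, HasDerivWithinAt g' (g'' r) (Ioc 0 1) r
  hg2c : ContinuousOn g'' (Ioc 0 1)
  odef : ∀ r ∈ Ioo (0:ℝ) 1,
    f'' r + ((N:ℝ) - 1) / r * f' r - ((N:ℝ) - 1) / r ^ 2 * f r
      = -(1 / ε ^ 2) * W' (1 - f r ^ 2 - g r ^ 2) * f r
  odeg : ∀ r ∈ Ioo (0:ℝ) 1,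
    g'' r + ((N:ℝ) - 1) / r * g' r
      = -(1 / ε ^ 2) * W' (1 - f r ^ 2 - g r ^ 2) * g r
        + (1 / η ^ 2) * Wt' (g r ^ 2) * g r
  bcf : f 1 = 1
  bcg : g 1 = 0
  intf1 : IntegrableOn (fun r => r ^ (N - 1) * f' r ^ 2) (Ioo (0:ℝ) 1)
  intf2 : IntegrableOn (fun r => r ^ ((N:ℝ) - 3) * f r ^ 2) (Ioo (0:ℝ) 1)
  intg1 : IntegrableOn (fun r => r ^ (N - 1) * g' r ^ 2) (Ioo (0:ℝ) 1)
  intg2 : IntegrableOn (fun r => r ^ (N - 1) * g r ^ 2) (Ioo (0:ℝ) 1)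


section Pot
variable {W W' W'' : ℝ → ℝ}
  (hW1 : ∀ t ∈ Iic (1:ℝ), HasDerivWithinAt W (W' t) (Iic 1) t)
  (hW2 : ∀ t ∈ Iic (1:ℝ), HasDerivWithinAt W' (W'' t) (Iic 1) t)
  (hW2c : ContinuousOn W'' (Iic 1))
  (hW0 : W 0 = 0)
  (hWnn : ∀ t ∈ Iic (1:ℝ), 0 ≤ W t)
  (hWcv : ∀ t ∈ Iic (1:ℝ), t ≠ 0 → 0 ≤ W'' t)

include hW1 hWnn hW0 in
lemma Wp_zero : W' 0 = 0 := by
  have hmem : Iic (1:ℝ) ∈ nhds (0:ℝ) := Iic_mem_nhds one_pos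
  have hd : HasDerivAt W (W' 0) 0 := (hW1 0 (by norm_num)).hasDerivAt hmem
  have hmin : IsLocalMin W 0 := by
    filter_upwards [hmem] with t ht
    rw [hW0]; exact hWnn t ht
  exact hmin.hasDerivAt_eq_zero hd

include hW2 in
lemma Wp_mvt {s t : ℝ} (hst : s < t) (ht : t ≤ 1) :
    ∃ ξ ∈ Ioo s t, W' t - W' s = W'' ξ * (t - s) := by
  have hcont : ContinuousOn W' (Icc s t) := fun x hx =>
    ((hW2 x (le_trans hx.2 ht)).continuousWithinAt).mono (fun y hy => le_trans hy.2 ht)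
  have hder : ∀ x ∈ Ioo s t, HasDerivAt W' (W'' x) x := fun x hx =>
    (hW2 x (le_of_lt (lt_of_lt_of_le hx.2 ht))).hasDerivAt
      (Iic_mem_nhds (lt_of_lt_of_le hx.2 ht))
  obtain ⟨ξ, hξ, h⟩ := exists_hasDerivAt_eq_slope W' W'' hst hcont hder
  refine ⟨ξ, hξ, ?_⟩
  rw [eq_div_iff (by linarith : t - s ≠ 0)] at h
  linarith [h]

include hW1 hW2 hW0 hWnn hWcv in
lemma Wp_nonneg : ∀ t, 0 ≤ t → t ≤ 1 → 0 ≤ W' t := by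
  intro t h0 h1
  rcases eq_or_lt_of_le h0 with rfl | h0
  · rw [Wp_zero hW1 hW0 hWnn]
  · obtain ⟨ξ, hξ, h⟩ := Wp_mvt hW2 h0 h1
    have := hWcv ξ (le_of_lt (lt_of_lt_of_le hξ.2 h1)) (ne_of_gt hξ.1)
    rw [Wp_zero hW1 hW0 hWnn] at h
    nlinarith

include hW1 hW2 hW0 hWnn hWcv in
lemma Wp_nonpos : ∀ t ≤ 0, W' t ≤ 0 := by
  intro t h0
  rcases eq_or_lt_of_le h0 with rfl | h0
  · rw [Wp_zero hW1 hW0 hWnn]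
  · obtain ⟨ξ, hξ, h⟩ := Wp_mvt hW2 h0 (by norm_num)
    have := hWcv ξ (by linarith [hξ.2] : ξ ≤ 1) (ne_of_lt hξ.2)
    rw [Wp_zero hW1 hW0 hWnn] at h
    nlinarith

include hW1 hW2 hW2c hW0 hWnn in
lemma Wp_lin : ∃ K : ℝ, 0 ≤ K ∧ ∀ t ∈ Icc (0:ℝ) 1, W' t ≤ K * t := by
  obtain ⟨x, _, hx⟩ := IsCompact.exists_isMaxOn isCompact_Icc (⟨0, by norm_num⟩ : (Icc (0:ℝ) 1).Nonempty)
    (hW2c.mono (fun y hy => hy.2))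
  refine ⟨max (W'' x) 0, le_max_right _ _, ?_⟩
  rintro t ⟨h0, h1⟩
  rcases eq_or_lt_of_le h0 with rfl | h0
  · rw [Wp_zero hW1 hW0 hWnn]; simp
  · obtain ⟨ξ, hξ, h⟩ := Wp_mvt hW2 h0 h1
    rw [Wp_zero hW1 hW0 hWnn] at h
    have h2 : W'' ξ ≤ max (W'' x) 0 :=
      le_trans (hx ⟨le_of_lt hξ.1, le_trans (le_of_lt hξ.2) h1⟩) (le_max_left _ _)
    nlinarith
end Pot

section Pot2
variable {Wt Wt' Wt'' : ℝ → ℝ}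
  (hV1 : ∀ t ∈ Ici (0:ℝ), HasDerivWithinAt Wt (Wt' t) (Ici 0) t)
  (hV2 : ∀ t ∈ Ici (0:ℝ), HasDerivWithinAt Wt' (Wt'' t) (Ici 0) t)
  (hV0 : Wt 0 = 0)
  (hVnn : ∀ t ∈ Ici (0:ℝ), 0 ≤ Wt t)
  (hVcv : ∀ t ∈ Ioi (0:ℝ), 0 ≤ Wt'' t)

include hV1 hV0 hVnn in
lemma Vp_zero_nonneg : 0 ≤ Wt' 0 := by
  have hd := hV1 0 (mem_Ici.mpr le_rfl)
  rw [hasDerivWithinAt_iff_tendsto_slope] at hd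
  rw [Set.Ici_sdiff_left] at hd
  refine ge_of_tendsto hd ?_
  filter_upwards [self_mem_nhdsWithin] with x hx
  have hx0 : 0 < x := hx
  have : slope Wt 0 x = Wt x / x := by
    simp [slope, hV0, div_eq_inv_mul]
  rw [this]
  exact div_nonneg (hVnn x (le_of_lt hx0)) (le_of_lt hx0)

include hV2 in
lemma Vp_mvt {s t : ℝ} (h0 : 0 ≤ s) (hst : s < t) :
    ∃ ξ ∈ Ioo s t, Wt' t - Wt' s = Wt'' ξ * (t - s) := by
  have hcont : ContinuousOn Wt' (Icc s t) := fun x hx =>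
    ((hV2 x (le_trans h0 hx.1)).continuousWithinAt).mono (fun y hy => le_trans h0 hy.1)
  have hder : ∀ x ∈ Ioo s t, HasDerivAt Wt' (Wt'' x) x := fun x hx =>
    (hV2 x (le_of_lt (lt_of_le_of_lt h0 hx.1))).hasDerivAt
      (Ici_mem_nhds (lt_of_le_of_lt h0 hx.1))
  obtain ⟨ξ, hξ, h⟩ := exists_hasDerivAt_eq_slope Wt' Wt'' hst hcont hder
  refine ⟨ξ, hξ, ?_⟩
  rw [eq_div_iff (by linarith : t - s ≠ 0)] at h
  linarith [h]

include hV1 hV2 hV0 hVnn hVcv in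
lemma Vp_nonneg : ∀ t, 0 ≤ t → 0 ≤ Wt' t := by
  intro t h0
  rcases eq_or_lt_of_le h0 with rfl | h0
  · exact Vp_zero_nonneg hV1 hV0 hVnn
  · obtain ⟨ξ, hξ, h⟩ := Vp_mvt hV2 le_rfl h0
    have := hVcv ξ hξ.1
    have := Vp_zero_nonneg hV1 hV0 hVnn
    nlinarith

include hV2 in
lemma Vp_bdd : ∃ K : ℝ, ∀ t ∈ Icc (0:ℝ) 1, |Wt' t| ≤ K := by
  obtain ⟨K, hK⟩ := isCompact_Icc.exists_bound_of_continuousOn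
    (fun x hx => ((hV2 x hx.1).continuousWithinAt).mono (fun y (hy : y ∈ Icc (0:ℝ) 1) => hy.1))
  exact ⟨K, fun t ht => hK t ht⟩
end Pot2


/-- squared modulus -/
def hh (f g : ℝ → ℝ) : ℝ → ℝ := fun r => f r ^ 2 + g r ^ 2
/-- its derivative -/
def hh1 (f f' g g' : ℝ → ℝ) : ℝ → ℝ := fun r => 2 * f r * f' r + 2 * g r * g' r
/-- its second derivative -/
def hh2 (f f' f'' g g' g'' : ℝ → ℝ) : ℝ → ℝ :=
  fun r => 2 * f' r ^ 2 + 2 * f r * f'' r + 2 * g' r ^ 2 + 2 * g r * g'' r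

section Sol
variable {N : ℕ} {ε η : ℝ} {W' Wt' f f' f'' g g' g'' : ℝ → ℝ}
  (hs : ExtSol N ε η W' Wt' f f' f'' g g' g'')

lemma mem_nhds_of_Ioo {r : ℝ} (hr : r ∈ Ioo (0:ℝ) 1) : Ioc (0:ℝ) 1 ∈ nhds r :=
  mem_of_superset (Ioo_mem_nhds hr.1 hr.2) Ioo_subset_Ioc_self

include hs

lemma fda : ∀ r ∈ Ioo (0:ℝ) 1, HasDerivAt f (f' r) r := fun r hr =>
  (hs.hf1 r (Ioo_subset_Ioc_self hr)).hasDerivAt (mem_nhds_of_Ioo hr)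
lemma fda' : ∀ r ∈ Ioo (0:ℝ) 1, HasDerivAt f' (f'' r) r := fun r hr =>
  (hs.hf2 r (Ioo_subset_Ioc_self hr)).hasDerivAt (mem_nhds_of_Ioo hr)
lemma gda : ∀ r ∈ Ioo (0:ℝ) 1, HasDerivAt g (g' r) r := fun r hr =>
  (hs.hg1 r (Ioo_subset_Ioc_self hr)).hasDerivAt (mem_nhds_of_Ioo hr)
lemma gda' : ∀ r ∈ Ioo (0:ℝ) 1, HasDerivAt g' (g'' r) r := fun r hr =>
  (hs.hg2 r (Ioo_subset_Ioc_self hr)).hasDerivAt (mem_nhds_of_Ioo hr)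

lemma fc : ContinuousOn f (Ioc 0 1) := fun r hr => (hs.hf1 r hr).continuousWithinAt
lemma fc' : ContinuousOn f' (Ioc 0 1) := fun r hr => (hs.hf2 r hr).continuousWithinAt
lemma gc : ContinuousOn g (Ioc 0 1) := fun r hr => (hs.hg1 r hr).continuousWithinAt
lemma gc' : ContinuousOn g' (Ioc 0 1) := fun r hr => (hs.hg2 r hr).continuousWithinAt

lemma hhc : ContinuousOn (hh f g) (Ioc 0 1) :=
  ((fc hs).pow 2).add ((gc hs).pow 2)
lemma hh1c : ContinuousOn (hh1 f f' g g') (Ioc 0 1) := by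
  unfold hh1
  exact ((continuousOn_const.mul (fc hs)).mul (fc' hs)).add
    ((continuousOn_const.mul (gc hs)).mul (gc' hs))
lemma hh2c : ContinuousOn (hh2 f f' f'' g g' g'') (Ioc 0 1) := by
  unfold hh2
  exact (((continuousOn_const.mul ((fc' hs).pow 2)).add
    ((continuousOn_const.mul (fc hs)).mul hs.hf2c)).add
    (continuousOn_const.mul ((gc' hs).pow 2))).add
    ((continuousOn_const.mul (gc hs)).mul hs.hg2c)

lemma hhda : ∀ r ∈ Ioo (0:ℝ) 1, HasDerivAt (hh f g) (hh1 f f' g g' r) r := by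
  intro r hr
  have h1 := ((fda hs r hr).pow 2).add ((gda hs r hr).pow 2)
  refine h1.congr_deriv ?_
  unfold hh1; ring
lemma hh1da : ∀ r ∈ Ioo (0:ℝ) 1,
    HasDerivAt (hh1 f f' g g') (hh2 f f'  f'' g g' g'' r) r := by
  intro r hr
  have h1 := ((hasDerivAt_const r (2:ℝ)).mul (fda hs r hr)).mul (fda' hs r hr) |>.add
    (((hasDerivAt_const r (2:ℝ)).mul (gda hs r hr)).mul (gda' hs r hr))
  refine h1.congr_deriv ?_
  unfold hh2; simp only [Pi.mul_apply]; ring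

lemma ell_ident : ∀ r ∈ Ioo (0:ℝ) 1,
    hh2 f f' f'' g g' g'' r + ((N:ℝ) - 1) / r * hh1 f f' g g' r
      = 2 * (f' r ^ 2 + g' r ^ 2) + 2 * ((N:ℝ) - 1) / r ^ 2 * f r ^ 2
        - 2 / ε ^ 2 * W' (1 - hh f g r) * hh f g r
        + 2 / η ^ 2 * Wt' (g r ^ 2) * g r ^ 2 := by
  intro r hr
  have h1 := hs.odef r hr
  have h2 := hs.odeg r hr
  unfold hh hh1 hh2
  have : (1 : ℝ) - (f r ^ 2 + g r ^ 2) = 1 - f r ^ 2 - g r ^ 2 := by ring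
  rw [this]
  linear_combination (2 * f r) * h1 + (2 * g r) * h2

end Sol

/-! ### Integral helpers -/

lemma myIntegrable {F : ℝ → ℝ} {a b : ℝ} (hab : a ≤ b)
    (hF : ContinuousOn F (Icc a b)) : IntervalIntegrable F volume a b := by
  apply ContinuousOn.intervalIntegrable
  rwa [uIcc_of_le hab]

lemma myFTC {F F' : ℝ → ℝ} {a b : ℝ} (hab : a ≤ b)
    (hF : ContinuousOn F (Icc a b))
    (hd : ∀ x ∈ Ioo a b, HasDerivAt F (F' x) x)
    (hF' : ContinuousOn F' (Icc a b)) :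
    ∫ y in a..b, F' y = F b - F a :=
  intervalIntegral.integral_eq_sub_of_hasDeriv_right_of_le hab hF
    (fun x hx => (hd x hx).hasDerivWithinAt) (myIntegrable hab hF')

lemma myIntNonneg {F : ℝ → ℝ} {a b : ℝ} (hab : a ≤ b)
    (hnn : ∀ s ∈ Ioo a b, 0 ≤ F s) : 0 ≤ ∫ y in a..b, F y := by
  rw [intervalIntegral.integral_of_le hab, integral_Ioc_eq_integral_Ioo]
  exact setIntegral_nonneg measurableSet_Ioo hnn

lemma myIntMono {F G : ℝ → ℝ} {a b : ℝ} (hab : a ≤ b)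
    (hF : ContinuousOn F (Icc a b)) (hG : ContinuousOn G (Icc a b))
    (hle : ∀ s ∈ Ioo a b, F s ≤ G s) :
    ∫ y in a..b, F y ≤ ∫ y in a..b, G y := by
  have h1 : 0 ≤ ∫ y in a..b, (G y - F y) :=
    myIntNonneg hab (fun s hs => sub_nonneg.2 (hle s hs))
  rw [intervalIntegral.integral_sub (myIntegrable hab hG) (myIntegrable hab hF)] at h1
  linarith

section Sol2
variable {N : ℕ} {ε η : ℝ} {W' Wt' f f' f'' g g' g'' : ℝ → ℝ}
  (hs : ExtSol N ε η W' Wt' f f' f'' g g' g'')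

include hs

lemma mmda (hN : 2 ≤ N) : ∀ r ∈ Ioo (0:ℝ) 1,
    HasDerivAt (fun u => u ^ (N-1) * hh1 f f' g g' u)
      (((N:ℝ)-1) * r ^ (N-2) * hh1 f f' g g' r
        + r ^ (N-1) * hh2 f f' f'' g g' g'' r) r := by
  intro r hr
  have h1 := (hasDerivAt_pow (N-1) r).mul (hh1da hs r hr)
  refine h1.congr_deriv ?_
  have e1 : ((N - 1 : ℕ) : ℝ) = (N:ℝ) - 1 := by
    rw [Nat.cast_sub (by omega : 1 ≤ N), Nat.cast_one]
  have e2 : N - 1 - 1 = N - 2 := by omega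
  rw [e1, e2]

lemma mm_cont (hN : 2 ≤ N) {a b : ℝ} (h0 : 0 < a) (h1 : b ≤ 1) :
    ContinuousOn (fun u => u ^ (N-1) * hh1 f f' g g' u) (Icc a b) :=
  (continuous_pow (N-1)).continuousOn.mul ((hh1c hs).mono
    (fun x hx => ⟨lt_of_lt_of_le h0 hx.1, le_trans hx.2 h1⟩))

lemma mmd_cont (hN : 2 ≤ N) {a b : ℝ} (h0 : 0 < a) (h1 : b ≤ 1) :
    ContinuousOn (fun u => ((N:ℝ)-1) * u ^ (N-2) * hh1 f f' g g' u
      + u ^ (N-1) * hh2 f f' f'' g g' g'' u) (Icc a b) := by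
  have hsub : Icc a b ⊆ Ioc 0 1 := fun x hx => ⟨lt_of_lt_of_le h0 hx.1, le_trans hx.2 h1⟩
  exact ((continuousOn_const.mul (continuous_pow (N-2)).continuousOn).mul
    ((hh1c hs).mono hsub)).add
    ((continuous_pow (N-1)).continuousOn.mul ((hh2c hs).mono hsub))

/-- sign of `m' = r^{N-1} L h` where `h ≥ 1` -/
lemma mmd_nonneg (hN : 2 ≤ N) (hε : 0 < ε) (hη : 0 < η)
    (hWneg : ∀ t ≤ 0, W' t ≤ 0) (hVpos : ∀ t, 0 ≤ t → 0 ≤ Wt' t)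
    {s : ℝ} (hsI : s ∈ Ioo (0:ℝ) 1) (hge : 1 ≤ hh f g s) :
    0 ≤ ((N:ℝ)-1) * s ^ (N-2) * hh1 f f' g g' s
      + s ^ (N-1) * hh2 f f' f'' g g' g'' s := by
  have hs0 : (0:ℝ) < s := hsI.1
  have hpow : s ^ (N-1) = s ^ (N-2) * s := by
    rw [show N - 1 = (N-2) + 1 by omega, pow_succ]
  have e2 : ((N:ℝ)-1) * s ^ (N-2) * hh1 f f' g g' s
      + s ^ (N-1) * hh2 f f' f'' g g' g'' s
      = s ^ (N-1) * (hh2 f f' f'' g g' g'' s + ((N:ℝ)-1)/s * hh1 f f' g g' s) := by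
    rw [hpow]; field_simp; ring
  rw [e2, ell_ident hs s hsI]
  have hW : W' (1 - hh f g s) ≤ 0 := hWneg _ (by linarith)
  have hV : 0 ≤ Wt' (g s ^ 2) := hVpos _ (sq_nonneg _)
  have hh0 : (0:ℝ) ≤ hh f g s := by linarith
  have hN1 : (0:ℝ) ≤ (N:ℝ) - 1 := by
    have : (2:ℝ) ≤ (N:ℝ) := by exact_mod_cast hN
    linarith
  have t1 : (0:ℝ) ≤ 2 * (f' s ^ 2 + g' s ^ 2) := by positivity
  have t2 : (0:ℝ) ≤ 2 * ((N:ℝ)-1) / s ^ 2 * f s ^ 2 := by positivity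
  have t3 : (0:ℝ) ≤ - (2 / ε ^ 2 * W' (1 - hh f g s) * hh f g s) := by
    have h5 : (0:ℝ) ≤ 2 / ε ^ 2 := by positivity
    nlinarith [mul_nonneg (mul_nonneg h5 (neg_nonneg.2 hW)) hh0]
  have t4 : (0:ℝ) ≤ 2 / η ^ 2 * Wt' (g s ^ 2) * g s ^ 2 := by positivity
  have hpos : (0:ℝ) ≤ s ^ (N-1) := by positivity
  nlinarith

/-- monotonicity of `m` on intervals where `h ≥ 1` -/
lemma mmono (hN : 2 ≤ N) (hε : 0 < ε) (hη : 0 < η)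
    (hWneg : ∀ t ≤ 0, W' t ≤ 0) (hVpos : ∀ t, 0 ≤ t → 0 ≤ Wt' t)
    {a b : ℝ} (h0 : 0 < a) (hab : a ≤ b) (h1 : b ≤ 1)
    (hge : ∀ s ∈ Ioo a b, 1 ≤ hh f g s) :
    a ^ (N-1) * hh1 f f' g g' a ≤ b ^ (N-1) * hh1 f f' g g' b := by
  have key := myFTC hab (mm_cont hs hN h0 h1)
    (fun x hx => mmda hs hN x ⟨lt_trans h0 hx.1, lt_of_lt_of_le hx.2 h1⟩)
    (mmd_cont hs hN h0 h1)
  have hnn := myIntNonneg hab (fun s hs' => mmd_nonneg hs hN hε hη hWneg hVpos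
    ⟨lt_trans h0 hs'.1, lt_of_lt_of_le hs'.2 h1⟩ (hge s hs'))
  rw [key] at hnn
  linarith

end Sol2

section A1
variable {N : ℕ} {ε η : ℝ} {W' Wt' f f' f'' g g' g'' : ℝ → ℝ}
  (hs : ExtSol N ε η W' Wt' f f' f'' g g' g'')
  (hN : 2 ≤ N) (hε : 0 < ε) (hη : 0 < η)
  (hWneg : ∀ t ≤ 0, W' t ≤ 0) (hVpos : ∀ t, 0 ≤ t → 0 ≤ Wt' t)

include hs hN hε hη hWneg hVpos

lemma claim1 : ∀ r ∈ Ioo (0:ℝ) 1, 1 < hh f g r → hh1 f f' g g' r < 0 := by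
  intro r hr hgt
  by_contra hcon
  push_neg at hcon
  have hsub : Icc r 1 ⊆ Ioc 0 1 := fun x hx => ⟨lt_of_lt_of_le hr.1 hx.1, hx.2⟩
  have hclosed : IsClosed (Icc r 1 ∩ (hh f g) ⁻¹' (Iic 1)) :=
    ((hhc hs).mono hsub).preimage_isClosed_of_isClosed isClosed_Icc isClosed_Iic
  have hne : (Icc r 1 ∩ (hh f g) ⁻¹' (Iic 1)).Nonempty := by
    refine ⟨1, ⟨le_of_lt hr.2, le_rfl⟩, ?_⟩
    simp only [mem_preimage, mem_Iic, hh, hs.bcf, hs.bcg]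
    norm_num
  have hbdd : BddBelow (Icc r 1 ∩ (hh f g) ⁻¹' (Iic 1)) := ⟨r, fun x hx => hx.1.1⟩
  set b := sInf (Icc r 1 ∩ (hh f g) ⁻¹' (Iic 1)) with hbdef
  have hbS : b ∈ Icc r 1 ∩ (hh f g) ⁻¹' (Iic 1) := hclosed.csInf_mem hne hbdd
  have hb2 : hh f g b ≤ 1 := hbS.2
  have hrb : r < b := by
    rcases lt_or_eq_of_le hbS.1.1 with h | h
    · exact h
    · exfalso; rw [← h] at hb2; linarith
  have hb1 : b ≤ 1 := hbS.1.2
  have hgt' : ∀ s ∈ Ico r b, 1 < hh f g s := by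
    intro s hs'
    by_contra hc; push_neg at hc
    have hmem : s ∈ Icc r 1 ∩ (hh f g) ⁻¹' (Iic 1) :=
      ⟨⟨hs'.1, le_trans (le_of_lt hs'.2) hb1⟩, hc⟩
    have := csInf_le hbdd hmem
    rw [← hbdef] at this
    linarith [hs'.2]
  have hh1nn : ∀ s ∈ Ioo r b, 0 ≤ hh1 f f' g g' s := by
    intro s hs'
    have hm := mmono hs hN hε hη hWneg hVpos hr.1 (le_of_lt hs'.1)
      (le_trans (le_of_lt hs'.2) hb1)
      (fun u hu => le_of_lt (hgt' u ⟨le_of_lt hu.1, lt_trans hu.2 hs'.2⟩))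
    have hmr : 0 ≤ r ^ (N-1) * hh1 f f' g g' r :=
      mul_nonneg (le_of_lt (pow_pos hr.1 (N-1))) hcon
    have hspos : (0:ℝ) < s := lt_trans hr.1 hs'.1
    by_contra hcc; push_neg at hcc
    nlinarith [mul_pos (pow_pos hspos (N-1)) (neg_pos.2 hcc)]
  have hsub2 : Icc r b ⊆ Ioc 0 1 := fun x hx =>
    ⟨lt_of_lt_of_le hr.1 hx.1, le_trans hx.2 hb1⟩
  have hFTC := myFTC (le_of_lt hrb) ((hhc hs).mono hsub2)
    (fun x hx => hhda hs x ⟨lt_trans hr.1 hx.1, lt_of_lt_of_le hx.2 hb1⟩)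
    ((hh1c hs).mono hsub2)
  have hint := myIntNonneg (le_of_lt hrb) hh1nn
  rw [hFTC] at hint
  linarith

lemma claim2 {ρ : ℝ} (hρI : ρ ∈ Ioo (0:ℝ) 1) (hρ : 1 < hh f g ρ) :
    ∀ r ∈ Ioc (0:ℝ) ρ, 1 < hh f g r := by
  intro r₁ hr₁
  by_contra hc; push_neg at hc
  have hr₁ρ : r₁ < ρ := by
    rcases lt_or_eq_of_le hr₁.2 with h | h
    · exact h
    · exfalso; rw [h] at hc; linarith
  have hsub : Icc r₁ ρ ⊆ Ioc 0 1 := fun x hx =>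
    ⟨lt_of_lt_of_le hr₁.1 hx.1, le_trans hx.2 (le_of_lt hρI.2)⟩
  have hclosed : IsClosed (Icc r₁ ρ ∩ (hh f g) ⁻¹' (Iic 1)) :=
    ((hhc hs).mono hsub).preimage_isClosed_of_isClosed isClosed_Icc isClosed_Iic
  have hne : (Icc r₁ ρ ∩ (hh f g) ⁻¹' (Iic 1)).Nonempty :=
    ⟨r₁, ⟨le_rfl, le_of_lt hr₁ρ⟩, hc⟩
  have hbdd : BddAbove (Icc r₁ ρ ∩ (hh f g) ⁻¹' (Iic 1)) := ⟨ρ, fun x hx => hx.1.2⟩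
  set a := sSup (Icc r₁ ρ ∩ (hh f g) ⁻¹' (Iic 1)) with hadef
  have haS : a ∈ Icc r₁ ρ ∩ (hh f g) ⁻¹' (Iic 1) := hclosed.csSup_mem hne hbdd
  have ha2 : hh f g a ≤ 1 := haS.2
  have haρ : a < ρ := by
    rcases lt_or_eq_of_le haS.1.2 with h | h
    · exact h
    · exfalso; rw [h] at ha2; linarith
  have ha0 : 0 < a := lt_of_lt_of_le hr₁.1 haS.1.1
  have hgt' : ∀ s ∈ Ioc a ρ, 1 < hh f g s := by
    intro s hs'
    by_contra hcc; push_neg at hcc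
    have hmem : s ∈ Icc r₁ ρ ∩ (hh f g) ⁻¹' (Iic 1) :=
      ⟨⟨le_trans haS.1.1 (le_of_lt hs'.1), hs'.2⟩, hcc⟩
    have := le_csSup hbdd hmem
    rw [← hadef] at this
    linarith [hs'.1]
  -- h ≥ h ρ on (a, ρ)
  have hge : ∀ s ∈ Ioo a ρ, hh f g ρ ≤ hh f g s := by
    intro s hs'
    have hsI : s ∈ Ioo (0:ℝ) 1 := ⟨lt_trans ha0 hs'.1, lt_trans hs'.2 hρI.2⟩
    have hsub3 : Icc s ρ ⊆ Ioc 0 1 := fun x hx =>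
      ⟨lt_of_lt_of_le hsI.1 hx.1, le_trans hx.2 (le_of_lt hρI.2)⟩
    have hFTC := myFTC (le_of_lt hs'.2) ((hhc hs).mono hsub3)
      (fun x hx => hhda hs x ⟨lt_trans hsI.1 hx.1, lt_trans hx.2 hρI.2⟩)
      ((hh1c hs).mono hsub3)
    have hint : 0 ≤ ∫ y in s..ρ, -(hh1 f f' g g' y) := by
      apply myIntNonneg (le_of_lt hs'.2)
      intro u hu
      have : hh1 f f' g g' u < 0 := claim1 hs hN hε hη hWneg hVpos u
        ⟨lt_trans hsI.1 hu.1, lt_trans hu.2 hρI.2⟩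
        (hgt' u ⟨lt_trans hs'.1 hu.1, le_of_lt hu.2⟩)
      linarith
    rw [intervalIntegral.integral_neg, hFTC] at hint
    linarith
  -- continuity at a gives contradiction
  have hca : ContinuousAt (hh f g) a := by
    have := hhda hs a ⟨ha0, lt_trans haρ hρI.2⟩
    exact this.continuousAt
  have htend : Filter.Tendsto (hh f g) (nhdsWithin a (Ioi a)) (nhds (hh f g a)) :=
    hca.continuousWithinAt.tendsto
  have hev : ∀ᶠ s in nhdsWithin a (Ioi a), hh f g ρ ≤ hh f g s := by
    have hmem : Iio ρ ∈ nhdsWithin a (Ioi a) :=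
      nhdsWithin_le_nhds (Iio_mem_nhds haρ)
    filter_upwards [hmem, self_mem_nhdsWithin] with s h1 h2
    exact hge s ⟨h2, h1⟩
  have := ge_of_tendsto htend hev
  linarith

end A1

lemma key_ineq {c t P X hρv Av hv : ℝ} (hc : 0 < c) (htc : c ≤ t) (hP : 0 < P)
    (hA : 0 ≤ Av) (hhρ : 0 < hρv) (hv1 : 1 ≤ hv)
    (hCS : t ^ 2 ≤ 4 * hv * X * P ^ 2) (hup : hv ≤ hρv + t * Av) :
    c ^ 2 ≤ 4 * P ^ 2 * X * (hρv + c * Av) := by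
  have ht0 : 0 < t := lt_of_lt_of_le hc htc
  have hD : 0 < hρv + c * Av := by nlinarith [mul_nonneg hc.le hA]
  have e2 : c ^ 2 * (hρv + t * Av) ≤ t ^ 2 * (hρv + c * Av) := by
    nlinarith [mul_nonneg (mul_nonneg (mul_nonneg hc.le ht0.le) hA) (sub_nonneg.2 htc),
      mul_nonneg (mul_nonneg (sub_nonneg.2 htc) (by linarith : (0:ℝ) ≤ t + c)) hhρ.le]
  have e3 : c ^ 2 * hv ≤ t ^ 2 * (hρv + c * Av) := by
    have := mul_le_mul_of_nonneg_left hup (sq_nonneg c)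
    linarith
  have e4 : t ^ 2 * (hρv + c * Av) ≤ 4 * hv * X * P ^ 2 * (hρv + c * Av) :=
    mul_le_mul_of_nonneg_right hCS hD.le
  nlinarith [e3, e4, lt_of_lt_of_le one_pos hv1]

section A1b
variable {N : ℕ} {ε η : ℝ} {W' Wt' f f' f'' g g' g'' : ℝ → ℝ}
  (hs : ExtSol N ε η W' Wt' f f' f'' g g' g'')
  (hN : 2 ≤ N) (hε : 0 < ε) (hη : 0 < η)
  (hWneg : ∀ t ≤ 0, W' t ≤ 0) (hVpos : ∀ t, 0 ≤ t → 0 ≤ Wt' t)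

include hs hN hε hη hWneg hVpos

set_option maxHeartbeats 1000000 in
lemma stepA1 : ∀ r ∈ Ioc (0:ℝ) 1, hh f g r ≤ 1 := by
  by_contra hcon
  push_neg at hcon
  obtain ⟨ρ, hρmem, hρ⟩ := hcon
  have hρ1 : ρ ≠ 1 := by
    intro h
    rw [h] at hρ
    simp only [hh, hs.bcf, hs.bcg] at hρ
    norm_num at hρ
  have hρI : ρ ∈ Ioo (0:ℝ) 1 := ⟨hρmem.1, lt_of_le_of_ne hρmem.2 hρ1⟩
  have hc2 := claim2 hs hN hε hη hWneg hVpos hρI hρ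
  have hh1ρ : hh1 f f' g g' ρ < 0 := claim1 hs hN hε hη hWneg hVpos ρ hρI hρ
  set c := -(ρ ^ (N-1) * hh1 f f' g g' ρ) with hcdef
  have hc : 0 < c := by
    have h1 := mul_pos (pow_pos hρI.1 (N-1)) (neg_pos.2 hh1ρ)
    rw [hcdef]; nlinarith
  -- m ≤ -c on (0,ρ]
  have hm : ∀ r ∈ Ioc (0:ℝ) ρ, r ^ (N-1) * hh1 f f' g g' r ≤ -c := by
    intro r hr
    have := mmono hs hN hε hη hWneg hVpos hr.1 hr.2 (le_of_lt hρI.2)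
      (fun u hu => le_of_lt (hc2 u ⟨lt_trans hr.1 hu.1, le_of_lt hu.2⟩))
    rw [hcdef]; linarith
  -- the weight function A
  set A : ℝ → ℝ := fun u => ∫ s in u..ρ, ((s:ℝ) ^ (N-1))⁻¹ with hAdef
  have φc : ∀ a b : ℝ, 0 < a → ContinuousOn (fun s : ℝ => ((s:ℝ) ^ (N-1))⁻¹) (Icc a b) :=
    fun a b ha => ContinuousOn.inv₀ (continuous_pow _).continuousOn
      (fun x hx => pow_ne_zero _ (ne_of_gt (lt_of_lt_of_le ha hx.1)))
  have hAnn : ∀ r ∈ Ioc (0:ℝ) ρ, 0 ≤ A r := by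
    intro r hr
    apply myIntNonneg hr.2
    intro u hu
    have : (0:ℝ) < u := lt_trans hr.1 hu.1
    positivity
  have hAda : ∀ r ∈ Ioo (0:ℝ) 1, HasDerivAt A (-((r:ℝ) ^ (N-1))⁻¹) r := by
    intro r hr
    have hB : HasDerivAt (fun u => ∫ s in ρ..u, ((s:ℝ) ^ (N-1))⁻¹) (((r:ℝ) ^ (N-1))⁻¹) r := by
      apply intervalIntegral.integral_hasDerivAt_right
      · apply ContinuousOn.intervalIntegrable
        apply ContinuousOn.inv₀ (continuous_pow _).continuousOn
        intro x hx
        have : (0:ℝ) < x := by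
          rcases le_total ρ r with h | h
          · rw [uIcc_of_le h] at hx; exact lt_of_lt_of_le hρI.1 hx.1
          · rw [uIcc_of_ge h] at hx; exact lt_of_lt_of_le hr.1 hx.1
        exact pow_ne_zero _ (ne_of_gt this)
      · exact ContinuousOn.stronglyMeasurableAtFilter isOpen_Ioi
          ((continuous_pow (N-1)).continuousOn.inv₀
            (fun x (hx : x ∈ Ioi (0:ℝ)) => pow_ne_zero _ (ne_of_gt hx))) r hr.1
      · exact ContinuousAt.inv₀ ((continuous_pow (N-1)).continuousAt)
          (pow_ne_zero _ (ne_of_gt hr.1))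
    have hAB : A = fun u => -(∫ s in ρ..u, ((s:ℝ) ^ (N-1))⁻¹) := by
      funext u
      rw [hAdef]
      exact intervalIntegral.integral_symm ρ u
    rw [hAB]
    exact hB.neg
  have hAcont : ∀ {a : ℝ}, 0 < a → ContinuousOn A (Icc a ρ) := by
    intro a ha x hx
    exact (hAda x ⟨lt_of_lt_of_le ha hx.1, lt_of_le_of_lt hx.2 hρI.2⟩).continuousAt.continuousWithinAt
  -- upper bound for h
  have hupper : ∀ r ∈ Ioo (0:ℝ) ρ,
      hh f g r ≤ hh f g ρ + (-(r ^ (N-1) * hh1 f f' g g' r)) * A r := by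
    intro r hr
    have hsub2 : Icc r ρ ⊆ Ioc 0 1 := fun x hx =>
      ⟨lt_of_lt_of_le hr.1 hx.1, le_trans hx.2 (le_of_lt hρI.2)⟩
    have hFTC := myFTC (le_of_lt hr.2) ((hhc hs).mono hsub2)
      (fun x hx => hhda hs x ⟨lt_trans hr.1 hx.1, lt_trans hx.2 hρI.2⟩)
      ((hh1c hs).mono hsub2)
    have hlb : ∀ s ∈ Ioo r ρ,
        (r ^ (N-1) * hh1 f f' g g' r) * ((s:ℝ) ^ (N-1))⁻¹ ≤ hh1 f f' g g' s := by
      intro s hw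
      have hmono2 := mmono hs hN hε hη hWneg hVpos hr.1 (le_of_lt hw.1)
        (le_of_lt (lt_trans hw.2 hρI.2))
        (fun u hu => le_of_lt (hc2 u ⟨lt_trans hr.1 hu.1, le_of_lt (lt_trans hu.2 hw.2)⟩))
      have hsp : (0:ℝ) < s ^ (N-1) := pow_pos (lt_trans hr.1 hw.1) _
      have heq : hh1 f f' g g' s = (s ^ (N-1) * hh1 f f' g g' s) * ((s:ℝ) ^ (N-1))⁻¹ := by
        field_simp
      rw [heq]
      exact mul_le_mul_of_nonneg_right hmono2 (le_of_lt (inv_pos.2 hsp))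
    have hIlb := myIntMono (F := fun s => (r ^ (N-1) * hh1 f f' g g' r) * ((s:ℝ) ^ (N-1))⁻¹) (le_of_lt hr.2)
      (continuousOn_const.mul (φc r ρ hr.1))
      ((hh1c hs).mono hsub2) (by intro s hw; exact hlb s hw)
    rw [hFTC] at hIlb
    have : ∫ s in r..ρ, (r ^ (N-1) * hh1 f f' g g' r) * ((s:ℝ) ^ (N-1))⁻¹
        = (r ^ (N-1) * hh1 f f' g g' r) * A r := by
      rw [hAdef]
      exact intervalIntegral.integral_const_mul _ _
    rw [this] at hIlb
    linarith
  -- pointwise gradient bound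
  have hgrad : ∀ r ∈ Ioo (0:ℝ) ρ,
      c ^ 2 / 4 * ((r:ℝ) ^ (N-1))⁻¹ / (hh f g ρ + c * A r)
        ≤ r ^ (N-1) * (f' r ^ 2 + g' r ^ 2) := by
    intro r hr
    have hrI : r ∈ Ioo (0:ℝ) 1 := ⟨hr.1, lt_trans hr.2 hρI.2⟩
    have htc : c ≤ -(r ^ (N-1) * hh1 f f' g g' r) := by
      have := hm r ⟨hr.1, le_of_lt hr.2⟩; linarith
    set t := -(r ^ (N-1) * hh1 f f' g g' r) with htdef
    have ht0 : 0 < t := lt_of_lt_of_le hc htc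
    have hCS : hh1 f f' g g' r ^ 2 ≤ 4 * hh f g r * (f' r ^ 2 + g' r ^ 2) := by
      simp only [hh, hh1]
      nlinarith [sq_nonneg (f r * g' r - g r * f' r)]
    have hA := hAnn r ⟨hr.1, le_of_lt hr.2⟩
    have hhge : 1 < hh f g r := hc2 r ⟨hr.1, le_of_lt hr.2⟩
    have hup := hupper r hr
    have hrp : (0:ℝ) < r ^ (N-1) := pow_pos hr.1 _
    have hhρ0 : (0:ℝ) < hh f g ρ := by linarith
    have hD : 0 < hh f g ρ + c * A r := by nlinarith
    rw [← htdef] at hup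
    have e1 : t ^ 2 ≤ 4 * hh f g r * (f' r ^ 2 + g' r ^ 2) * (r ^ (N-1)) ^ 2 := by
      have heq : t ^ 2 = hh1 f f' g g' r ^ 2 * (r ^ (N-1)) ^ 2 := by rw [htdef]; ring
      rw [heq]
      nlinarith [mul_le_mul_of_nonneg_right hCS (sq_nonneg (r ^ (N-1)))]
    have key : c ^ 2 ≤ 4 * (r ^ (N-1)) ^ 2 * (f' r ^ 2 + g' r ^ 2) * (hh f g ρ + c * A r) :=
      key_ineq hc htc hrp hA hhρ0 hhge.le e1 hup
    have heq2 : c ^ 2 / 4 * ((r:ℝ) ^ (N-1))⁻¹ / (hh f g ρ + c * A r)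
        = c ^ 2 / (4 * r ^ (N-1) * (hh f g ρ + c * A r)) := by
      field_simp
    rw [heq2, div_le_iff₀ (by positivity)]
    nlinarith [key]
  -- finite energy
  set I : ℝ := (∫ u in Ioo (0:ℝ) 1, u ^ (N-1) * f' u ^ 2)
      + ∫ u in Ioo (0:ℝ) 1, u ^ (N-1) * g' u ^ 2 with hIdef
  have hIba : ∀ r ∈ Ioo (0:ℝ) ρ,
      (∫ s in r..ρ, s ^ (N-1) * (f' s ^ 2 + g' s ^ 2)) ≤ I := by
    intro r hr
    have hss : Ioc r ρ ⊆ Ioo (0:ℝ) 1 := fun x hx =>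
      ⟨lt_trans hr.1 hx.1, lt_of_le_of_lt hx.2 hρI.2⟩
    have hint1 : IntegrableOn (fun s => s ^ (N-1) * f' s ^ 2) (Ioc r ρ) :=
      hs.intf1.mono_set hss
    have hint2 : IntegrableOn (fun s => s ^ (N-1) * g' s ^ 2) (Ioc r ρ) :=
      hs.intg1.mono_set hss
    rw [intervalIntegral.integral_of_le (le_of_lt hr.2)]
    have heq : ∫ s in Ioc r ρ, s ^ (N-1) * (f' s ^ 2 + g' s ^ 2)
        = (∫ s in Ioc r ρ, s ^ (N-1) * f' s ^ 2) + ∫ s in Ioc r ρ, s ^ (N-1) * g' s ^ 2 := by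
      rw [← integral_add hint1 hint2]
      apply integral_congr_ae
      exact Filter.Eventually.of_forall (fun s => by ring)
    have hm1 : (∫ s in Ioc r ρ, s ^ (N-1) * f' s ^ 2)
        ≤ ∫ u in Ioo (0:ℝ) 1, u ^ (N-1) * f' u ^ 2 := by
      apply setIntegral_mono_set hs.intf1
      · exact (ae_restrict_iff' measurableSet_Ioo).2 (Filter.Eventually.of_forall
          (fun s hw => mul_nonneg (pow_nonneg hw.1.le _) (sq_nonneg _)))
      · exact HasSubset.Subset.eventuallyLE hss
    have hm2 : (∫ s in Ioc r ρ, s ^ (N-1) * g' s ^ 2)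
        ≤ ∫ u in Ioo (0:ℝ) 1, u ^ (N-1) * g' u ^ 2 := by
      apply setIntegral_mono_set hs.intg1
      · exact (ae_restrict_iff' measurableSet_Ioo).2 (Filter.Eventually.of_forall
          (fun s hw => mul_nonneg (pow_nonneg hw.1.le _) (sq_nonneg _)))
      · exact HasSubset.Subset.eventuallyLE hss
    rw [heq, hIdef]
    linarith
  -- integrate the gradient bound
  have hΨ : ∀ r ∈ Ioo (0:ℝ) ρ,
      c / 4 * (Real.log (hh f g ρ + c * A r) - Real.log (hh f g ρ)) ≤ I := by
    intro r hr
    have hDpos : ∀ x ∈ Icc r ρ, 0 < hh f g ρ + c * A x := by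
      intro x hx
      have := hAnn x ⟨lt_of_lt_of_le hr.1 hx.1, hx.2⟩
      nlinarith
    have hΨda : ∀ x ∈ Ioo r ρ,
        HasDerivAt (fun u => -(c/4) * Real.log (hh f g ρ + c * A u))
          (c ^ 2 / 4 * ((x:ℝ) ^ (N-1))⁻¹ / (hh f g ρ + c * A x)) x := by
      intro x hx
      have hxI : x ∈ Ioo (0:ℝ) 1 := ⟨lt_trans hr.1 hx.1, lt_trans hx.2 hρI.2⟩
      have h1 : HasDerivAt (fun u => hh f g ρ + c * A u) (c * -((x:ℝ) ^ (N-1))⁻¹) x :=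
        ((hAda x hxI).const_mul c).const_add (hh f g ρ)
      have h2 := (h1.log (ne_of_gt (hDpos x ⟨le_of_lt hx.1, le_of_lt hx.2⟩))).const_mul (-(c/4))
      refine h2.congr_deriv ?_
      have hxp : (0:ℝ) < x ^ (N-1) := pow_pos hxI.1 _
      have hDx := hDpos x ⟨le_of_lt hx.1, le_of_lt hx.2⟩
      field_simp
    have hΨcont : ContinuousOn (fun u => -(c/4) * Real.log (hh f g ρ + c * A u)) (Icc r ρ) := by
      apply continuousOn_const.mul
      apply ContinuousOn.log
      · exact continuousOn_const.add (continuousOn_const.mul (hAcont hr.1))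
      · exact fun x hx => ne_of_gt (hDpos x hx)
    have hΨ'cont : ContinuousOn
        (fun x => c ^ 2 / 4 * ((x:ℝ) ^ (N-1))⁻¹ / (hh f g ρ + c * A x)) (Icc r ρ) := by
      apply ContinuousOn.div
      · exact continuousOn_const.mul (φc r ρ hr.1)
      · exact continuousOn_const.add (continuousOn_const.mul (hAcont hr.1))
      · exact fun x hx => ne_of_gt (hDpos x hx)
    have hFTC := myFTC (le_of_lt hr.2) hΨcont hΨda hΨ'cont
    have hsub2 : Icc r ρ ⊆ Ioc 0 1 := fun x hx =>
      ⟨lt_of_lt_of_le hr.1 hx.1, le_trans hx.2 (le_of_lt hρI.2)⟩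
    have hXc : ContinuousOn (fun s => s ^ (N-1) * (f' s ^ 2 + g' s ^ 2)) (Icc r ρ) :=
      (continuous_pow _).continuousOn.mul
        ((((fc' hs).pow 2).add ((gc' hs).pow 2)).mono hsub2)
    have hmono := myIntMono (le_of_lt hr.2) hΨ'cont hXc
      (fun x hx => hgrad x ⟨lt_trans hr.1 hx.1, hx.2⟩)
    rw [hFTC] at hmono
    have hAρ : A ρ = 0 := by rw [hAdef]; exact intervalIntegral.integral_same
    have hI2 := hIba r hr
    simp only [hAρ, mul_zero, add_zero] at hmono
    linarith
  -- choose r small enough to contradict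
  set T := max 1 (Real.exp (Real.log (hh f g ρ) + 4 * I / c) / c) with hTdef
  have hT1 : (1:ℝ) ≤ T := le_max_left _ _
  set r0 := ρ * Real.exp (-T) with hr0def
  have hr0pos : 0 < r0 := mul_pos hρI.1 (Real.exp_pos _)
  have hr0lt : r0 < ρ := by
    have h8 : Real.exp (-T) < 1 := Real.exp_lt_one_iff.2 (by linarith)
    calc r0 = ρ * Real.exp (-T) := hr0def
      _ < ρ * 1 := by apply mul_lt_mul_of_pos_left h8 hρI.1
      _ = ρ := mul_one ρ
  have hr0I : r0 ∈ Ioo (0:ℝ) ρ := ⟨hr0pos, hr0lt⟩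
  have hAr0 : Real.log ρ - Real.log r0 ≤ A r0 := by
    have hIc : ContinuousOn (fun s : ℝ => s⁻¹) (Icc r0 ρ) :=
      continuousOn_id.inv₀ (fun x hx => ne_of_gt (lt_of_lt_of_le hr0pos hx.1))
    have hcmp := myIntMono (le_of_lt hr0lt) hIc (φc r0 ρ hr0pos) ?_
    · rw [integral_inv_of_pos hr0pos hρI.1] at hcmp
      rw [Real.log_div (ne_of_gt hρI.1) (ne_of_gt hr0pos)] at hcmp
      exact hcmp
    · intro x hx
      have hx0 : 0 < x := lt_trans hr0pos hx.1
      have hx1 : x ≤ 1 := le_of_lt (lt_trans hx.2 hρI.2)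
      have hle : x ^ (N-1) ≤ x := by
        calc x ^ (N-1) ≤ x ^ 1 := pow_le_pow_of_le_one hx0.le hx1 (by omega)
          _ = x := pow_one x
      exact inv_anti₀ (pow_pos hx0 _) hle
  have hlogr0 : Real.log r0 = Real.log ρ + -T := by
    rw [hr0def, Real.log_mul (ne_of_gt hρI.1) (ne_of_gt (Real.exp_pos _)), Real.log_exp]
  have hAT : T ≤ A r0 := by rw [hlogr0] at hAr0; linarith
  have hfin := hΨ r0 hr0I
  have hD0 : 0 < hh f g ρ + c * A r0 := by
    nlinarith [hAnn r0 ⟨hr0pos, le_of_lt hr0lt⟩]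
  have hgtlog : Real.log (hh f g ρ) + 4 * I / c < Real.log (hh f g ρ + c * A r0) := by
    rw [Real.lt_log_iff_exp_lt hD0]
    have h5 : Real.exp (Real.log (hh f g ρ) + 4 * I / c) / c ≤ T := le_max_right _ _
    have hcT : Real.exp (Real.log (hh f g ρ) + 4 * I / c) ≤ c * T := by
      calc Real.exp (Real.log (hh f g ρ) + 4 * I / c)
          = c * (Real.exp (Real.log (hh f g ρ) + 4 * I / c) / c) := by field_simp
        _ ≤ c * T := mul_le_mul_of_nonneg_left h5 (le_of_lt hc)
    have h9 : c * T ≤ c * A r0 := mul_le_mul_of_nonneg_left hAT (le_of_lt hc)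
    nlinarith
  have h6 : c * (4 * I / c) = 4 * I := by field_simp
  have h7 : c * (4 * I / c) < c * (Real.log (hh f g ρ + c * A r0) - Real.log (hh f g ρ)) := by
    apply mul_lt_mul_of_pos_left _ hc
    linarith
  linarith

end A1b

section A2
variable {N : ℕ} {ε η K : ℝ} {W' Wt' f f' f'' g g' g'' : ℝ → ℝ}
  (hs : ExtSol N ε η W' Wt' f f' f'' g g' g'')
  (hN : 2 ≤ N) (hε : 0 < ε) (hη : 0 < η)
  (hWneg : ∀ t ≤ 0, W' t ≤ 0) (hVpos : ∀ t, 0 ≤ t → 0 ≤ Wt' t)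
  (hWpos : ∀ t ∈ Icc (0:ℝ) 1, 0 ≤ W' t) (hW'0 : W' 0 = 0)
  (hK0 : 0 ≤ K) (hKlin : ∀ t ∈ Icc (0:ℝ) 1, W' t ≤ K * t)

lemma hhnn : ∀ r : ℝ, 0 ≤ hh f g r := fun r => add_nonneg (sq_nonneg _) (sq_nonneg _)

include hs hN hε hη hVpos hWpos hKlin hK0 in
/-- lower bound for `m'` where `h ≤ 1` -/
lemma mmd_lower {s : ℝ} (hsI : s ∈ Ioo (0:ℝ) 1) (hsle : hh f g s ≤ 1) :
    -((2 * K / ε ^ 2) * s ^ (N-1) * (1 - hh f g s))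
      ≤ ((N:ℝ)-1) * s ^ (N-2) * hh1 f f' g g' s
        + s ^ (N-1) * hh2 f f' f'' g g' g'' s := by
  have hs0 : (0:ℝ) < s := hsI.1
  have hpow : s ^ (N-1) = s ^ (N-2) * s := by
    rw [show N - 1 = (N-2) + 1 by omega, pow_succ]
  have e2 : ((N:ℝ)-1) * s ^ (N-2) * hh1 f f' g g' s
      + s ^ (N-1) * hh2 f f' f'' g g' g'' s
      = s ^ (N-1) * (hh2 f f' f'' g g' g'' s + ((N:ℝ)-1)/s * hh1 f f' g g' s) := by
    rw [hpow]; field_simp; ring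
  rw [e2, ell_ident hs s hsI]
  have hw0 : 0 ≤ 1 - hh f g s := by linarith
  have hw1 : 1 - hh f g s ≤ 1 := by linarith [hhnn (f := f) (g := g) s]
  have hWb : W' (1 - hh f g s) ≤ K * (1 - hh f g s) := hKlin _ ⟨hw0, hw1⟩
  have hWnn : 0 ≤ W' (1 - hh f g s) := hWpos _ ⟨hw0, hw1⟩
  have hV : 0 ≤ Wt' (g s ^ 2) := hVpos _ (sq_nonneg _)
  have hN1 : (0:ℝ) ≤ (N:ℝ) - 1 := by
    have : (2:ℝ) ≤ (N:ℝ) := by exact_mod_cast hN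
    linarith
  have key : -((2 * K / ε ^ 2) * (1 - hh f g s))
      ≤ 2 * (f' s ^ 2 + g' s ^ 2) + 2 * ((N:ℝ)-1) / s ^ 2 * f s ^ 2
        - 2 / ε ^ 2 * W' (1 - hh f g s) * hh f g s
        + 2 / η ^ 2 * Wt' (g s ^ 2) * g s ^ 2 := by
    have t1 : (0:ℝ) ≤ 2 * (f' s ^ 2 + g' s ^ 2) := by positivity
    have t2 : (0:ℝ) ≤ 2 * ((N:ℝ)-1) / s ^ 2 * f s ^ 2 := by positivity
    have t4 : (0:ℝ) ≤ 2 / η ^ 2 * Wt' (g s ^ 2) * g s ^ 2 := by positivity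
    have hprod : W' (1 - hh f g s) * hh f g s ≤ K * (1 - hh f g s) := by
      nlinarith [hhnn (f := f) (g := g) s]
    have hc2 : (0:ℝ) < 2 / ε ^ 2 := by positivity
    have hint := mul_le_mul_of_nonneg_left hprod (le_of_lt hc2)
    have heq3 : 2 / ε ^ 2 * (K * (1 - hh f g s)) = 2 * K / ε ^ 2 * (1 - hh f g s) := by
      ring
    linarith
  calc -((2 * K / ε ^ 2) * s ^ (N-1) * (1 - hh f g s))
      = s ^ (N-1) * (-((2 * K / ε ^ 2) * (1 - hh f g s))) := by ring
    _ ≤ s ^ (N-1) * (2 * (f' s ^ 2 + g' s ^ 2) + 2 * ((N:ℝ)-1) / s ^ 2 * f s ^ 2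
        - 2 / ε ^ 2 * W' (1 - hh f g s) * hh f g s
        + 2 / η ^ 2 * Wt' (g s ^ 2) * g s ^ 2) :=
      mul_le_mul_of_nonneg_left key (le_of_lt (pow_pos hs0 _))

include hs hN hε hη hWneg hVpos hWpos hW'0 hKlin hK0 in
set_option maxHeartbeats 1600000 in
lemma stepA2 : ∀ r ∈ Ioo (0:ℝ) 1, hh f g r < 1 := by
  have hle := stepA1 hs hN hε hη hWneg hVpos
  by_contra hcon
  push_neg at hcon
  obtain ⟨rs, hrsI, hrs⟩ := hcon
  have hrs1 : hh f g rs = 1 := le_antisymm (hle rs (Ioo_subset_Ioc_self hrsI)) hrs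
  -- derivative of h vanishes wherever h = 1 (interior global max)
  have hmax0 : ∀ x ∈ Ioo (0:ℝ) 1, hh f g x = 1 → hh1 f f' g g' x = 0 := by
    intro x hx hx1
    have hmax : IsLocalMax (hh f g) x := by
      filter_upwards [mem_nhds_of_Ioo hx] with u hu
      rw [hx1]; exact hle u hu
    exact hmax.hasDerivAt_eq_zero (hhda hs x hx)
  -- constants
  set lam := 2 * K / ε ^ 2 + 1 with hlamdef
  have hlam : 0 < lam := by positivity
  set κ := ((rs:ℝ) ^ (N-1))⁻¹ with hκdef
  have hκ : 0 < κ := inv_pos.2 (pow_pos hrsI.1 _)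
  set Δ := Real.sqrt (1 / (2 * lam * κ)) with hΔdef
  have hΔ : 0 < Δ := Real.sqrt_pos.2 (by positivity)
  have hΔsq : lam * κ * Δ ^ 2 = 1 / 2 := by
    rw [hΔdef, Real.sq_sqrt (by positivity : (0:ℝ) ≤ 1 / (2 * lam * κ))]
    field_simp
  -- the Grönwall halving step
  have hgron : ∀ x ∈ Ioo (0:ℝ) 1, rs ≤ x → hh f g x = 1 →
      ∀ B : ℝ, 0 ≤ B → (∀ y ∈ Icc x (min (x + Δ) 1), 1 - hh f g y ≤ B) →
        ∀ y ∈ Icc x (min (x + Δ) 1), 1 - hh f g y ≤ B / 2 := by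
    intro x hx hrsx hx1 B hB hIH y hy
    have hxb : x ≤ min (x + Δ) 1 := le_min (by linarith) (le_of_lt hx.2)
    rcases eq_or_lt_of_le hy.1 with h | hxy
    · rw [← h, hx1]; simp; linarith
    have hy1 : y ≤ 1 := le_trans hy.2 (min_le_right _ _)
    have h1x := hmax0 x hx hx1
    -- bound on p s = -(s^{N-1} h1 s) for s ∈ (x, y]
    have pbound : ∀ s ∈ Ioc x y, -(s ^ (N-1) * hh1 f f' g g' s) ≤ lam * B * (s - x) := by
      intro s hsm
      have hsx : x < s := hsm.1
      have hsy : s ≤ y := hsm.2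
      have hs1 : s ≤ 1 := le_trans hsy hy1
      have hsub : Icc x s ⊆ Ioc 0 1 := fun u hu => ⟨lt_of_lt_of_le hx.1 hu.1, le_trans hu.2 hs1⟩
      have hFTC := myFTC (le_of_lt hsx)
        (((mm_cont hs hN hx.1 hs1).mono (fun u hu => hu)).neg)
        (fun u hu => (mmda hs hN u ⟨lt_trans hx.1 hu.1, lt_of_lt_of_le hu.2 hs1⟩).neg)
        ((mmd_cont hs hN hx.1 hs1).neg)
      have hmono := myIntMono (le_of_lt hsx)
        ((mmd_cont hs hN hx.1 hs1).neg)
        (continuousOn_const : ContinuousOn (fun _ : ℝ => lam * B) (Icc x s))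
        ?_
      · simp only [Pi.neg_apply] at hFTC hmono
        rw [hFTC, intervalIntegral.integral_const, smul_eq_mul] at hmono
        have hFx : -(x ^ (N-1) * hh1 f f' g g' x) = 0 := by rw [h1x]; ring
        rw [hFx] at hmono
        calc -(s ^ (N-1) * hh1 f f' g g' s)
            = -(s ^ (N-1) * hh1 f f' g g' s) - 0 := by ring
          _ ≤ (s - x) * (lam * B) := hmono
          _ = lam * B * (s - x) := by ring
      · intro u hu
        have huI : u ∈ Ioo (0:ℝ) 1 := ⟨lt_trans hx.1 hu.1, lt_of_lt_of_le hu.2 hs1⟩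
        have hul : hh f g u ≤ 1 := hle u (Ioo_subset_Ioc_self huI)
        have hlow := mmd_lower hs hN hε hη hVpos hWpos hK0 hKlin huI hul
        have hu1 : u ^ (N-1) ≤ 1 := pow_le_one₀ huI.1.le huI.2.le
        have hwb : 1 - hh f g u ≤ B := hIH u
          ⟨le_of_lt hu.1, le_trans (le_of_lt hu.2) (le_trans hsy hy.2)⟩
        have hwnn : 0 ≤ 1 - hh f g u := by linarith [hul]
        have hKl : 2 * K / ε ^ 2 ≤ lam := by rw [hlamdef]; linarith
        have hKnn : (0:ℝ) ≤ 2 * K / ε ^ 2 := by positivity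
        have hpw : u ^ (N-1) * (1 - hh f g u) ≤ B := by
          nlinarith [pow_nonneg huI.1.le (N-1)]
        have hpw2 : (2 * K / ε ^ 2) * (u ^ (N-1) * (1 - hh f g u)) ≤ lam * B :=
          mul_le_mul hKl hpw (mul_nonneg (pow_nonneg huI.1.le _) hwnn) hlam.le
        have : -(((N:ℝ)-1) * u ^ (N-2) * hh1 f f' g g' u
            + u ^ (N-1) * hh2 f f' f'' g g' g'' u)
            ≤ (2 * K / ε ^ 2) * (u ^ (N-1) * (1 - hh f g u)) := by
          nlinarith [hlow]
        exact le_trans this hpw2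
    -- now integrate w' = -(h1)
    have hsubxy : Icc x y ⊆ Ioc 0 1 := fun u hu =>
      ⟨lt_of_lt_of_le hx.1 hu.1, le_trans hu.2 hy1⟩
    have hwda : ∀ u ∈ Ioo x y,
        HasDerivAt (fun v => 1 - hh f g v) (-(hh1 f f' g g' u)) u := by
      intro u hu
      have h0 := (hhda hs u ⟨lt_trans hx.1 hu.1, lt_of_lt_of_le hu.2 hy1⟩).const_sub 1
      exact h0
    have hFTCw := myFTC (le_of_lt hxy)
      (continuousOn_const.sub ((hhc hs).mono hsubxy)) hwda
      (((hh1c hs).mono hsubxy).neg)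
    have hmono2 := myIntMono (le_of_lt hxy) (((hh1c hs).mono hsubxy).neg)
      (continuousOn_const : ContinuousOn (fun _ : ℝ => lam * B * Δ * κ) (Icc x y)) ?_
    · simp only [Pi.neg_apply, Pi.sub_apply] at hFTCw hmono2
      rw [hFTCw, intervalIntegral.integral_const, smul_eq_mul] at hmono2
      rw [hx1] at hmono2
      have hyx : y - x ≤ Δ := by
        have := le_trans hy.2 (min_le_left (x + Δ) 1); linarith
      have hnn2 : (0:ℝ) ≤ lam * B * Δ * κ := by positivity
      have h7 : (y - x) * (lam * B * Δ * κ) ≤ Δ * (lam * B * Δ * κ) :=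
        mul_le_mul_of_nonneg_right hyx hnn2
      have h8 : Δ * (lam * B * Δ * κ) = B * (lam * κ * Δ ^ 2) := by ring
      rw [hΔsq] at h8
      have h9 : (1:ℝ) - 1 = 0 := by norm_num
      rw [h9, sub_zero] at hmono2
      calc 1 - hh f g y ≤ (y - x) * (lam * B * Δ * κ) := hmono2
        _ ≤ Δ * (lam * B * Δ * κ) := h7
        _ = B * (1/2) := h8
        _ = B / 2 := by ring
    · intro u hu
      have huI : u ∈ Ioo (0:ℝ) 1 := ⟨lt_trans hx.1 hu.1, lt_of_lt_of_le hu.2 hy1⟩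
      have hp := pbound u ⟨hu.1, le_of_lt hu.2⟩
      have hupow : (0:ℝ) < u ^ (N-1) := pow_pos huI.1 _
      have hinv : ((u:ℝ) ^ (N-1))⁻¹ ≤ κ := by
        rw [hκdef]
        exact inv_anti₀ (pow_pos hrsI.1 _)
          (pow_le_pow_left₀ hrsI.1.le (le_trans hrsx (le_of_lt hu.1)) _)
      have hux : u - x ≤ Δ := by
        have h10 : u ≤ min (x + Δ) 1 := le_trans (le_of_lt hu.2) hy.2
        have := le_trans h10 (min_le_left (x + Δ) 1); linarith
      have heqq : -(hh1 f f' g g' u)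
          = (-(u ^ (N-1) * hh1 f f' g g' u)) * ((u:ℝ) ^ (N-1))⁻¹ := by
        field_simp
      show -(hh1 f f' g g' u) ≤ _
      rw [heqq]
      calc (-(u ^ (N-1) * hh1 f f' g g' u)) * ((u:ℝ) ^ (N-1))⁻¹
          ≤ (lam * B * (u - x)) * ((u:ℝ) ^ (N-1))⁻¹ :=
            mul_le_mul_of_nonneg_right hp (le_of_lt (inv_pos.2 hupow))
        _ ≤ (lam * B * Δ) * κ := by
            apply mul_le_mul _ hinv (le_of_lt (inv_pos.2 hupow)) (by positivity)
            exact mul_le_mul_of_nonneg_left hux (by positivity)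
        _ = lam * B * Δ * κ := by ring
  -- iterate : h ≡ 1 on [rs, min (rs + n Δ) 1]
  have hiter : ∀ n : ℕ, ∀ s ∈ Icc rs (min (rs + n * Δ) 1), hh f g s = 1 := by
    intro n
    induction n with
    | zero =>
      intro s hsm
      simp only [Nat.cast_zero, zero_mul, add_zero] at hsm
      have h11 : rs ≤ min rs 1 := le_min le_rfl hrsI.2.le
      have : s = rs := le_antisymm (le_trans hsm.2 (min_le_left _ _)) hsm.1
      rw [this, hrs1]
    | succ n ih =>
      intro s hsm
      rcases le_or_gt (1:ℝ) (rs + n * Δ) with hcase | hcase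
      · -- already covers everything
        apply ih
        refine ⟨hsm.1, ?_⟩
        have h12 : min (rs + (n:ℝ) * Δ) 1 = 1 := min_eq_right hcase
        rw [h12]
        exact le_trans hsm.2 (min_le_right _ _)
      · set x := rs + (n:ℝ) * Δ with hxdef
        have hx0 : 0 < x := by
          have : (0:ℝ) ≤ (n:ℝ) * Δ := by positivity
          have := hrsI.1; rw [hxdef]; linarith
        have hxI : x ∈ Ioo (0:ℝ) 1 := ⟨hx0, hcase⟩
        have hrsx : rs ≤ x := by
          have : (0:ℝ) ≤ (n:ℝ) * Δ := by positivity
          rw [hxdef]; linarith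
        have hx1 : hh f g x = 1 := by
          apply ih
          exact ⟨hrsx, le_min (by rw [hxdef]) hcase.le⟩
        rcases le_or_gt s x with hsx | hsx
        · exact ih s ⟨hsm.1, le_min hsx (le_trans hsx hcase.le)⟩
        · -- use the halving step on [x, min (x+Δ) 1]
          have hmem : s ∈ Icc x (min (x + Δ) 1) := by
            refine ⟨hsx.le, ?_⟩
            have h13 : x + Δ = rs + ((n:ℝ)+1) * Δ := by rw [hxdef]; ring
            have h14 := hsm.2
            rw [h13]
            push_cast at h14 ⊢
            exact h14
          have hwall : ∀ k : ℕ, ∀ y ∈ Icc x (min (x + Δ) 1),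
              1 - hh f g y ≤ (1/2) ^ k := by
            intro k
            induction k with
            | zero =>
              intro y hy
              simp only [pow_zero]
              linarith [hhnn (f := f) (g := g) y]
            | succ k ihk =>
              intro y hy
              have hstep := hgron x hxI hrsx hx1 ((1/2) ^ k) (by positivity) ihk y hy
              have heqp : ((1:ℝ)/2) ^ k / 2 = (1/2) ^ (k+1) := by
                rw [pow_succ]; ring
              rw [heqp] at hstep
              exact hstep
          have hwn : ∀ k : ℕ, 1 - hh f g s ≤ (1/2) ^ k := fun k => hwall k s hmem
          have hw0 : 1 - hh f g s ≤ 0 := by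
            have htend : Filter.Tendsto (fun k : ℕ => ((1:ℝ)/2) ^ k) Filter.atTop (nhds 0) := by
              apply tendsto_pow_atTop_nhds_zero_of_lt_one <;> norm_num
            exact ge_of_tendsto htend (Filter.Eventually.of_forall hwn)
          have hle2 : hh f g s ≤ 1 := by
            apply hle
            refine ⟨lt_trans hx0 hsx, ?_⟩
            exact le_trans hsm.2 (min_le_right _ _)
          linarith
  -- hence h ≡ 1 on [rs, 1)
  have hone : ∀ s ∈ Ico rs (1:ℝ), hh f g s = 1 := by
    intro s hsm
    obtain ⟨n, hn⟩ := exists_nat_ge ((s - rs) / Δ)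
    apply hiter n
    refine ⟨hsm.1, le_min ?_ hsm.2.le⟩
    rw [div_le_iff₀ hΔ] at hn
    linarith
  -- hence f ≡ 0 on (rs, 1)
  have hN1 : (1:ℝ) ≤ (N:ℝ) - 1 := by
    have : (2:ℝ) ≤ (N:ℝ) := by exact_mod_cast hN
    linarith
  have hfzero : ∀ z ∈ Ioo rs (1:ℝ), f z = 0 := by
    intro z hz
    have hzI : z ∈ Ioo (0:ℝ) 1 := ⟨lt_trans hrsI.1 hz.1, hz.2⟩
    have hz1 : hh f g z = 1 := hone z ⟨hz.1.le, hz.2⟩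
    have hh1z : hh1 f f' g g' z = 0 := hmax0 z hzI hz1
    have hh2z : hh2 f f' f'' g g' g'' z = 0 := by
      have hev : (fun _ : ℝ => (0:ℝ)) =ᶠ[nhds z] hh1 f f' g g' := by
        filter_upwards [Ioo_mem_nhds hz.1 hz.2] with u hu
        exact (hmax0 u ⟨lt_trans hrsI.1 hu.1, hu.2⟩ (hone u ⟨hu.1.le, hu.2⟩)).symm
      have hd0 : HasDerivAt (fun _ : ℝ => (0:ℝ)) (hh2 f f' f'' g g' g'' z) z :=
        (hh1da hs z hzI).congr_of_eventuallyEq hev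
      exact (hd0.unique (hasDerivAt_const z 0))
    have hell := ell_ident hs z hzI
    rw [hh1z, hh2z, hz1] at hell
    have h1m1 : (1:ℝ) - 1 = 0 := by norm_num
    rw [h1m1, hW'0] at hell
    have hVz : 0 ≤ Wt' (g z ^ 2) := hVpos _ (sq_nonneg _)
    have t1 : (0:ℝ) ≤ 2 * (f' z ^ 2 + g' z ^ 2) := by positivity
    have t4 : (0:ℝ) ≤ 2 / η ^ 2 * Wt' (g z ^ 2) * g z ^ 2 :=
      mul_nonneg (mul_nonneg (by positivity) hVz) (sq_nonneg _)
    have hcoef : (0:ℝ) < 2 * ((N:ℝ)-1) / z ^ 2 := by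
      have h15 : (0:ℝ) < (N:ℝ) - 1 := by linarith
      have h16 : (0:ℝ) < z ^ 2 := pow_pos hzI.1 2
      positivity
    have hfz : f z ^ 2 = 0 := by
      refine le_antisymm ?_ (sq_nonneg _)
      nlinarith [hell, sq_nonneg (f z)]
    exact pow_eq_zero_iff (two_ne_zero) |>.mp hfz
  -- contradiction with f 1 = 1
  have hnb : (nhdsWithin (1:ℝ) (Ioo rs 1)).NeBot := by
    apply mem_closure_iff_nhdsWithin_neBot.mp
    rw [closure_Ioo (ne_of_lt hrsI.2)]
    exact ⟨hrsI.2.le, le_rfl⟩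
  have htend1 : Filter.Tendsto f (nhdsWithin 1 (Ioo rs 1)) (nhds 1) := by
    have hcw : ContinuousWithinAt f (Ioc 0 1) 1 := fc hs 1 ⟨one_pos, le_rfl⟩
    have h16 := hcw.mono (fun u (hu : u ∈ Ioo rs 1) => ⟨lt_trans hrsI.1 hu.1, hu.2.le⟩)
    have h17 : Filter.Tendsto f (nhdsWithin 1 (Ioo rs 1)) (nhds (f 1)) := h16
    rw [hs.bcf] at h17
    exact h17
  have htend0 : Filter.Tendsto f (nhdsWithin 1 (Ioo rs 1)) (nhds 0) := by
    apply Filter.Tendsto.congr' _ tendsto_const_nhds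
    filter_upwards [self_mem_nhdsWithin] with u hu
    exact (hfzero u hu).symm
  exact absurd (tendsto_nhds_unique htend1 htend0) one_ne_zero

end A2

/-! ### Part B : barrier argument -/

lemma localmax_second_deriv {F F' : ℝ → ℝ} {c p : ℝ}
    (hmax : IsLocalMax F p)
    (hd : ∀ᶠ x in nhds p, HasDerivAt F (F' x) x)
    (hd2 : HasDerivAt F' c p) : c ≤ 0 := by
  by_contra hc
  push_neg at hc
  have hF'p : F' p = 0 := hmax.hasDerivAt_eq_zero hd.self_of_nhds
  have hslope := hasDerivAt_iff_tendsto_slope.mp hd2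
  have hev : ∀ᶠ x in nhdsWithin p {p}ᶜ, 0 < slope F' p x :=
    hslope.eventually (eventually_gt_nhds hc)
  have hev2 : ∀ᶠ x in nhdsWithin p (Ioi p), 0 < F' x := by
    have h1 : nhdsWithin p (Ioi p) ≤ nhdsWithin p {p}ᶜ :=
      nhdsWithin_mono p (fun x hx => ne_of_gt hx)
    filter_upwards [h1 hev, self_mem_nhdsWithin] with x hx hxp
    have hxp' : 0 < x - p := sub_pos.2 hxp
    rw [slope_def_field, hF'p, sub_zero] at hx
    rcases div_pos_iff.mp hx with ⟨h1, _⟩ | ⟨_, h2⟩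
    · exact h1
    · linarith
  rw [eventually_nhdsWithin_iff] at hev2
  obtain ⟨e1, he1, hball1⟩ := Metric.eventually_nhds_iff.mp hd
  obtain ⟨e2, he2, hball2⟩ := Metric.eventually_nhds_iff.mp hev2
  obtain ⟨e3, he3, hball3⟩ := Metric.eventually_nhds_iff.mp hmax
  set x₀ := p + min e1 (min e2 e3) / 2 with hx0def
  have hmin : 0 < min e1 (min e2 e3) := lt_min he1 (lt_min he2 he3)
  have hpx : p < x₀ := by rw [hx0def]; linarith
  have hsub : ∀ x ∈ Icc p x₀, dist x p < min e1 (min e2 e3) := by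
    intro x hx
    rw [Real.dist_eq, abs_of_nonneg (by linarith [hx.1])]
    have := hx.2
    rw [hx0def] at this
    linarith
  have hcont : ContinuousOn F (Icc p x₀) := fun x hx =>
    (hball1 (lt_of_lt_of_le (hsub x hx) (min_le_left _ _))).continuousAt.continuousWithinAt
  have hder : ∀ x ∈ Ioo p x₀, HasDerivAt F (F' x) x := fun x hx =>
    hball1 (lt_of_lt_of_le (hsub x (Ioo_subset_Icc_self hx)) (min_le_left _ _))
  obtain ⟨ξ, hξ, hξeq⟩ := exists_hasDerivAt_eq_slope F F' hpx hcont hder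
  have hξpos : 0 < F' ξ := by
    apply hball2
    · have := hsub ξ (Ioo_subset_Icc_self hξ)
      exact lt_of_lt_of_le this (le_trans (min_le_right _ _) (min_le_left _ _))
    · exact hξ.1
  have hFx0 : F x₀ ≤ F p := by
    apply hball3
    have := hsub x₀ ⟨le_of_lt hpx, le_rfl⟩
    exact lt_of_lt_of_le this (le_trans (min_le_right _ _) (min_le_right _ _))
  rw [hξeq] at hξpos
  have := div_pos_iff.mp hξpos
  rcases this with ⟨h1, _⟩ | ⟨_, h2⟩
  · linarith
  · linarith

section PartB
variable {N : ℕ}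

set_option maxHeartbeats 1000000 in
/-- Core lemma: a bounded solution with nonneg bounded potential cannot stay
frequently above `a > 0` near the origin. -/
lemma stepB_aux (hN : 2 ≤ N) {u u' u'' q : ℝ → ℝ} {Q a r₁ : ℝ}
    (ha : 0 < a) (hr₁ : r₁ ∈ Ioo (0:ℝ) 1)
    (hr₁Q : ∀ s : ℝ, 0 < s → s ≤ r₁ → Q ≤ ((N:ℝ)-1)/(2*s^2))
    (hud : ∀ r ∈ Ioo (0:ℝ) 1, HasDerivAt u (u' r) r)
    (hud2 : ∀ r ∈ Ioo (0:ℝ) 1, HasDerivAt u' (u'' r) r)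
    (huc : ContinuousOn u (Ioc 0 1)) (huc' : ContinuousOn u' (Ioc 0 1))
    (huc'' : ContinuousOn u'' (Ioc 0 1))
    (hq : ∀ r ∈ Ioo (0:ℝ) 1, 0 ≤ q r ∧ q r ≤ Q)
    (hode : ∀ r ∈ Ioo (0:ℝ) 1,
      u'' r + ((N:ℝ)-1)/r * u' r - ((N:ℝ)-1)/r^2 * u r = -(q r) * u r)
    (hub : ∀ r ∈ Ioc (0:ℝ) 1, |u r| ≤ 1)
    (hfreq : ∃ᶠ r in nhdsWithin (0:ℝ) (Ioi 0), a ≤ u r) : False := by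
  have hN1 : (1:ℝ) ≤ (N:ℝ) - 1 := by
    have : (2:ℝ) ≤ (N:ℝ) := by exact_mod_cast hN
    linarith
  -- derivative of P = r^{N-1} u'
  have hPda : ∀ r ∈ Ioo (0:ℝ) 1, HasDerivAt (fun s => s ^ (N-1) * u' s)
      (((N:ℝ)-1) * r ^ (N-2) * u' r + r ^ (N-1) * u'' r) r := by
    intro r hr
    have h1 := (hasDerivAt_pow (N-1) r).mul (hud2 r hr)
    refine h1.congr_deriv ?_
    have e1 : ((N - 1 : ℕ) : ℝ) = (N:ℝ) - 1 := by
      rw [Nat.cast_sub (by omega : 1 ≤ N), Nat.cast_one]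
    have e2 : N - 1 - 1 = N - 2 := by omega
    rw [e1, e2]
  have hP'eq : ∀ r ∈ Ioo (0:ℝ) 1,
      ((N:ℝ)-1) * r ^ (N-2) * u' r + r ^ (N-1) * u'' r
        = r ^ (N-1) * ((((N:ℝ)-1)/r^2 - q r) * u r) := by
    intro r hr
    have hr0 : (0:ℝ) < r := hr.1
    have hpow : r ^ (N-1) = r ^ (N-2) * r := by
      rw [show N - 1 = (N-2) + 1 by omega, pow_succ]
    have e2 : ((N:ℝ)-1) * r ^ (N-2) * u' r + r ^ (N-1) * u'' r
        = r ^ (N-1) * (u'' r + ((N:ℝ)-1)/r * u' r) := by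
      rw [hpow]; field_simp; ring
    rw [e2]
    have e3 : u'' r + ((N:ℝ)-1)/r * u' r = (((N:ℝ)-1)/r^2 - q r) * u r := by
      linear_combination hode r hr
    rw [e3]
  have hPc : ∀ {x y : ℝ}, 0 < x → y ≤ 1 →
      ContinuousOn (fun s => s ^ (N-1) * u' s) (Icc x y) := by
    intro x y hx hy
    exact (continuous_pow _).continuousOn.mul
      (huc'.mono (fun z hz => ⟨lt_of_lt_of_le hx hz.1, le_trans hz.2 hy⟩))
  have hP'c : ∀ {x y : ℝ}, 0 < x → y ≤ 1 →
      ContinuousOn (fun s => ((N:ℝ)-1) * s ^ (N-2) * u' s + s ^ (N-1) * u'' s)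
        (Icc x y) := by
    intro x y hx hy
    have hsub : Icc x y ⊆ Ioc 0 1 := fun z hz => ⟨lt_of_lt_of_le hx hz.1, le_trans hz.2 hy⟩
    exact ((continuousOn_const.mul (continuous_pow _).continuousOn).mul
      (huc'.mono hsub)).add ((continuous_pow _).continuousOn.mul (huc''.mono hsub))
  -- monotonicity of P where u ≥ 0
  have hPmono : ∀ x y : ℝ, 0 < x → x ≤ y → y ≤ r₁ → (∀ s ∈ Ioo x y, 0 ≤ u s) →
      x ^ (N-1) * u' x ≤ y ^ (N-1) * u' y := by
    intro x y hx hxy hy hpos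
    have hy1 : y ≤ 1 := le_trans hy hr₁.2.le
    have hFTC := myFTC hxy (hPc hx hy1)
      (fun z hz => hPda z ⟨lt_trans hx hz.1, lt_of_lt_of_le hz.2 hy1⟩)
      (hP'c hx hy1)
    have hnn := myIntNonneg hxy (F := fun s =>
        ((N:ℝ)-1) * s ^ (N-2) * u' s + s ^ (N-1) * u'' s) ?_
    · rw [hFTC] at hnn; linarith
    · intro s hsm
      have hsI : s ∈ Ioo (0:ℝ) 1 := ⟨lt_trans hx hsm.1, lt_of_lt_of_le hsm.2 hy1⟩
      show (0:ℝ) ≤ ((N:ℝ)-1) * s ^ (N-2) * u' s + s ^ (N-1) * u'' s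
      rw [hP'eq s hsI]
      have hq1 := (hq s hsI).2
      have hcoef : 0 ≤ ((N:ℝ)-1)/s^2 - q s := by
        have h5 := hr₁Q s hsI.1 (le_trans hsm.2.le hy)
        have h6 : ((N:ℝ)-1)/(2*s^2) ≤ ((N:ℝ)-1)/s^2 := by
          apply div_le_div_of_nonneg_left (by linarith) (pow_pos hsI.1 2)
          nlinarith [pow_pos hsI.1 2]
        linarith
      exact mul_nonneg (pow_nonneg hsI.1.le _)
        (mul_nonneg hcoef (hpos s hsm))
  -- FTC for u itself
  have huFTC : ∀ x y : ℝ, 0 < x → x ≤ y → y ≤ 1 →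
      ∫ s in x..y, u' s = u y - u x := by
    intro x y hx hxy hy
    have hsub : Icc x y ⊆ Ioc 0 1 := fun z hz => ⟨lt_of_lt_of_le hx hz.1, le_trans hz.2 hy⟩
    exact myFTC hxy (huc.mono hsub)
      (fun z hz => hud z ⟨lt_trans hx hz.1, lt_of_lt_of_le hz.2 hy⟩)
      (huc'.mono hsub)
  by_cases hii : ∃ᶠ r in nhdsWithin (0:ℝ) (Ioi 0), u r ≤ 0
  · -- case (ii) : u gets nonpositive arbitrarily close to 0
    obtain ⟨s₃, hs₃u, hs₃m⟩ := (hii.and_eventually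
      (Ioo_mem_nhdsGT_of_mem (⟨le_rfl, hr₁.1⟩ : (0:ℝ) ∈ Ico 0 r₁))).exists
    obtain ⟨s₂, hs₂u, hs₂m⟩ := (hfreq.and_eventually
      (Ioo_mem_nhdsGT_of_mem (⟨le_rfl, hs₃m.1⟩ : (0:ℝ) ∈ Ico 0 s₃))).exists
    obtain ⟨s₁, hs₁u, hs₁m⟩ := (hii.and_eventually
      (Ioo_mem_nhdsGT_of_mem (⟨le_rfl, hs₂m.1⟩ : (0:ℝ) ∈ Ico 0 s₂))).exists
    have hs₁0 : 0 < s₁ := hs₁m.1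
    have h12 : s₁ < s₂ := hs₁m.2
    have h23 : s₂ < s₃ := hs₂m.2
    have hs₃r : s₃ < r₁ := hs₃m.2
    have hs₃1 : s₃ < 1 := lt_trans hs₃r hr₁.2
    have hsub13 : Icc s₁ s₃ ⊆ Ioc 0 1 := fun z hz =>
      ⟨lt_of_lt_of_le hs₁0 hz.1, le_trans hz.2 hs₃1.le⟩
    obtain ⟨p, hpmem, hpmax⟩ := IsCompact.exists_isMaxOn isCompact_Icc
      ⟨s₂, ⟨h12.le, h23.le⟩⟩ (huc.mono hsub13)
    have hpa : a ≤ u p := le_trans hs₂u (hpmax ⟨h12.le, h23.le⟩)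
    have hps₁ : s₁ < p := by
      rcases eq_or_lt_of_le hpmem.1 with h | h
      · exfalso; rw [← h] at hpa; linarith
      · exact h
    have hps₃ : p < s₃ := by
      rcases eq_or_lt_of_le hpmem.2 with h | h
      · exfalso; rw [h] at hpa; linarith
      · exact h
    have hpI : p ∈ Ioo (0:ℝ) 1 := ⟨lt_trans hs₁0 hps₁, lt_trans hps₃ hs₃1⟩
    have hlm : IsLocalMax u p := by
      apply hpmax.isLocalMax
      exact Icc_mem_nhds hps₁ hps₃
    have hu'p : u' p = 0 := hlm.hasDerivAt_eq_zero (hud p hpI)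
    -- the last zero of u before p
    have hclosed : IsClosed (Icc s₁ p ∩ u ⁻¹' (Iic 0)) :=
      ((huc.mono (fun z hz => hsub13 ⟨hz.1, le_trans hz.2 hps₃.le⟩))).preimage_isClosed_of_isClosed
        isClosed_Icc isClosed_Iic
    have hSne : (Icc s₁ p ∩ u ⁻¹' (Iic 0)).Nonempty := ⟨s₁, ⟨le_rfl, hps₁.le⟩, hs₁u⟩
    have hSbdd : BddAbove (Icc s₁ p ∩ u ⁻¹' (Iic 0)) := ⟨p, fun z hz => hz.1.2⟩
    set b := sSup (Icc s₁ p ∩ u ⁻¹' (Iic 0)) with hbdef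
    have hbS : b ∈ Icc s₁ p ∩ u ⁻¹' (Iic 0) := hclosed.csSup_mem hSne hSbdd
    have hb0 : u b ≤ 0 := hbS.2
    have hbp : b < p := by
      rcases eq_or_lt_of_le hbS.1.2 with h | h
      · exfalso; rw [h] at hb0; linarith
      · exact h
    have hb00 : 0 < b := lt_of_lt_of_le hs₁0 hbS.1.1
    have hgt : ∀ s ∈ Ioc b p, 0 < u s := by
      intro s hsm
      by_contra hc; push_neg at hc
      have hmem : s ∈ Icc s₁ p ∩ u ⁻¹' (Iic 0) :=
        ⟨⟨le_trans hbS.1.1 hsm.1.le, hsm.2⟩, hc⟩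
      have := le_csSup hSbdd hmem
      rw [← hbdef] at this
      linarith [hsm.1]
    -- P ≤ 0 hence u' ≤ 0 on (b,p]
    have hPneg : ∀ x ∈ Ioc b p, u' x ≤ 0 := by
      intro x hxm
      have hx0 : 0 < x := lt_trans hb00 hxm.1
      have hmono := hPmono x p hx0 hxm.2 (le_trans hps₃.le hs₃r.le)
        (fun s hsm => (hgt s ⟨lt_trans hxm.1 hsm.1, hsm.2.le⟩).le)
      rw [hu'p, mul_zero] at hmono
      by_contra hc; push_neg at hc
      nlinarith [mul_pos (pow_pos hx0 (N-1)) hc]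
    -- integrate : u ≥ u p ≥ a on (b,p]
    have hge : ∀ x ∈ Ioo b p, a ≤ u x := by
      intro x hxm
      have hx0 : 0 < x := lt_trans hb00 hxm.1
      have hFTC := huFTC x p hx0 hxm.2.le hpI.2.le
      have hint : 0 ≤ ∫ s in x..p, -(u' s) := by
        apply myIntNonneg hxm.2.le
        intro z hz
        have := hPneg z ⟨lt_trans hxm.1 hz.1, hz.2.le⟩
        linarith
      rw [intervalIntegral.integral_neg, hFTC] at hint
      linarith
    -- continuity at b gives a ≤ u b, contradiction
    have hca : ContinuousAt u b := by
      have := hud b ⟨hb00, lt_trans (lt_trans hbp hps₃) hs₃1⟩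
      exact this.continuousAt
    have htend : Filter.Tendsto u (nhdsWithin b (Ioi b)) (nhds (u b)) :=
      hca.continuousWithinAt.tendsto
    have hev : ∀ᶠ s in nhdsWithin b (Ioi b), a ≤ u s := by
      filter_upwards [nhdsWithin_le_nhds (Iio_mem_nhds hbp), self_mem_nhdsWithin]
        with s h1 h2
      exact hge s ⟨h2, h1⟩
    have := ge_of_tendsto htend hev
    linarith
  · -- case (i) : u > 0 on a punctured neighbourhood of 0
    rw [Filter.not_frequently] at hii
    have hii' : ∀ᶠ r in nhdsWithin (0:ℝ) (Ioi 0), 0 < u r := by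
      filter_upwards [hii] with r hr
      push_neg at hr; exact hr
    rw [eventually_nhdsWithin_iff] at hii'
    obtain ⟨δ₀, hδ₀, hball⟩ := Metric.eventually_nhds_iff.mp hii'
    set ρ := min (δ₀/2) (r₁/2) with hρdef
    have hρ0 : 0 < ρ := lt_min (by linarith) (by linarith [hr₁.1])
    have hρr₁ : ρ ≤ r₁ := le_trans (min_le_right _ _) (by linarith [hr₁.1])
    have hρ1 : ρ < 1 := lt_of_le_of_lt hρr₁ hr₁.2
    have hupos : ∀ r ∈ Ioc (0:ℝ) ρ, 0 < u r := by
      intro r hrm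
      apply hball _ hrm.1
      rw [Real.dist_eq, sub_zero, abs_of_pos hrm.1]
      calc r ≤ ρ := hrm.2
        _ ≤ δ₀/2 := min_le_left _ _
        _ < δ₀ := by linarith
    by_cases hia : ∃ r₂ ∈ Ioc (0:ℝ) ρ, r₂ ^ (N-1) * u' r₂ < 0
    · -- P negative somewhere : u blows up near 0
      obtain ⟨r₂, hr₂m, hr₂P⟩ := hia
      set c := -(r₂ ^ (N-1) * u' r₂) with hcdef
      have hc : 0 < c := by rw [hcdef]; linarith
      have hPle : ∀ r ∈ Ioo (0:ℝ) r₂, u' r ≤ -c * r⁻¹ := by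
        intro r hrm
        have hmono := hPmono r r₂ hrm.1 hrm.2.le (le_trans hr₂m.2 hρr₁)
          (fun s hsm => (hupos s ⟨lt_trans hrm.1 hsm.1, le_trans hsm.2.le hr₂m.2⟩).le)
        have hrp : 0 < r ^ (N-1) := pow_pos hrm.1 _
        have h7 : u' r ≤ -c / r ^ (N-1) := by
          rw [le_div_iff₀ hrp]
          have : r₂ ^ (N-1) * u' r₂ = -c := by rw [hcdef]; ring
          nlinarith [hmono]
        have hr1' : r ≤ 1 := le_trans hrm.2.le (le_trans hr₂m.2 hρ1.le)
        have hrpow : r ^ (N-1) ≤ r := by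
          calc r ^ (N-1) ≤ r ^ 1 := pow_le_pow_of_le_one hrm.1.le hr1' (by omega)
            _ = r := pow_one r
        have h8' : r⁻¹ ≤ (r ^ (N-1))⁻¹ := inv_anti₀ (pow_pos hrm.1 _) hrpow
        have h8 : -c / r ^ (N-1) ≤ -c * r⁻¹ := by
          rw [div_eq_mul_inv]
          nlinarith [mul_le_mul_of_nonneg_left h8' hc.le]
        linarith
      -- integrate on [r0, r₂]
      set r0 := r₂ * Real.exp (-(2/c)) with hr0def
      have hr0pos : 0 < r0 := mul_pos hr₂m.1 (Real.exp_pos _)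
      have hr0lt : r0 < r₂ := by
        have h8 : Real.exp (-(2/c)) < 1 := by
          rw [Real.exp_lt_one_iff]
          have : 0 < 2/c := by positivity
          linarith
        calc r0 = r₂ * Real.exp (-(2/c)) := hr0def
          _ < r₂ * 1 := by exact mul_lt_mul_of_pos_left h8 hr₂m.1
          _ = r₂ := mul_one _
      have hr₂1 : r₂ ≤ 1 := le_trans hr₂m.2 hρ1.le
      have hFTC := huFTC r0 r₂ hr0pos hr0lt.le hr₂1
      have hsub2 : Icc r0 r₂ ⊆ Ioc 0 1 := fun z hz =>
        ⟨lt_of_lt_of_le hr0pos hz.1, le_trans hz.2 hr₂1⟩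
      have hGc : ContinuousOn (fun s : ℝ => -c * s⁻¹) (Icc r0 r₂) :=
        continuousOn_const.mul (ContinuousOn.inv₀
          (continuous_id.continuousOn)
          (fun x hx => ne_of_gt (lt_of_lt_of_le hr0pos hx.1)))
      have hmono2 := myIntMono hr0lt.le (huc'.mono hsub2) hGc
        (fun s hsm => hPle s ⟨lt_trans hr0pos hsm.1, hsm.2⟩)
      rw [hFTC, intervalIntegral.integral_const_mul,
        integral_inv_of_pos hr0pos hr₂m.1] at hmono2
      have hlogr0 : Real.log r0 = Real.log r₂ + -(2/c) := by
        rw [hr0def, Real.log_mul (ne_of_gt hr₂m.1) (ne_of_gt (Real.exp_pos _)),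
          Real.log_exp]
      have hlog : Real.log (r₂ / r0) = 2/c := by
        rw [Real.log_div (ne_of_gt hr₂m.1) (ne_of_gt hr0pos), hlogr0]; ring
      rw [hlog] at hmono2
      have hcne : c ≠ 0 := ne_of_gt hc
      have h9 : -c * (2/c) = -2 := by rw [neg_mul, mul_comm, div_mul_cancel₀ 2 hcne]
      rw [h9] at hmono2
      have hub0 := hub r0 ⟨hr0pos, le_trans hr0lt.le hr₂1⟩
      have hupos2 := hupos r₂ hr₂m
      rw [abs_le] at hub0
      linarith [hub0.2]
    · -- P ≥ 0 everywhere on (0,ρ] : u ≥ a, then u' ≥ C/r, log blow-up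
      push_neg at hia
      have hu'nn : ∀ r ∈ Ioc (0:ℝ) ρ, 0 ≤ u' r := by
        intro r hrm
        have h10 := hia r hrm
        by_contra hcx; push_neg at hcx
        nlinarith [mul_pos (pow_pos hrm.1 (N-1)) (neg_pos.2 hcx)]
      have hua : ∀ r ∈ Ioc (0:ℝ) ρ, a ≤ u r := by
        intro r hrm
        obtain ⟨ρ'', hρ''a, hρ''m⟩ := (hfreq.and_eventually
          (Ioo_mem_nhdsGT_of_mem (⟨le_rfl, hrm.1⟩ : (0:ℝ) ∈ Ico 0 r))).exists
        have hFTC := huFTC ρ'' r hρ''m.1 hρ''m.2.le (le_trans hrm.2 hρ1.le)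
        have hint := myIntNonneg hρ''m.2.le
          (fun s hsm => hu'nn s ⟨lt_trans hρ''m.1 hsm.1, le_trans hsm.2.le hrm.2⟩)
        rw [hFTC] at hint
        linarith
      set C := a * ((N:ℝ)-1) / 2 ^ (N+1) with hCdef
      have hC : 0 < C := by
        rw [hCdef]
        apply div_pos (mul_pos ha (by linarith)) (by positivity)
      have hu'lb : ∀ r ∈ Ioc (0:ℝ) ρ, C * r⁻¹ ≤ u' r := by
        intro r hrm
        have hr0' : 0 < r := hrm.1
        have hhalf : (0:ℝ) < r/2 := by linarith
        have hr1'' : r ≤ 1 := le_trans hrm.2 hρ1.le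
        have hFTC := myFTC (by linarith : r/2 ≤ r) (hPc hhalf hr1'')
          (fun z hz => hPda z ⟨lt_trans hhalf hz.1, lt_of_lt_of_le hz.2 hr1''⟩)
          (hP'c hhalf hr1'')
        have hmono3 := myIntMono (by linarith : r/2 ≤ r)
          (continuousOn_const : ContinuousOn
            (fun _ : ℝ => a*((N:ℝ)-1)/2 * ((r/2)^(N-1) / r^2)) (Icc (r/2) r))
          (hP'c hhalf hr1'') ?_
        · rw [hFTC, intervalIntegral.integral_const, smul_eq_mul] at hmono3
          have hPhalf := hia (r/2) ⟨hhalf, by linarith [hrm.2]⟩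
          have hPr : a*((N:ℝ)-1)/2 * ((r/2)^(N-1) / r^2) * (r - r/2)
              ≤ r ^ (N-1) * u' r := by nlinarith [hmono3]
          have h2p : (2:ℝ)^(N+1) = 2^(N-1) * 4 := by
            rw [show N+1 = (N-1)+2 by omega, pow_add]; norm_num
          have hkey : C * r⁻¹ * r ^ (N-1) ≤ r ^ (N-1) * u' r := by
            refine le_trans (le_of_eq ?_) hPr
            rw [hCdef, div_pow, h2p]
            have h2ne : ((2:ℝ))^(N-1) ≠ 0 := by positivity
            field_simp
            ring
          rw [mul_comm (r ^ (N-1)) (u' r)] at hkey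
          exact le_of_mul_le_mul_right hkey (pow_pos hr0' _)
        · intro s hsm
          have hsI : s ∈ Ioo (0:ℝ) 1 := ⟨lt_trans hhalf hsm.1, lt_of_lt_of_le hsm.2 hr1''⟩
          show a*((N:ℝ)-1)/2 * ((r/2)^(N-1) / r^2)
            ≤ ((N:ℝ)-1) * s ^ (N-2) * u' s + s ^ (N-1) * u'' s
          rw [hP'eq s hsI]
          have f1 : (r/2)^(N-1) ≤ s^(N-1) := pow_le_pow_left₀ hhalf.le hsm.1.le _
          have hq2 := (hq s hsI).2
          have hQs := hr₁Q s hsI.1 (le_trans hsm.2.le (le_trans hrm.2 hρr₁))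
          have f2 : ((N:ℝ)-1)/(2*r^2) ≤ ((N:ℝ)-1)/s^2 - q s := by
            have f2a : ((N:ℝ)-1)/(2*r^2) ≤ ((N:ℝ)-1)/(2*s^2) := by
              rw [div_le_div_iff₀ (mul_pos two_pos (pow_pos hr0' 2))
                (mul_pos two_pos (pow_pos hsI.1 2))]
              have hs2r2 : s^2 ≤ r^2 := by nlinarith [hsm.2, hsI.1]
              nlinarith [hs2r2]
            have f2b : ((N:ℝ)-1)/(2*s^2) ≤ ((N:ℝ)-1)/s^2 - q s := by
              have h6 : ((N:ℝ)-1)/(2*s^2) + ((N:ℝ)-1)/(2*s^2) = ((N:ℝ)-1)/s^2 := by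
                field_simp; ring
              linarith
            linarith
          have f3 : a ≤ u s := hua s ⟨hsI.1, le_trans hsm.2.le hrm.2⟩
          have f2nn : 0 ≤ ((N:ℝ)-1)/s^2 - q s :=
            le_trans (by positivity) f2
          have g1 : ((N:ℝ)-1)/(2*r^2) * a ≤ (((N:ℝ)-1)/s^2 - q s) * u s :=
            mul_le_mul f2 f3 ha.le f2nn
          have g2 : (r/2)^(N-1) * (((N:ℝ)-1)/(2*r^2) * a)
              ≤ s^(N-1) * ((((N:ℝ)-1)/s^2 - q s) * u s) :=
            mul_le_mul f1 g1 (mul_nonneg (by positivity) ha.le)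
              (pow_nonneg hsI.1.le _)
          have g3 : a*((N:ℝ)-1)/2 * ((r/2)^(N-1) / r^2)
              = (r/2)^(N-1) * (((N:ℝ)-1)/(2*r^2) * a) := by ring
          linarith
      -- final blow-up
      set r0 := ρ * Real.exp (-(2/C)) with hr0def
      have hr0pos : 0 < r0 := mul_pos hρ0 (Real.exp_pos _)
      have hr0lt : r0 < ρ := by
        have h8 : Real.exp (-(2/C)) < 1 := by
          rw [Real.exp_lt_one_iff]
          have : 0 < 2/C := by positivity
          linarith
        calc r0 = ρ * Real.exp (-(2/C)) := hr0def
          _ < ρ * 1 := by exact mul_lt_mul_of_pos_left h8 hρ0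
          _ = ρ := mul_one _
      have hFTC := huFTC r0 ρ hr0pos hr0lt.le hρ1.le
      have hsub2 : Icc r0 ρ ⊆ Ioc 0 1 := fun z hz =>
        ⟨lt_of_lt_of_le hr0pos hz.1, le_trans hz.2 hρ1.le⟩
      have hGc : ContinuousOn (fun s : ℝ => C * s⁻¹) (Icc r0 ρ) :=
        continuousOn_const.mul (ContinuousOn.inv₀
          (continuous_id.continuousOn)
          (fun x hx => ne_of_gt (lt_of_lt_of_le hr0pos hx.1)))
      have hmono2 := myIntMono hr0lt.le hGc (huc'.mono hsub2)
        (fun s hsm => hu'lb s ⟨lt_trans hr0pos hsm.1, hsm.2.le⟩)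
      rw [hFTC, intervalIntegral.integral_const_mul,
        integral_inv_of_pos hr0pos hρ0] at hmono2
      have hlogr0 : Real.log r0 = Real.log ρ + -(2/C) := by
        rw [hr0def, Real.log_mul (ne_of_gt hρ0) (ne_of_gt (Real.exp_pos _)),
          Real.log_exp]
      have hlog : Real.log (ρ / r0) = 2/C := by
        rw [Real.log_div (ne_of_gt hρ0) (ne_of_gt hr0pos), hlogr0]; ring
      rw [hlog] at hmono2
      have hCne : C ≠ 0 := ne_of_gt hC
      have h9 : C * (2/C) = 2 := by rw [mul_comm, div_mul_cancel₀ 2 hCne]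
      rw [h9] at hmono2
      have hub0 := hub ρ ⟨hρ0, hρ1.le⟩
      have hupos2 := hupos r0 ⟨hr0pos, hr0lt.le⟩
      rw [abs_le] at hub0
      linarith [hub0.2]

end PartB

section PartB2
variable {N : ℕ} {ε η K : ℝ} {W' Wt' f f' f'' g g' g'' : ℝ → ℝ}
  (hs : ExtSol N ε η W' Wt' f f' f'' g g' g'')
  (hN : 2 ≤ N) (hε : 0 < ε)
  (hle : ∀ r ∈ Ioc (0:ℝ) 1, hh f g r ≤ 1)
  (hWpos : ∀ t ∈ Icc (0:ℝ) 1, 0 ≤ W' t)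
  (hK0 : 0 ≤ K) (hKlin : ∀ t ∈ Icc (0:ℝ) 1, W' t ≤ K * t)

include hs hN hε hle hWpos hK0 hKlin in
set_option maxHeartbeats 1000000 in
lemma stepB : Filter.Tendsto f (nhdsWithin 0 (Ioi 0)) (nhds 0) := by
  have hN1 : (1:ℝ) ≤ (N:ℝ) - 1 := by
    have : (2:ℝ) ≤ (N:ℝ) := by exact_mod_cast hN
    linarith
  set q : ℝ → ℝ := fun r => 1/ε^2 * W' (1 - hh f g r) with hqdef
  set Q : ℝ := K/ε^2 with hQdef
  have hQ0 : 0 ≤ Q := by rw [hQdef]; positivity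
  have hq : ∀ r ∈ Ioo (0:ℝ) 1, 0 ≤ q r ∧ q r ≤ Q := by
    intro r hr
    have h1 : hh f g r ≤ 1 := hle r (Ioo_subset_Ioc_self hr)
    have h0 : 0 ≤ hh f g r := hhnn (f := f) (g := g) r
    have harg : (1:ℝ) - hh f g r ∈ Icc (0:ℝ) 1 := ⟨by linarith, by linarith⟩
    have hWv := hWpos _ harg
    have hWl := hKlin _ harg
    constructor
    · exact mul_nonneg (by positivity) hWv
    · have h2 : W' (1 - hh f g r) ≤ K := by nlinarith
      calc q r = 1/ε^2 * W' (1 - hh f g r) := rfl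
        _ ≤ 1/ε^2 * K := by
            apply mul_le_mul_of_nonneg_left h2 (by positivity)
        _ = K/ε^2 := by ring
  set r₁ : ℝ := min (1/2) (Real.sqrt (((N:ℝ)-1)/(2*Q+2))) with hr₁def
  have hr₁I : r₁ ∈ Ioo (0:ℝ) 1 := by
    constructor
    · apply lt_min (by norm_num)
      apply Real.sqrt_pos.2
      positivity
    · exact lt_of_le_of_lt (min_le_left _ _) (by norm_num)
  have hr₁Q : ∀ s : ℝ, 0 < s → s ≤ r₁ → Q ≤ ((N:ℝ)-1)/(2*s^2) := by
    intro s hs0 hsr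
    have h2 : s ≤ Real.sqrt (((N:ℝ)-1)/(2*Q+2)) := le_trans hsr (min_le_right _ _)
    have h3 : s^2 ≤ ((N:ℝ)-1)/(2*Q+2) := by
      have h3a := Real.sq_sqrt (show (0:ℝ) ≤ ((N:ℝ)-1)/(2*Q+2) by positivity)
      nlinarith [Real.sqrt_nonneg (((N:ℝ)-1)/(2*Q+2))]
    rw [le_div_iff₀ (by positivity : (0:ℝ) < 2*s^2)]
    have h4 : Q * (2*s^2) ≤ Q * (2*(((N:ℝ)-1)/(2*Q+2))) := by nlinarith
    have h5 : Q * (2*(((N:ℝ)-1)/(2*Q+2))) ≤ (N:ℝ)-1 := by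
      have heq : Q * (2*(((N:ℝ)-1)/(2*Q+2))) = ((N:ℝ)-1) * (2*Q/(2*Q+2)) := by
        ring
      have h6 : 2*Q/(2*Q+2) ≤ 1 := by
        rw [div_le_one (by positivity)]; linarith
      rw [heq]
      nlinarith
    linarith
  have hfode : ∀ r ∈ Ioo (0:ℝ) 1,
      f'' r + ((N:ℝ)-1)/r * f' r - ((N:ℝ)-1)/r^2 * f r = -(q r) * f r := by
    intro r hr
    have h7 := hs.odef r hr
    have harg : (1:ℝ) - f r^2 - g r^2 = 1 - hh f g r := by unfold hh; ring
    rw [harg] at h7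
    rw [hqdef]
    linear_combination h7
  have hub : ∀ r ∈ Ioc (0:ℝ) 1, |f r| ≤ 1 := by
    intro r hr
    have h1 : f r^2 ≤ 1 := by
      have h8 := hle r hr
      have h9 := sq_nonneg (g r)
      unfold hh at h8
      linarith
    rw [abs_le]
    constructor <;> nlinarith [sq_nonneg (f r + 1), sq_nonneg (f r - 1)]
  have key : ∀ a : ℝ, 0 < a → ∀ᶠ r in nhdsWithin (0:ℝ) (Ioi 0), |f r| < a := by
    intro a ha
    have h1 : ¬ ∃ᶠ r in nhdsWithin (0:ℝ) (Ioi 0), a ≤ f r := fun hfr =>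
      stepB_aux hN ha hr₁I hr₁Q (fda hs) (fda' hs) (fc hs) (fc' hs) hs.hf2c
        hq hfode hub hfr
    have h2 : ¬ ∃ᶠ r in nhdsWithin (0:ℝ) (Ioi 0), a ≤ -(f r) := fun hfr =>
      stepB_aux hN ha hr₁I hr₁Q
        (u := fun x => -(f x)) (u' := fun x => -(f' x)) (u'' := fun x => -(f'' x))
        (fun r hr => (fda hs r hr).neg) (fun r hr => (fda' hs r hr).neg)
        (fc hs).neg (fc' hs).neg hs.hf2c.neg hq
        (fun r hr => by
          have := hfode r hr
          linear_combination -this)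
        (fun r hr => by rw [abs_neg]; exact hub r hr) hfr
    rw [Filter.not_frequently] at h1 h2
    filter_upwards [h1, h2] with r hr1 hr2
    push_neg at hr1 hr2
    rw [abs_lt]
    exact ⟨by linarith, hr1⟩
  rw [Metric.tendsto_nhds]
  intro ε₀ hε₀
  filter_upwards [key ε₀ hε₀] with r hr
  rw [Real.dist_eq, sub_zero]
  exact hr

end PartB2

section PartC
variable {N : ℕ} {ε η K K₂ : ℝ} {W' Wt' f f' f'' g g' g'' : ℝ → ℝ}
  (hs : ExtSol N ε η W' Wt' f f' f'' g g' g'')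
  (hN : 2 ≤ N) (hε : 0 < ε) (hη : 0 < η)
  (hle : ∀ r ∈ Ioc (0:ℝ) 1, hh f g r ≤ 1)
  (hWpos : ∀ t ∈ Icc (0:ℝ) 1, 0 ≤ W' t)
  (hK0 : 0 ≤ K) (hKlin : ∀ t ∈ Icc (0:ℝ) 1, W' t ≤ K * t)
  (hK₂ : ∀ t ∈ Icc (0:ℝ) 1, |Wt' t| ≤ K₂)

include hs hN hε hη hle hWpos hK0 hKlin hK₂ in
set_option maxHeartbeats 1000000 in
lemma stepC : Filter.Tendsto g' (nhdsWithin 0 (Ioi 0)) (nhds 0) := by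
  have hN1 : (1:ℝ) ≤ (N:ℝ) - 1 := by
    have : (2:ℝ) ≤ (N:ℝ) := by exact_mod_cast hN
    linarith
  set M : ℝ := K/ε^2 + K₂/η^2 with hMdef
  -- bounds on the data
  have hgb : ∀ r ∈ Ioc (0:ℝ) 1, g r ^ 2 ≤ 1 := by
    intro r hr
    have h8 := hle r hr
    have h9 := sq_nonneg (f r)
    unfold hh at h8
    linarith
  have hK₂0 : 0 ≤ K₂ := le_trans (abs_nonneg _) (hK₂ 0 ⟨le_rfl, zero_le_one⟩)
  -- the derivative of P = r^{N-1} g'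
  have hPda : ∀ r ∈ Ioo (0:ℝ) 1, HasDerivAt (fun s => s ^ (N-1) * g' s)
      (((N:ℝ)-1) * r ^ (N-2) * g' r + r ^ (N-1) * g'' r) r := by
    intro r hr
    have h1 := (hasDerivAt_pow (N-1) r).mul (gda' hs r hr)
    refine h1.congr_deriv ?_
    have e1 : ((N - 1 : ℕ) : ℝ) = (N:ℝ) - 1 := by
      rw [Nat.cast_sub (by omega : 1 ≤ N), Nat.cast_one]
    have e2 : N - 1 - 1 = N - 2 := by omega
    rw [e1, e2]
  have hP'c : ∀ {x y : ℝ}, 0 < x → y ≤ 1 →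
      ContinuousOn (fun s => ((N:ℝ)-1) * s ^ (N-2) * g' s + s ^ (N-1) * g'' s)
        (Icc x y) := by
    intro x y hx hy
    have hsub : Icc x y ⊆ Ioc 0 1 := fun z hz => ⟨lt_of_lt_of_le hx hz.1, le_trans hz.2 hy⟩
    exact ((continuousOn_const.mul (continuous_pow _).continuousOn).mul
      ((gc' hs).mono hsub)).add ((continuous_pow _).continuousOn.mul (hs.hg2c.mono hsub))
  -- pointwise bound for P'
  have hP'b : ∀ s ∈ Ioo (0:ℝ) 1,
      |((N:ℝ)-1) * s ^ (N-2) * g' s + s ^ (N-1) * g'' s| ≤ M * s ^ (N-1) := by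
    intro s hsI
    have hs0 : (0:ℝ) < s := hsI.1
    have hpow : s ^ (N-1) = s ^ (N-2) * s := by
      rw [show N - 1 = (N-2) + 1 by omega, pow_succ]
    have e2 : ((N:ℝ)-1) * s ^ (N-2) * g' s + s ^ (N-1) * g'' s
        = s ^ (N-1) * (g'' s + ((N:ℝ)-1)/s * g' s) := by
      rw [hpow]; field_simp; ring
    rw [e2, hs.odeg s hsI]
    -- bound the RHS of the ODE
    have hh1b : hh f g s ≤ 1 := hle s (Ioo_subset_Ioc_self hsI)
    have hh0 : 0 ≤ hh f g s := hhnn (f := f) (g := g) s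
    have harg : (1:ℝ) - f s^2 - g s^2 ∈ Icc (0:ℝ) 1 := by
      unfold hh at hh1b hh0; constructor <;> [linarith; linarith]
    have hWv := hWpos _ harg
    have hWl := hKlin _ harg
    have hWb : |W' (1 - f s^2 - g s^2)| ≤ K := by
      rw [abs_of_nonneg hWv]
      nlinarith [harg.2, harg.1]
    have hgsb : |g s| ≤ 1 := by
      rw [abs_le]
      have := hgb s (Ioo_subset_Ioc_self hsI)
      constructor <;> nlinarith [sq_nonneg (g s + 1), sq_nonneg (g s - 1)]
    have hVb : |Wt' (g s ^ 2)| ≤ K₂ := hK₂ _ ⟨sq_nonneg _, hgb s (Ioo_subset_Ioc_self hsI)⟩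
    have hR : |(-(1 / ε ^ 2) * W' (1 - f s ^ 2 - g s ^ 2) * g s
        + 1 / η ^ 2 * Wt' (g s ^ 2) * g s)| ≤ M := by
      have t1 : |(-(1 / ε ^ 2) * W' (1 - f s ^ 2 - g s ^ 2) * g s)| ≤ K/ε^2 := by
        rw [abs_mul, abs_mul]
        have : |(-(1 / ε ^ 2))| = 1/ε^2 := by rw [abs_neg, abs_of_pos (by positivity)]
        rw [this]
        calc 1/ε^2 * |W' (1 - f s ^ 2 - g s ^ 2)| * |g s|
            ≤ 1/ε^2 * K * 1 := by
              apply mul_le_mul (mul_le_mul_of_nonneg_left hWb (by positivity)) hgsb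
                (abs_nonneg _) (by positivity)
          _ = K/ε^2 := by ring
      have t2 : |1 / η ^ 2 * Wt' (g s ^ 2) * g s| ≤ K₂/η^2 := by
        rw [abs_mul, abs_mul, abs_of_pos (show (0:ℝ) < 1/η^2 by positivity)]
        calc 1/η^2 * |Wt' (g s ^ 2)| * |g s|
            ≤ 1/η^2 * K₂ * 1 := by
              apply mul_le_mul (mul_le_mul_of_nonneg_left hVb (by positivity)) hgsb
                (abs_nonneg _) (by positivity)
          _ = K₂/η^2 := by ring
      calc |(-(1 / ε ^ 2) * W' (1 - f s ^ 2 - g s ^ 2) * g s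
          + 1 / η ^ 2 * Wt' (g s ^ 2) * g s)|
          ≤ |(-(1 / ε ^ 2) * W' (1 - f s ^ 2 - g s ^ 2) * g s)|
            + |1 / η ^ 2 * Wt' (g s ^ 2) * g s| := abs_add_le _ _
        _ ≤ K/ε^2 + K₂/η^2 := add_le_add t1 t2
        _ = M := hMdef.symm
    rw [abs_mul, abs_of_pos (pow_pos hs0 (N-1)), mul_comm (s ^ (N-1)) _]
    exact mul_le_mul_of_nonneg_right hR (le_of_lt (pow_pos hs0 (N-1)))
  -- FTC for P
  have hPFTC : ∀ x y : ℝ, 0 < x → x ≤ y → y ≤ 1 →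
      (∫ s in x..y, (((N:ℝ)-1) * s ^ (N-2) * g' s + s ^ (N-1) * g'' s))
        = y ^ (N-1) * g' y - x ^ (N-1) * g' x := by
    intro x y hx hxy hy
    exact myFTC hxy ((continuous_pow _).continuousOn.mul ((gc' hs).mono
        (fun z hz => ⟨lt_of_lt_of_le hx hz.1, le_trans hz.2 hy⟩)))
      (fun z hz => hPda z ⟨lt_trans hx hz.1, lt_of_lt_of_le hz.2 hy⟩)
      (hP'c hx hy)
  -- integrability of P' on (0, 1/2)
  have hP'meas : IntegrableOn
      (fun s => ((N:ℝ)-1) * s ^ (N-2) * g' s + s ^ (N-1) * g'' s)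
      (Ioo (0:ℝ) (1/2)) := by
    constructor
    · have hsub : Ioo (0:ℝ) (1/2) ⊆ Ioc 0 1 := fun z hz =>
        ⟨hz.1, le_trans hz.2.le (by norm_num)⟩
      exact (((continuousOn_const.mul (continuous_pow _).continuousOn).mul
        ((gc' hs).mono hsub)).add ((continuous_pow _).continuousOn.mul
        (hs.hg2c.mono hsub))).aestronglyMeasurable measurableSet_Ioo
    · apply HasFiniteIntegral.restrict_of_bounded (C := M)
        (by rw [Real.volume_Ioo]; exact ENNReal.ofReal_lt_top)
      rw [ae_restrict_iff' measurableSet_Ioo]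
      apply Filter.Eventually.of_forall
      intro s hsm
      have hsI : s ∈ Ioo (0:ℝ) 1 := ⟨hsm.1, lt_trans hsm.2 (by norm_num)⟩
      calc ‖((N:ℝ)-1) * s ^ (N-2) * g' s + s ^ (N-1) * g'' s‖
          ≤ M * s ^ (N-1) := hP'b s hsI
        _ ≤ M * 1 := by
            have hM0 : 0 ≤ M := by
              rw [hMdef]; positivity
            exact mul_le_mul_of_nonneg_left (pow_le_one₀ hsI.1.le hsI.2.le) hM0
        _ = M := mul_one M
  have hM0 : 0 ≤ M := by rw [hMdef]; positivity
  have hNpos : (0:ℝ) < N := by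
    have : (2:ℝ) ≤ (N:ℝ) := by exact_mod_cast hN
    linarith
  set c₀ : ℝ := (1/2:ℝ) ^ (N-1) * g' (1/2)
      - ∫ s in Ioo (0:ℝ) (1/2), (((N:ℝ)-1) * s ^ (N-2) * g' s + s ^ (N-1) * g'' s)
    with hc₀def
  have hdecomp : ∀ r ∈ Ioo (0:ℝ) (1/2:ℝ),
      r ^ (N-1) * g' r - c₀
        = ∫ s in Ioc (0:ℝ) r, (((N:ℝ)-1) * s ^ (N-2) * g' s + s ^ (N-1) * g'' s) := by
    intro r hr
    have hFTC := hPFTC r (1/2) hr.1 hr.2.le (by norm_num)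
    rw [intervalIntegral.integral_of_le hr.2.le] at hFTC
    have hseteq : Ioo (0:ℝ) (1/2) = Ioc 0 r ∪ Ioo r (1/2) := by
      ext x
      constructor
      · intro hx
        rcases le_or_gt x r with h | h
        · exact Or.inl ⟨hx.1, h⟩
        · exact Or.inr ⟨h, hx.2⟩
      · intro hx
        rcases hx with ⟨h1, h2⟩ | ⟨h1, h2⟩
        · exact ⟨h1, lt_of_le_of_lt h2 hr.2⟩
        · exact ⟨lt_trans hr.1 h1, h2⟩
    have hdis : Disjoint (Ioc (0:ℝ) r) (Ioo r (1/2:ℝ)) := by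
      apply Set.disjoint_left.2
      rintro x ⟨_, h1⟩ ⟨h2, _⟩
      linarith
    have hint1 : IntegrableOn
        (fun s => ((N:ℝ)-1) * s ^ (N-2) * g' s + s ^ (N-1) * g'' s) (Ioc 0 r) :=
      hP'meas.mono_set (fun x hx => ⟨hx.1, lt_of_le_of_lt hx.2 hr.2⟩)
    have hint2 : IntegrableOn
        (fun s => ((N:ℝ)-1) * s ^ (N-2) * g' s + s ^ (N-1) * g'' s) (Ioo r (1/2)) :=
      hP'meas.mono_set (fun x hx => ⟨lt_trans hr.1 hx.1, hx.2⟩)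
    have hsplit : ∫ s in Ioo (0:ℝ) (1/2),
        (((N:ℝ)-1) * s ^ (N-2) * g' s + s ^ (N-1) * g'' s)
        = (∫ s in Ioc (0:ℝ) r, (((N:ℝ)-1) * s ^ (N-2) * g' s + s ^ (N-1) * g'' s))
          + ∫ s in Ioo r (1/2:ℝ), (((N:ℝ)-1) * s ^ (N-2) * g' s + s ^ (N-1) * g'' s) := by
      rw [hseteq]
      exact MeasureTheory.setIntegral_union hdis measurableSet_Ioo hint1 hint2
    have hIoc : ∫ s in Ioc r (1/2:ℝ),
        (((N:ℝ)-1) * s ^ (N-2) * g' s + s ^ (N-1) * g'' s)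
        = ∫ s in Ioo r (1/2:ℝ),
          (((N:ℝ)-1) * s ^ (N-2) * g' s + s ^ (N-1) * g'' s) :=
      integral_Ioc_eq_integral_Ioo
    rw [hIoc] at hFTC
    rw [hc₀def, hsplit]
    linarith [hFTC]
  -- quantitative bound on P - c₀
  have hbound : ∀ r ∈ Ioo (0:ℝ) (1/2:ℝ),
      |r ^ (N-1) * g' r - c₀| ≤ M * r ^ N / N := by
    intro r hr
    rw [hdecomp r hr]
    have hint1 : IntegrableOn
        (fun s => ((N:ℝ)-1) * s ^ (N-2) * g' s + s ^ (N-1) * g'' s) (Ioc 0 r) :=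
      hP'meas.mono_set (fun x hx => ⟨hx.1, lt_of_le_of_lt hx.2 hr.2⟩)
    have step1 : |∫ s in Ioc (0:ℝ) r,
        (((N:ℝ)-1) * s ^ (N-2) * g' s + s ^ (N-1) * g'' s)|
        ≤ ∫ s in Ioc (0:ℝ) r,
          |((N:ℝ)-1) * s ^ (N-2) * g' s + s ^ (N-1) * g'' s| := by
      have := MeasureTheory.norm_integral_le_integral_norm
        (μ := volume.restrict (Ioc (0:ℝ) r))
        (fun s => ((N:ℝ)-1) * s ^ (N-2) * g' s + s ^ (N-1) * g'' s)
      simpa using this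
    have step2 : ∫ s in Ioc (0:ℝ) r,
        |((N:ℝ)-1) * s ^ (N-2) * g' s + s ^ (N-1) * g'' s|
        ≤ ∫ s in Ioc (0:ℝ) r, M * s ^ (N-1) := by
      apply setIntegral_mono_on hint1.abs
        ((continuous_const.mul (continuous_pow (N-1))).integrableOn_Ioc)
        measurableSet_Ioc
      intro s hsm
      exact hP'b s ⟨hsm.1, lt_of_le_of_lt hsm.2 (lt_trans hr.2 (by norm_num))⟩
    have step3 : ∫ s in Ioc (0:ℝ) r, M * s ^ (N-1) = M * r ^ N / N := by
      rw [← intervalIntegral.integral_of_le (le_of_lt hr.1),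
        intervalIntegral.integral_const_mul, integral_pow]
      have hcst : ((N - 1 : ℕ) : ℝ) + 1 = (N:ℝ) := by
        rw [Nat.cast_sub (by omega : 1 ≤ N), Nat.cast_one]; ring
      have hzp : (0:ℝ) ^ (N - 1 + 1) = 0 := zero_pow (by omega)
      have hNn : N - 1 + 1 = N := by omega
      rw [hcst, hzp, hNn]
      ring
    calc |∫ s in Ioc (0:ℝ) r,
        (((N:ℝ)-1) * s ^ (N-2) * g' s + s ^ (N-1) * g'' s)|
        ≤ ∫ s in Ioc (0:ℝ) r,
          |((N:ℝ)-1) * s ^ (N-2) * g' s + s ^ (N-1) * g'' s| := step1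
      _ ≤ ∫ s in Ioc (0:ℝ) r, M * s ^ (N-1) := step2
      _ = M * r ^ N / N := step3
  -- the constant vanishes
  have hc₀0 : c₀ = 0 := by
    by_contra hc₀ne
    have hc₀abs : 0 < |c₀| := abs_pos.2 hc₀ne
    set r₃ : ℝ := min (1/4) (|c₀| * N / (2*(M+1))) with hr₃def
    have hr₃0 : 0 < r₃ := lt_min (by norm_num) (by positivity)
    have hr₃half : r₃ < 1/2 := lt_of_le_of_lt (min_le_left _ _) (by norm_num)
    have hsmall : ∀ r ∈ Ioo (0:ℝ) r₃, M * r ^ N / N ≤ |c₀|/2 := by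
      intro r hr
      have hr1 : r ≤ 1 := le_trans hr.2.le (le_trans hr₃half.le (by norm_num))
      have hpow : r ^ N ≤ r := by
        calc r ^ N ≤ r ^ 1 := pow_le_pow_of_le_one hr.1.le hr1 (by omega)
          _ = r := pow_one r
      have h2 : r ≤ |c₀| * N / (2*(M+1)) := le_trans hr.2.le (min_le_right _ _)
      have h2' : r * (2*(M+1)) ≤ |c₀| * N := by
        rw [← le_div_iff₀ (by positivity : (0:ℝ) < 2*(M+1))]
        exact h2
      have h3 : M * r ^ N ≤ (M+1) * r := by nlinarith [hr.1.le]
      rw [div_le_div_iff₀ hNpos (by norm_num : (0:ℝ) < 2)]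
      nlinarith [h3, h2']
    have hglb : ∀ r ∈ Ioo (0:ℝ) r₃, c₀^2/4 * r⁻¹ ≤ r^(N-1) * g' r^2 := by
      intro r hr
      have hrI2 : r ∈ Ioo (0:ℝ) (1/2) := ⟨hr.1, lt_trans hr.2 hr₃half⟩
      have h5 := hbound r hrI2
      have h6 := hsmall r hr
      have h7 : |c₀|/2 ≤ |r^(N-1)*g' r| := by
        have h8 := abs_sub_abs_le_abs_sub c₀ (r ^ (N-1) * g' r)
        have h8' := abs_sub_comm c₀ (r ^ (N-1) * g' r)
        linarith
      have h9 : c₀^2/4 ≤ (r^(N-1))^2 * g' r^2 := by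
        have h9a := mul_self_le_mul_self (by positivity : (0:ℝ) ≤ |c₀|/2) h7
        have h9b : |c₀|/2 * (|c₀|/2) = c₀^2/4 := by
          rw [div_mul_div_comm, abs_mul_abs_self]; ring
        have h9c : |r^(N-1)*g' r| * |r^(N-1)*g' r| = (r^(N-1))^2*g' r^2 := by
          rw [abs_mul_abs_self]; ring
        linarith
      have hrp : 0 < r^(N-1) := pow_pos hr.1 _
      have h10 : r^(N-1) ≤ r := by
        have h10a : r ≤ 1 := by linarith [hrI2.2]
        calc r^(N-1) ≤ r^1 := pow_le_pow_of_le_one hr.1.le h10a (by omega)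
          _ = r := pow_one r
      have h12 : (r^(N-1)*g' r^2) * r^(N-1) ≤ (r^(N-1)*g' r^2) * r :=
        mul_le_mul_of_nonneg_left h10 (mul_nonneg hrp.le (sq_nonneg _))
      have h13 : (r^(N-1))^2*g' r^2 = (r^(N-1)*g' r^2)*r^(N-1) := by ring
      have h11 : c₀^2/4 ≤ (r^(N-1) * g' r^2) * r := by linarith
      rw [show c₀^2/4 * r⁻¹ = (c₀^2/4)/r by ring, div_le_iff₀ hr.1]
      linarith
    set I₂ : ℝ := ∫ u in Ioo (0:ℝ) 1, u ^ (N-1) * g' u ^ 2 with hI₂def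
    have hI₂0 : 0 ≤ I₂ := setIntegral_nonneg measurableSet_Ioo
      (fun s hs' => mul_nonneg (pow_nonneg hs'.1.le _) (sq_nonneg _))
    have hIba : ∀ r ∈ Ioo (0:ℝ) r₃, (∫ s in r..r₃, s^(N-1)*g' s^2) ≤ I₂ := by
      intro r hr
      rw [intervalIntegral.integral_of_le hr.2.le]
      apply setIntegral_mono_set hs.intg1
      · exact (ae_restrict_iff' measurableSet_Ioo).2 (Filter.Eventually.of_forall
          (fun s hw => mul_nonneg (pow_nonneg hw.1.le _) (sq_nonneg _)))
      · apply HasSubset.Subset.eventuallyLE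
        intro x hx
        exact ⟨lt_trans hr.1 hx.1, lt_of_le_of_lt hx.2 (lt_trans hr₃half (by norm_num))⟩
    set D : ℝ := c₀^2/4 with hDdef
    have hD : 0 < D := by rw [hDdef]; positivity
    set r₄ : ℝ := r₃ * Real.exp (-((I₂+1)/D)) with hr₄def
    have hr₄0 : 0 < r₄ := mul_pos hr₃0 (Real.exp_pos _)
    have hr₄lt : r₄ < r₃ := by
      have h8 : Real.exp (-((I₂+1)/D)) < 1 := by
        rw [Real.exp_lt_one_iff]
        have : 0 < (I₂+1)/D := by positivity
        linarith
      calc r₄ = r₃ * Real.exp (-((I₂+1)/D)) := hr₄def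
        _ < r₃ * 1 := mul_lt_mul_of_pos_left h8 hr₃0
        _ = r₃ := mul_one _
    have hGc : ContinuousOn (fun s : ℝ => D * s⁻¹) (Icc r₄ r₃) :=
      continuousOn_const.mul (ContinuousOn.inv₀ (continuous_id.continuousOn)
        (fun x hx => ne_of_gt (lt_of_lt_of_le hr₄0 hx.1)))
    have hsub : Icc r₄ r₃ ⊆ Ioc 0 1 := fun z hz =>
      ⟨lt_of_lt_of_le hr₄0 hz.1,
        le_trans hz.2 (le_trans hr₃half.le (by norm_num))⟩
    have hXc : ContinuousOn (fun s => s^(N-1) * g' s^2) (Icc r₄ r₃) :=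
      (continuous_pow _).continuousOn.mul (((gc' hs).pow 2).mono hsub)
    have hmono := myIntMono hr₄lt.le hGc hXc
      (fun s hsm => hglb s ⟨lt_trans hr₄0 hsm.1, hsm.2⟩)
    rw [intervalIntegral.integral_const_mul, integral_inv_of_pos hr₄0 hr₃0] at hmono
    have hlogr₄ : Real.log r₄ = Real.log r₃ + -((I₂+1)/D) := by
      rw [hr₄def, Real.log_mul (ne_of_gt hr₃0) (ne_of_gt (Real.exp_pos _)),
        Real.log_exp]
    have hlog : Real.log (r₃ / r₄) = (I₂+1)/D := by
      rw [Real.log_div (ne_of_gt hr₃0) (ne_of_gt hr₄0), hlogr₄]; ring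
    rw [hlog] at hmono
    have hDne : D ≠ 0 := ne_of_gt hD
    have h9 : D * ((I₂+1)/D) = I₂+1 := by
      rw [mul_comm, div_mul_cancel₀ _ hDne]
    rw [h9] at hmono
    have := hIba r₄ ⟨hr₄0, hr₄lt⟩
    linarith
  -- final bound : |g' r| ≤ (M/N) r on (0,1/2)
  have hfinal : ∀ r ∈ Ioo (0:ℝ) (1/2:ℝ), |g' r| ≤ M * r / N := by
    intro r hr
    have h5 := hbound r hr
    rw [hc₀0, sub_zero] at h5
    have hrp : 0 < r^(N-1) := pow_pos hr.1 _
    have h15 : |r^(N-1)*g' r| = |g' r| * r^(N-1) := by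
      rw [abs_mul, abs_of_pos hrp, mul_comm]
    have hrN : r^N = r^(N-1)*r := by
      rw [← pow_succ, show N - 1 + 1 = N by omega]
    have h14 : |g' r| * r^(N-1) ≤ (M*r/N) * r^(N-1) := by
      rw [← h15]
      calc |r^(N-1)*g' r| ≤ M * r^N/N := h5
        _ = (M*r/N) * r^(N-1) := by rw [hrN]; ring
    exact le_of_mul_le_mul_right h14 hrp
  -- conclude
  rw [Metric.tendsto_nhds]
  intro ε₀ hε₀
  have hδpos : 0 < min (1/2:ℝ) (ε₀*N/(M+1)) := lt_min (by norm_num) (by positivity)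
  filter_upwards [Ioo_mem_nhdsGT_of_mem
    (⟨le_rfl, hδpos⟩ : (0:ℝ) ∈ Ico 0 (min (1/2:ℝ) (ε₀*N/(M+1))))] with r hr
  rw [Real.dist_eq, sub_zero]
  have hrhalf : r < 1/2 := lt_of_lt_of_le hr.2 (min_le_left _ _)
  have h16 := hfinal r ⟨hr.1, hrhalf⟩
  have h17 : r < ε₀*N/(M+1) := lt_of_lt_of_le hr.2 (min_le_right _ _)
  have h18 : r * (M+1) < ε₀ * N := by
    rw [← lt_div_iff₀ (by positivity : (0:ℝ) < M+1)]
    calc r < ε₀*N/(M+1) := h17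
      _ = ε₀*N/(M+1) := rfl
  calc |g' r| ≤ M * r / N := h16
    _ < ε₀ := by
      rw [div_lt_iff₀ hNpos]
      nlinarith [hr.1]

end PartC

/-- **Boundedness of solutions to the extended radial system** (Lemma 2.7):
any solution of the extended radial system satisfies `f² + g² < 1` on `(0,1)`,
and `f(r) → 0`, `g'(r) → 0` as `r → 0⁺`. -/
theorem extended_radial_system_boundedness
    (N : ℕ) (hN : 2 ≤ N) (ε η : ℝ) (hε : 0 < ε) (hη : 0 < η)
    (W W' W'' : ℝ → ℝ)
    (hW1 : ∀ t ∈ Iic (1:ℝ), HasDerivWithinAt W (W' t) (Iic 1) t)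
    (hW2 : ∀ t ∈ Iic (1:ℝ), HasDerivWithinAt W' (W'' t) (Iic 1) t)
    (hW2c : ContinuousOn W'' (Iic 1))
    (hW0 : W 0 = 0)
    (hWnn : ∀ t ∈ Iic (1:ℝ), 0 ≤ W t)
    (hWcv : ∀ t ∈ Iic (1:ℝ), t ≠ 0 → 0 ≤ W'' t)
    (Wt Wt' Wt'' : ℝ → ℝ)
    (hV1 : ∀ t ∈ Ici (0:ℝ), HasDerivWithinAt Wt (Wt' t) (Ici 0) t)
    (hV2 : ∀ t ∈ Ici (0:ℝ), HasDerivWithinAt Wt' (Wt'' t) (Ici 0) t)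
    (hV2c : ContinuousOn Wt'' (Ici 0))
    (hV0 : Wt 0 = 0)
    (hVnn : ∀ t ∈ Ici (0:ℝ), 0 ≤ Wt t)
    (hVcv : ∀ t ∈ Ioi (0:ℝ), 0 ≤ Wt'' t)
    (f f' f'' g g' g'' : ℝ → ℝ)
    (hsol : ExtSol N ε η W' Wt' f f' f'' g g' g'') :
    (∀ r ∈ Ioo (0:ℝ) 1, f r ^ 2 + g r ^ 2 < 1) ∧
    Tendsto f (nhdsWithin 0 (Ioi 0)) (nhds 0) ∧
    Tendsto g' (nhdsWithin 0 (Ioi 0)) (nhds 0) := by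
  have hW'0 : W' 0 = 0 := Wp_zero hW1 hW0 hWnn
  have hWneg : ∀ t ≤ 0, W' t ≤ 0 := Wp_nonpos hW1 hW2 hW0 hWnn hWcv
  have hWposIcc : ∀ t ∈ Icc (0:ℝ) 1, 0 ≤ W' t := fun t ht =>
    Wp_nonneg hW1 hW2 hW0 hWnn hWcv t ht.1 ht.2
  obtain ⟨K, hK0, hKlin⟩ := Wp_lin hW1 hW2 hW2c hW0 hWnn
  have hVpos : ∀ t : ℝ, 0 ≤ t → 0 ≤ Wt' t := Vp_nonneg hV1 hV2 hV0 hVnn hVcv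
  obtain ⟨K₂, hK₂⟩ := Vp_bdd hV2
  have hle := stepA1 hsol hN hε hη hWneg hVpos
  refine ⟨?_, ?_, ?_⟩
  · exact fun r hr => stepA2 hsol hN hε hη hWneg hVpos hWposIcc hW'0 hK0 hKlin r hr
  · exact stepB hsol hN hε hle hWposIcc hK0 hKlin
  · exact stepC hsol hN hε hη hle hWposIcc hK0 hKlin hK₂
end
end

section
/- Nonexistence of escaping solutions of the S^N-valued radial system for N ≥ 7 (Theorem 2.6(a)): Let N ≥ 7 be an integer, η > 0, and let W̃ : [0,∞) → ℝ be C² with W̃(0)=0, W̃ ≥ 0 on [0,∞), W̃'' ≥ 0 on (0,∞). Then the S^N-valued radial system has no solution (f,g) with g > 0 on (0,1). -/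
open Set MeasureTheory

noncomputable section

set_option maxHeartbeats 1000000

private lemma hardy_ptwise (c y z xK x : ℝ) (hxK : 0 ≤ xK) :
    c^2/2 * (xK * y^2) - 2 * ((xK * x^2) * z^2)
      ≤ c * (c * xK * y^2 + (xK * x) * (2 * y * z)) := by
  nlinarith [mul_nonneg hxK (sq_nonneg (c * y + 2 * x * z))]


/-- `(f,g)` (with derivatives `f',f''`, `g',g''` on `(0,1]`) is a solution of
the `S^N`-valued radial system with parameter `η` and potential derivative
`Wt'` (of `W̃`, defined on `[0,∞)`); `lam` below is the Lagrange multiplier. -/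
structure SSol (N : ℕ) (η : ℝ) (Wt' : ℝ → ℝ)
    (f f' f'' g g' g'' : ℝ → ℝ) : Prop where
  hf1 : ∀ r ∈ Ioc (0:ℝ) 1, HasDerivWithinAt f (f' r) (Ioc 0 1) r
  hf2 : ∀ r ∈ Ioc (0:ℝ) 1, HasDerivWithinAt f' (f'' r) (Ioc 0 1) r
  hf2c : ContinuousOn f'' (Ioc 0 1)
  hg1 : ∀ r ∈ Ioc (0:ℝ) 1, HasDerivWithinAt g (g' r) (Ioc 0 1) r
  hg2 : ∀ r ∈ Ioc (0:ℝ) 1, HasDerivWithinAt g' (g'' r) (Ioc 0 1) r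
  hg2c : ContinuousOn g'' (Ioc 0 1)
  sphere : ∀ r ∈ Ioc (0:ℝ) 1, f r ^ 2 + g r ^ 2 = 1
  odef : ∀ r ∈ Ioo (0:ℝ) 1,
    f'' r + ((N:ℝ) - 1) / r * f' r - ((N:ℝ) - 1) / r ^ 2 * f r
      = -(f' r ^ 2 + ((N:ℝ) - 1) / r ^ 2 * f r ^ 2 + g' r ^ 2
          + 1 / η ^ 2 * Wt' (g r ^ 2) * g r ^ 2) * f r
  odeg : ∀ r ∈ Ioo (0:ℝ) 1,
    g'' r + ((N:ℝ) - 1) / r * g' r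
      = 1 / η ^ 2 * Wt' (g r ^ 2) * g r
        - (f' r ^ 2 + ((N:ℝ) - 1) / r ^ 2 * f r ^ 2 + g' r ^ 2
            + 1 / η ^ 2 * Wt' (g r ^ 2) * g r ^ 2) * g r
  bcf : f 1 = 1
  bcg : g 1 = 0
  intf1 : IntegrableOn (fun r => r ^ (N - 1) * f' r ^ 2) (Ioo (0:ℝ) 1)
  intf2 : IntegrableOn (fun r => r ^ ((N:ℝ) - 3) * f r ^ 2) (Ioo (0:ℝ) 1)
  intg1 : IntegrableOn (fun r => r ^ (N - 1) * g' r ^ 2) (Ioo (0:ℝ) 1)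

/-- **Nonexistence of escaping solutions of the `S^N`-valued radial system for
`N ≥ 7`** (Theorem 2.6(a)): for `N ≥ 7` and any `η > 0`, the `S^N`-valued
radial system has no solution `(f,g)` with `g > 0` on `(0,1)`. -/
theorem sphere_system_no_escaping_highdim
    (N : ℕ) (hN : 7 ≤ N) (η : ℝ) (hη : 0 < η)
    (Wt Wt' Wt'' : ℝ → ℝ)
    (hV1 : ∀ t ∈ Ici (0:ℝ), HasDerivWithinAt Wt (Wt' t) (Ici 0) t)
    (hV2 : ∀ t ∈ Ici (0:ℝ), HasDerivWithinAt Wt' (Wt'' t) (Ici 0) t)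
    (hV2c : ContinuousOn Wt'' (Ici 0))
    (hV0 : Wt 0 = 0)
    (hVnn : ∀ t ∈ Ici (0:ℝ), 0 ≤ Wt t)
    (hVcv : ∀ t ∈ Ioi (0:ℝ), 0 ≤ Wt'' t)
    :
    ¬ ∃ f f' f'' g g' g'' : ℝ → ℝ,
        SSol N η Wt' f f' f'' g g' g'' ∧ ∀ r ∈ Ioo (0:ℝ) 1, 0 < g r := by
  rintro ⟨f, f', f'', g, g', g'', hS, hgpos⟩
  obtain ⟨hf1, hf2, hf2c, hg1, hg2, hg2c, sphere, odef, odeg, bcf, bcg, intf1, intf2, intg1⟩ := hS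

  have hn7 : (7:ℝ) ≤ (N:ℝ) := by exact_mod_cast hN
  set n : ℝ := (N : ℝ) with hn
  obtain ⟨K, hK⟩ : ∃ K, N = K + 3 := ⟨N - 3, by omega⟩
  have hnK : n = (K:ℝ) + 3 := by rw [hn, hK]; push_cast; ring
  set q : ℝ → ℝ := fun r => f r * g' r - g r * f' r with hqdef
  have hIoo_Ioc : Ioo (0:ℝ) 1 ⊆ Ioc 0 1 := Ioo_subset_Ioc_self
  have hf : ∀ r ∈ Ioo (0:ℝ) 1, HasDerivAt f (f' r) r := fun r hr =>
    (hf1 r (hIoo_Ioc hr)).hasDerivAt (Ioc_mem_nhds hr.1 hr.2)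
  have hfp : ∀ r ∈ Ioo (0:ℝ) 1, HasDerivAt f' (f'' r) r := fun r hr =>
    (hf2 r (hIoo_Ioc hr)).hasDerivAt (Ioc_mem_nhds hr.1 hr.2)
  have hg : ∀ r ∈ Ioo (0:ℝ) 1, HasDerivAt g (g' r) r := fun r hr =>
    (hg1 r (hIoo_Ioc hr)).hasDerivAt (Ioc_mem_nhds hr.1 hr.2)
  have hgp : ∀ r ∈ Ioo (0:ℝ) 1, HasDerivAt g' (g'' r) r := fun r hr =>
    (hg2 r (hIoo_Ioc hr)).hasDerivAt (Ioc_mem_nhds hr.1 hr.2)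
  have hsph : ∀ r ∈ Ioo (0:ℝ) 1, f r ^ 2 + g r ^ 2 = 1 := fun r hr => sphere r (hIoo_Ioc hr)
  have hcon : ∀ r ∈ Ioo (0:ℝ) 1, f r * f' r + g r * g' r = 0 := by
    intro r hr
    have h1 : HasDerivAt (fun x => f x ^ 2 + g x ^ 2) (2 * f r * f' r + 2 * g r * g' r) r := by
      have := ((hf r hr).pow 2).add ((hg r hr).pow 2)
      refine this.congr_deriv ?_
      push_cast
      ring
    have h2 : HasDerivAt (fun x => f x ^ 2 + g x ^ 2) 0 r := by
      have he : (fun x => f x ^ 2 + g x ^ 2) =ᶠ[nhds r] (fun _ => (1:ℝ)) :=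
        Filter.eventuallyEq_of_mem (Ioo_mem_nhds hr.1 hr.2) (fun x hx => sphere x (hIoo_Ioc hx))
      exact (hasDerivAt_const r (1:ℝ)).congr_of_eventuallyEq he
    have h3 := h1.unique h2
    linarith
  have hgq : ∀ r ∈ Ioo (0:ℝ) 1, g' r = f r * q r := by
    intro r hr
    have h1 := hsph r hr; have h2 := hcon r hr
    simp only [hqdef]
    linear_combination (-(g' r)) * h1 + (g r) * h2
  have hfq : ∀ r ∈ Ioo (0:ℝ) 1, f' r = -(g r * q r) := by
    intro r hr
    have h1 := hsph r hr; have h2 := hcon r hr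
    simp only [hqdef]
    linear_combination (-(f' r)) * h1 + (f r) * h2
  have hq2 : ∀ r ∈ Ioo (0:ℝ) 1, q r ^ 2 = f' r ^ 2 + g' r ^ 2 := by
    intro r hr
    have h1 := hsph r hr; have h2 := hcon r hr
    simp only [hqdef]
    linear_combination (f' r ^ 2 + g' r ^ 2) * h1 - (f r * f' r + g r * g' r) * h2
  have hqd : ∀ r ∈ Ioo (0:ℝ) 1, HasDerivAt q
      (-((n-1)/r) * q r + (1/η^2 * Wt' (g r^2) - (n-1)/r^2) * (f r * g r)) r := by
    intro r hr
    have h1 : HasDerivAt q (f r * g'' r - g r * f'' r) r := by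
      have := ((hf r hr).mul (hgp r hr)).sub ((hg r hr).mul (hfp r hr))
      simp only [hqdef]
      refine this.congr_deriv ?_
      ring
    convert h1 using 1
    have hof := odef r hr
    have hog := odeg r hr
    linear_combination (g r) * hof - (f r) * hog
  -- continuity
  have cf : ContinuousOn f (Ioc 0 1) := fun r hr => (hf1 r hr).continuousWithinAt
  have cf' : ContinuousOn f' (Ioc 0 1) := fun r hr => (hf2 r hr).continuousWithinAt
  have cg : ContinuousOn g (Ioc 0 1) := fun r hr => (hg1 r hr).continuousWithinAt
  have cg' : ContinuousOn g' (Ioc 0 1) := fun r hr => (hg2 r hr).continuousWithinAt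
  have cq : ContinuousOn q (Ioc 0 1) := (cf.mul cg').sub (cg.mul cf')
  have cWt : ContinuousOn Wt (Ici 0) := fun t ht => (hV1 t ht).continuousWithinAt
  have cWg : ContinuousOn (fun r => Wt (g r ^ 2)) (Ioc 0 1) :=
    cWt.comp (cg.pow 2) (fun r _ => mem_Ici.2 (sq_nonneg _))
  -- the Pohozaev function and its derivative
  set Φ : ℝ → ℝ := fun r => r^(K+3) * q r^2 / 2 - r^(K+3) * Wt (g r^2) / (2*η^2)
      + (n-1)/2 * (r^(K+1) * g r^2) with hΦdef
  set E : ℝ → ℝ := fun r => (-((n-2)/2)) * (r^(K+2) * q r^2)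
      + (-(n/(2*η^2))) * (r^(K+2) * Wt (g r^2)) + ((n-1)*(n-2)/2) * (r^K * g r^2) with hEdef
  have hΦd : ∀ r ∈ Ioo (0:ℝ) 1, HasDerivAt Φ (E r) r := by
    intro r hr
    have hr0 : r ≠ 0 := ne_of_gt hr.1
    have hgr : 0 < g r := hgpos r hr
    have hWder : HasDerivAt (fun x => Wt (g x ^ 2)) (Wt' (g r^2) * (2 * g r * g' r)) r := by
      have houter : HasDerivAt Wt (Wt' (g r^2)) (g r^2) :=
        (hV1 _ (mem_Ici.2 (sq_nonneg _))).hasDerivAt (Ici_mem_nhds (by positivity))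
      have hinner : HasDerivAt (fun x => g x ^ 2) (2 * g r * g' r) r := by
        have := (hg r hr).pow 2
        refine this.congr_deriv ?_
        push_cast; ring
      have := houter.comp r hinner
      exact this
    have hq2' : HasDerivAt (fun x => q x ^ 2)
        (2 * q r * (-((n-1)/r) * q r + (1/η^2 * Wt' (g r^2) - (n-1)/r^2) * (f r * g r))) r := by
      have := (hqd r hr).pow 2
      refine this.congr_deriv ?_
      push_cast; ring
    have hg2' : HasDerivAt (fun x => g x ^ 2) (2 * g r * g' r) r := by
      have := (hg r hr).pow 2
      refine this.congr_deriv ?_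
      push_cast; ring
    have hraw :
        HasDerivAt Φ
          ((((K+3:ℕ):ℝ) * r^(K+3-1) * q r^2
              + r^(K+3) * (2 * q r * (-((n-1)/r) * q r
                + (1/η^2 * Wt' (g r^2) - (n-1)/r^2) * (f r * g r)))) / 2
            - (((K+3:ℕ):ℝ) * r^(K+3-1) * Wt (g r^2)
              + r^(K+3) * (Wt' (g r^2) * (2 * g r * g' r))) / (2*η^2)
            + (n-1)/2 * (((K+1:ℕ):ℝ) * r^(K+1-1) * g r^2 + r^(K+1) * (2 * g r * g' r))) r := by
      exact ((((hasDerivAt_pow (K+3) r).mul hq2').div_const 2).sub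
        (((hasDerivAt_pow (K+3) r).mul hWder).div_const (2*η^2))).add
        ((((hasDerivAt_pow (K+1) r).mul hg2').const_mul ((n-1)/2)))
    convert hraw using 1
    have e1 : K + 3 - 1 = K + 2 := by omega
    have e2 : K + 1 - 1 = K := by omega
    rw [hEdef, e1, e2, hgq r hr, hnK]
    push_cast
    field_simp
    ring
  -- helper: continuity of pieces on Icc ε 1
  have hIccsub : ∀ ε ∈ Ioo (0:ℝ) 1, Icc ε 1 ⊆ Ioc 0 1 := fun ε hε x hx =>
    ⟨lt_of_lt_of_le hε.1 hx.1, hx.2⟩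
  have hIoosub : ∀ ε ∈ Ioo (0:ℝ) 1, Ioo ε 1 ⊆ Ioo 0 1 := fun ε hε x hx =>
    ⟨lt_trans hε.1 hx.1, hx.2⟩
  have intA : ∀ ε ∈ Ioo (0:ℝ) 1, IntervalIntegrable (fun x => x^(K+2) * q x^2) volume ε 1 := by
    intro ε hε
    apply ContinuousOn.intervalIntegrable
    rw [uIcc_of_le hε.2.le]
    exact (continuous_pow _).continuousOn.mul ((cq.mono (hIccsub ε hε)).pow 2)
  have intB : ∀ ε ∈ Ioo (0:ℝ) 1, IntervalIntegrable (fun x => x^(K+2) * Wt (g x^2)) volume ε 1 := by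
    intro ε hε
    apply ContinuousOn.intervalIntegrable
    rw [uIcc_of_le hε.2.le]
    exact (continuous_pow _).continuousOn.mul (cWg.mono (hIccsub ε hε))
  have intC : ∀ ε ∈ Ioo (0:ℝ) 1, IntervalIntegrable (fun x => x^K * g x^2) volume ε 1 := by
    intro ε hε
    apply ContinuousOn.intervalIntegrable
    rw [uIcc_of_le hε.2.le]
    exact (continuous_pow _).continuousOn.mul ((cg.mono (hIccsub ε hε)).pow 2)
  have intZ : ∀ ε ∈ Ioo (0:ℝ) 1, IntervalIntegrable (fun x => x^(K+2) * g' x^2) volume ε 1 := by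
    intro ε hε
    apply ContinuousOn.intervalIntegrable
    rw [uIcc_of_le hε.2.le]
    exact (continuous_pow _).continuousOn.mul ((cg'.mono (hIccsub ε hε)).pow 2)
  -- FTC for Φ
  have key1 : ∀ ε ∈ Ioo (0:ℝ) 1, ∫ x in ε..1, E x = q 1 ^ 2 / 2 - Φ ε := by
    intro ε hε
    have cΦ : ContinuousOn Φ (Icc ε 1) := by
      rw [hΦdef]
      exact (((continuous_pow _).continuousOn.mul ((cq.mono (hIccsub ε hε)).pow 2)).div_const 2
        |>.sub (((continuous_pow _).continuousOn.mul (cWg.mono (hIccsub ε hε))).div_const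
          (2*η^2))).add
        (continuousOn_const.mul (((continuous_pow _).continuousOn.mul
          ((cg.mono (hIccsub ε hε)).pow 2))))
    have cE : ContinuousOn E (Icc ε 1) := by
      rw [hEdef]
      apply ContinuousOn.add
      apply ContinuousOn.add
      · exact continuousOn_const.mul ((continuous_pow _).continuousOn.mul
          ((cq.mono (hIccsub ε hε)).pow 2))
      · exact continuousOn_const.mul ((continuous_pow _).continuousOn.mul
          (cWg.mono (hIccsub ε hε)))
      · exact continuousOn_const.mul ((continuous_pow _).continuousOn.mul
          ((cg.mono (hIccsub ε hε)).pow 2))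
    have hftc := intervalIntegral.integral_eq_sub_of_hasDeriv_right_of_le hε.2.le cΦ
      (fun x hx => (hΦd x (hIoosub ε hε hx)).hasDerivWithinAt)
      ((by rw [uIcc_of_le hε.2.le]; exact cE : ContinuousOn E (uIcc ε 1)).intervalIntegrable)
    rw [hftc]
    have hΦ1 : Φ 1 = q 1 ^ 2 / 2 := by
      simp [hΦdef, bcg, hV0]
    rw [hΦ1]
  -- splitting the integral of E
  have hsplit : ∀ ε ∈ Ioo (0:ℝ) 1, ∫ x in ε..1, E x
      = (-((n-2)/2)) * (∫ x in ε..1, x^(K+2) * q x^2)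
        + (-(n/(2*η^2))) * (∫ x in ε..1, x^(K+2) * Wt (g x^2))
        + ((n-1)*(n-2)/2) * (∫ x in ε..1, x^K * g x^2) := by
    intro ε hε
    rw [hEdef]
    rw [intervalIntegral.integral_add (((intA ε hε).const_mul _).add ((intB ε hε).const_mul _))
      ((intC ε hε).const_mul _),
      intervalIntegral.integral_add ((intA ε hε).const_mul _) ((intB ε hε).const_mul _),
      intervalIntegral.integral_const_mul, intervalIntegral.integral_const_mul,
      intervalIntegral.integral_const_mul]
  -- nonnegativity of the W-term
  have hBnn : ∀ ε ∈ Ioo (0:ℝ) 1, 0 ≤ ∫ x in ε..1, x^(K+2) * Wt (g x^2) := by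
    intro ε hε
    apply intervalIntegral.integral_nonneg hε.2.le
    intro x hx
    have hx0 : 0 < x := lt_of_lt_of_le hε.1 hx.1
    have := hVnn (g x^2) (mem_Ici.2 (sq_nonneg _))
    positivity
  have hCnn : ∀ ε ∈ Ioo (0:ℝ) 1, 0 ≤ ∫ x in ε..1, x^K * g x^2 := by
    intro ε hε
    apply intervalIntegral.integral_nonneg hε.2.le
    intro x hx
    have hx0 : 0 < x := lt_of_lt_of_le hε.1 hx.1
    positivity
  -- the Φ(ε) bound
  have hΦεle : ∀ ε ∈ Ioo (0:ℝ) 1, Φ ε ≤ ε^(K+3) * q ε^2 / 2 + (n-1)/2 * ε^(K+1) := by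
    intro ε hε
    have hε0 : 0 < ε := hε.1
    have hWnn : 0 ≤ Wt (g ε^2) := hVnn _ (mem_Ici.2 (sq_nonneg _))
    have hg2le : g ε^2 ≤ 1 := by
      have := sphere ε ⟨hε.1, hε.2.le⟩
      nlinarith [sq_nonneg (f ε)]
    have h1 : 0 ≤ ε^(K+3) * Wt (g ε^2) / (2*η^2) := by positivity
    have h2 : (n-1)/2 * (ε^(K+1) * g ε^2) ≤ (n-1)/2 * ε^(K+1) := by
      have hp : (0:ℝ) < ε^(K+1) := by positivity
      have : ε^(K+1) * g ε^2 ≤ ε^(K+1) * 1 := by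
        apply mul_le_mul_of_nonneg_left hg2le hp.le
      nlinarith
    rw [hΦdef]
    simp only
    linarith
  clear_value n q Φ E
  -- main Pohozaev inequality
  have keyB : ∀ ε ∈ Ioo (0:ℝ) 1, (n-2) * (∫ x in ε..1, x^(K+2) * q x^2)
      ≤ (n-1)*(n-2) * (∫ x in ε..1, x^K * g x^2) + ε^(K+3) * q ε^2 + (n-1) * ε^(K+1) := by
    intro ε hε
    have h1 := key1 ε hε
    rw [hsplit ε hε] at h1
    have h2 := hΦεle ε hε
    have h3 := hBnn ε hε
    have h4 : 0 ≤ n/(2*η^2) * ∫ x in ε..1, x^(K+2) * Wt (g x^2) := by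
      apply mul_nonneg _ h3
      positivity
    have h5 : 0 ≤ q 1 ^ 2 := sq_nonneg _
    linarith
  -- Hardy-type inequality
  have keyH : ∀ ε ∈ Ioo (0:ℝ) 1, (n-2)^2 * (∫ x in ε..1, x^K * g x^2)
      ≤ 4 * (∫ x in ε..1, x^(K+2) * q x^2) := by
    intro ε hε
    have hn2 : (0:ℝ) < n - 2 := by linarith
    have hDd : ∀ x ∈ Ioo (0:ℝ) 1, HasDerivAt (fun y => y^(K+1) * g y^2)
        ((n-2) * x^K * g x^2 + x^(K+1) * (2 * g x * g' x)) x := by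
      intro x hx
      have h := (hasDerivAt_pow (K+1) x).mul ((hg x hx).pow 2)
      refine h.congr_deriv ?_
      have e2 : K + 1 - 1 = K := by omega
      rw [e2, hnK, Pi.pow_apply]
      push_cast; ring
    have cD : ContinuousOn (fun y => y^(K+1) * g y^2) (Icc ε 1) :=
      (continuous_pow _).continuousOn.mul ((cg.mono (hIccsub ε hε)).pow 2)
    have cDd : ContinuousOn (fun x => (n-2) * x^K * g x^2 + x^(K+1) * (2 * g x * g' x))
        (Icc ε 1) := by
      apply ContinuousOn.add
      · exact (continuousOn_const.mul (continuous_pow _).continuousOn).mul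
          ((cg.mono (hIccsub ε hε)).pow 2)
      · exact (continuous_pow _).continuousOn.mul
          ((continuousOn_const.mul (cg.mono (hIccsub ε hε))).mul (cg'.mono (hIccsub ε hε)))
    have iDd : IntervalIntegrable (fun x => (n-2) * x^K * g x^2 + x^(K+1) * (2 * g x * g' x))
        volume ε 1 :=
      ((by rw [uIcc_of_le hε.2.le]; exact cDd :
        ContinuousOn (fun x => (n-2) * x^K * g x^2 + x^(K+1) * (2 * g x * g' x))
          (uIcc ε 1)).intervalIntegrable)
    have ftc2 : ∫ x in ε..1, ((n-2) * x^K * g x^2 + x^(K+1) * (2 * g x * g' x))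
        = 1^(K+1) * g 1^2 - ε^(K+1) * g ε^2 :=
      intervalIntegral.integral_eq_sub_of_hasDeriv_right_of_le hε.2.le cD
        (fun x hx => (hDd x (hIoosub ε hε hx)).hasDerivWithinAt) iDd
    have ftc2' : ∫ x in ε..1, ((n-2) * x^K * g x^2 + x^(K+1) * (2 * g x * g' x)) ≤ 0 := by
      rw [ftc2, bcg]
      have h0 : 0 ≤ ε^(K+1) * g ε^2 := mul_nonneg (pow_nonneg hε.1.le _) (sq_nonneg _)
      simp
      linarith
    have hmono : ∫ x in ε..1, ((n-2)^2/2 * (x^K * g x^2) - 2 * (x^(K+2) * g' x^2))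
        ≤ ∫ x in ε..1, (n-2) * ((n-2) * x^K * g x^2 + x^(K+1) * (2 * g x * g' x)) := by
      apply intervalIntegral.integral_mono_on hε.2.le
        (((intC ε hε).const_mul _).sub ((intZ ε hε).const_mul _)) (iDd.const_mul _)
      intro x hx
      have hx0 : 0 < x := lt_of_lt_of_le hε.1 hx.1
      have e1 : (x:ℝ)^(K+1) = x^K * x := pow_succ x K
      have e2 : (x:ℝ)^(K+2) = x^K * x^2 := pow_add x K 2
      rw [e1, e2]
      exact hardy_ptwise (n-2) (g x) (g' x) (x^K) x (pow_nonneg hx0.le K)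
    have hZle : ∫ x in ε..1, x^(K+2) * g' x^2 ≤ ∫ x in ε..1, x^(K+2) * q x^2 := by
      apply intervalIntegral.integral_mono_on hε.2.le (intZ ε hε) (intA ε hε)
      intro x hx
      have hx0 : 0 < x := lt_of_lt_of_le hε.1 hx.1
      have hq2x : g' x^2 ≤ q x^2 := by
        rcases eq_or_lt_of_le hx.2 with h|h
        · subst h
          have hq1 : q 1 = g' 1 := by simp [hqdef, bcf, bcg]
          rw [hq1]
        · have := hq2 x ⟨hx0, h⟩
          nlinarith [sq_nonneg (f' x)]
      exact mul_le_mul_of_nonneg_left hq2x (pow_nonneg hx0.le (K+2))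
    have hsplit2 : ∫ x in ε..1, ((n-2)^2/2 * (x^K * g x^2) - 2 * (x^(K+2) * g' x^2))
        = (n-2)^2/2 * (∫ x in ε..1, x^K * g x^2) - 2 * (∫ x in ε..1, x^(K+2) * g' x^2) := by
      rw [intervalIntegral.integral_sub ((intC ε hε).const_mul _) ((intZ ε hε).const_mul _),
        intervalIntegral.integral_const_mul, intervalIntegral.integral_const_mul]
    have hconstmul : ∫ x in ε..1, (n-2) * ((n-2) * x^K * g x^2 + x^(K+1) * (2 * g x * g' x))
        = (n-2) * ∫ x in ε..1, ((n-2) * x^K * g x^2 + x^(K+1) * (2 * g x * g' x)) :=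
      intervalIntegral.integral_const_mul _ _
    have h9 : (n-2) * ∫ x in ε..1, ((n-2) * x^K * g x^2 + x^(K+1) * (2 * g x * g' x)) ≤ 0 :=
      mul_nonpos_of_nonneg_of_nonpos hn2.le ftc2'
    rw [hsplit2, hconstmul] at hmono
    linarith
  -- combining: the epsilon-free coefficient inequality
  have keyF : ∀ ε ∈ Ioo (0:ℝ) 1, (∫ x in ε..1, x^K * g x^2)
      ≤ ε^(K+3) * q ε^2 + (n-1) * ε^(K+1) := by
    intro ε hε
    have h1 := keyB ε hε
    have h2 := keyH ε hε
    have h3 := hCnn ε hε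
    have hcoef : 1 ≤ (n-2)^3/4 - (n-1)*(n-2) := by nlinarith
    nlinarith [mul_le_mul_of_nonneg_left h2 (show (0:ℝ) ≤ (n-2)/4 by linarith),
      mul_le_mul_of_nonneg_right hcoef h3]
  -- positivity of the g-mass
  have hCpos : 0 < ∫ x in (1/2:ℝ)..(3/4:ℝ), x^K * g x^2 := by
    apply intervalIntegral.intervalIntegral_pos_of_pos_on
    · apply ContinuousOn.intervalIntegrable
      rw [uIcc_of_le (by norm_num : (1/2:ℝ) ≤ 3/4)]
      apply ((continuous_pow _).continuousOn.mul ((cg.mono ?_).pow 2))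
      intro x hx
      exact ⟨by linarith [hx.1], by linarith [hx.2]⟩
    · intro x hx
      have hx' : x ∈ Ioo (0:ℝ) 1 := ⟨by linarith [hx.1], by linarith [hx.2]⟩
      have hgx := hgpos x hx'
      have hx0 : (0:ℝ) < x := hx'.1
      positivity
    · norm_num
  -- monotonicity of C in ε
  have hCmono : ∀ ε ∈ Ioo (0:ℝ) 1, ε ≤ 1/2 →
      (∫ x in (1/2:ℝ)..(3/4:ℝ), x^K * g x^2) ≤ ∫ x in ε..1, x^K * g x^2 := by
    intro ε hε hε2
    have i1 : IntervalIntegrable (fun x => x^K * g x^2) volume ε (1/2) := by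
      apply ContinuousOn.intervalIntegrable
      rw [uIcc_of_le hε2]
      apply (continuous_pow _).continuousOn.mul ((cg.mono ?_).pow 2)
      intro x hx
      exact ⟨lt_of_lt_of_le hε.1 hx.1, by linarith [hx.2]⟩
    have i2 : IntervalIntegrable (fun x => x^K * g x^2) volume (1/2) (3/4) := by
      apply ContinuousOn.intervalIntegrable
      rw [uIcc_of_le (by norm_num : (1/2:ℝ) ≤ 3/4)]
      apply (continuous_pow _).continuousOn.mul ((cg.mono ?_).pow 2)
      intro x hx
      exact ⟨by linarith [hx.1], by linarith [hx.2]⟩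
    have i3 : IntervalIntegrable (fun x => x^K * g x^2) volume (3/4) 1 := by
      apply ContinuousOn.intervalIntegrable
      rw [uIcc_of_le (by norm_num : (3/4:ℝ) ≤ 1)]
      apply (continuous_pow _).continuousOn.mul ((cg.mono ?_).pow 2)
      intro x hx
      exact ⟨by linarith [hx.1], hx.2⟩
    have e1 : (∫ x in ε..(1/2:ℝ), x^K * g x^2) + (∫ x in (1/2:ℝ)..(3/4:ℝ), x^K * g x^2)
        = ∫ x in ε..(3/4:ℝ), x^K * g x^2 :=
      intervalIntegral.integral_add_adjacent_intervals i1 i2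
    have e2 : (∫ x in ε..(3/4:ℝ), x^K * g x^2) + (∫ x in (3/4:ℝ)..1, x^K * g x^2)
        = ∫ x in ε..1, x^K * g x^2 :=
      intervalIntegral.integral_add_adjacent_intervals (i1.trans i2) i3
    have n1 : 0 ≤ ∫ x in ε..(1/2:ℝ), x^K * g x^2 := by
      apply intervalIntegral.integral_nonneg hε2
      intro x hx
      have hx0 : 0 < x := lt_of_lt_of_le hε.1 hx.1
      positivity
    have n3 : 0 ≤ ∫ x in (3/4:ℝ)..1, x^K * g x^2 := by
      apply intervalIntegral.integral_nonneg (by norm_num : (3/4:ℝ) ≤ 1)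
      intro x hx
      have hx0 : (0:ℝ) < x := by linarith [hx.1]
      positivity
    linarith
  -- integrability of the energy density
  have hbig : IntegrableOn (fun r => r^(K+2) * q r^2) (Ioo (0:ℝ) 1) := by
    have h12 : IntegrableOn (fun r => r ^ (N-1) * f' r^2 + r ^ (N-1) * g' r^2)
        (Ioo (0:ℝ) 1) := intf1.add intg1
    have hNK : N - 1 = K + 2 := by omega
    rw [hNK] at h12
    apply h12.congr_fun _ measurableSet_Ioo
    intro x hx
    simp only
    rw [hq2 x hx]
    ring
  -- smallness of the boundary term along a sequence
  have hsmall : ∀ δ : ℝ, 0 < δ → ∀ ρ ∈ Ioo (0:ℝ) 1, ∃ ε ∈ Ioo (0:ℝ) ρ,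
      ε^(K+3) * q ε^2 < δ := by
    intro δ hδ ρ hρ
    by_contra hcon2
    push_neg at hcon2
    have hbigρ : IntegrableOn (fun r => r^(K+2) * q r^2) (Ioo 0 ρ) :=
      hbig.mono_set (Ioo_subset_Ioo_right hρ.2.le)
    have hinv : IntegrableOn (fun r : ℝ => δ * r⁻¹) (Ioo 0 ρ) := by
      apply Integrable.mono' hbigρ
      · exact (measurable_const.mul measurable_inv).aestronglyMeasurable
      · rw [ae_restrict_iff' measurableSet_Ioo]
        filter_upwards with x hx
        have hx0 : 0 < x := hx.1
        have hd := hcon2 x hx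
        rw [Real.norm_eq_abs, abs_of_nonneg (by positivity)]
        rw [mul_inv_le_iff₀ hx0]
        calc δ ≤ x^(K+3) * q x^2 := hd
        _ = x^(K+2) * q x^2 * x := by ring
    have hinv2 : IntegrableOn (fun r : ℝ => r⁻¹) (Ioo 0 ρ) := by
      have h := hinv.const_mul δ⁻¹
      have he : (fun r : ℝ => δ⁻¹ * (δ * r⁻¹)) = fun r : ℝ => r⁻¹ := by
        funext r
        field_simp
      rwa [he] at h
    have hne : ¬ IntegrableOn (fun x : ℝ => x ^ (-1 : ℝ)) (Ioo (0:ℝ) ρ) := by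
      rw [intervalIntegral.integrableOn_Ioo_rpow_iff hρ.1]
      norm_num
    apply hne
    apply hinv2.congr_fun _ measurableSet_Ioo
    intro x hx
    exact (Real.rpow_neg_one x).symm
  -- final contradiction
  have hn1 : (0:ℝ) < n - 1 := by linarith
  set P : ℝ := ∫ x in (1/2:ℝ)..(3/4:ℝ), x^K * g x^2 with hPdef
  clear_value P
  set ρ : ℝ := min (1/2 : ℝ) (P/(2*(n-1))) with hρdef
  have hρ0 : 0 < ρ := lt_min (by norm_num) (by positivity)
  have hρmem : ρ ∈ Ioo (0:ℝ) 1 :=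
    ⟨hρ0, lt_of_le_of_lt (min_le_left _ _) (by norm_num)⟩
  obtain ⟨ε, hεmem, hεsmall⟩ := hsmall (P/2) (by positivity) ρ hρmem
  have hε1 : ε ∈ Ioo (0:ℝ) 1 := ⟨hεmem.1, lt_trans hεmem.2 hρmem.2⟩
  have hε12 : ε ≤ 1/2 := le_trans hεmem.2.le (min_le_left _ _)
  have hchain1 : P ≤ ∫ x in ε..1, x^K * g x^2 := hCmono ε hε1 hε12
  have hchain2 := keyF ε hε1
  have hεpow : ε^(K+1) ≤ ε := by
    have h := pow_le_pow_of_le_one hεmem.1.le (le_trans hε12 (by norm_num)) 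
      (show 1 ≤ K+1 by omega)
    simpa using h
  have hεle : ε ≤ P/(2*(n-1)) := le_trans hεmem.2.le (min_le_right _ _)
  have hfin : (n-1) * ε^(K+1) ≤ P/2 := by
    have h1 : (n-1) * ε^(K+1) ≤ (n-1) * ε := by
      apply mul_le_mul_of_nonneg_left hεpow hn1.le
    have h2 : (n-1) * ε ≤ (n-1) * (P/(2*(n-1))) :=
      mul_le_mul_of_nonneg_left hεle hn1.le
    have h3 : (n-1) * (P/(2*(n-1))) = P/2 := by
      field_simp
    linarith
  linarith
end
end

section
/- Instability of the equator map in dimensions 2 ≤ N ≤ 6 (from the proof of Theorem 2.6(b) and the remark following it): Let N be an integer with 2 ≤ N ≤ 6, η > 0, and let W̃ : [0,∞) → ℝ be C² with W̃(0) = 0, W̃ ≥ 0 on [0,∞), W̃'' ≥ 0 on (0,∞). Then there exists a Lipschitz function q : (0,1) → ℝ, not identically zero, compactly supported in (0,1), such that ∫₀¹ ( q'(r)² - ((N-1)/r²) q(r)² + (W̃'(0)/η²) q(r)² ) r^{N-1} dr < 0. -/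
open Set MeasureTheory

noncomputable section

namespace EquatorAux

open Real

lemma maxsq_hasDerivAt (x : ℝ) : HasDerivAt (fun y : ℝ => (max 0 y)^2) (2 * max 0 x) x := by
  rcases lt_trichotomy x 0 with h | h | h
  · have : max 0 x = 0 := max_eq_left h.le
    rw [this, mul_zero]
    have hev : (fun y : ℝ => (max 0 y)^2) =ᶠ[nhds x] (fun _ => 0) := by
      filter_upwards [Iio_mem_nhds h] with y hy
      have : y ≤ 0 := le_of_lt hy
      simp [max_eq_left this]
    exact (hasDerivAt_const x (0:ℝ)).congr_of_eventuallyEq hev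
  · subst h
    rw [max_self, mul_zero]
    rw [hasDerivAt_iff_isLittleO]
    rw [Asymptotics.isLittleO_iff]
    intro ε hε
    filter_upwards [Metric.ball_mem_nhds (0:ℝ) hε] with y hy
    have h1 : |max 0 y| ≤ |y| := by
      rcases le_or_gt y 0 with hy' | hy'
      · simp [max_eq_left hy', abs_nonneg]
      · simp [max_eq_right hy'.le]
    have h2 : |y| < ε := by simpa [Real.dist_eq] using hy
    have : |(max 0 y)^2| ≤ ε * |y| := by
      rw [sq, abs_mul]
      exact mul_le_mul (h1.trans h2.le) h1 (abs_nonneg _) hε.le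
    simpa [Real.norm_eq_abs] using this
  · have : max 0 x = x := max_eq_right h.le
    rw [this]
    have hev : (fun y : ℝ => (max 0 y)^2) =ᶠ[nhds x] (fun y => y^2) := by
      filter_upwards [Ioi_mem_nhds h] with y hy
      have : (0:ℝ) ≤ y := le_of_lt hy
      simp [max_eq_right this]
    have h2 := hasDerivAt_pow 2 x
    have h3 : ((2:ℕ):ℝ) * x ^ (2-1) = 2 * x := by norm_num
    rw [h3] at h2
    exact h2.congr_of_eventuallyEq hev

lemma poly9_hasDerivAt (a0 a1 a2 a3 a4 a5 a6 a7 a8 a9 x : ℝ) :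
    HasDerivAt (fun s : ℝ => a0 + a1*s + a2*s^2 + a3*s^3 + a4*s^4 + a5*s^5 + a6*s^6 + a7*s^7 + a8*s^8 + a9*s^9)
      (a1 + 2*a2*x + 3*a3*x^2 + 4*a4*x^3 + 5*a5*x^4 + 6*a6*x^5 + 7*a7*x^6 + 8*a8*x^7 + 9*a9*x^8) x := by
  have h : ∀ n : ℕ, HasDerivAt (fun s : ℝ => s^n) (n * x^(n-1)) x := fun n => hasDerivAt_pow n x
  have H := ((((((((((hasDerivAt_const x a0).add ((h 1).const_mul a1)).add ((h 2).const_mul a2)).add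
    ((h 3).const_mul a3)).add ((h 4).const_mul a4)).add ((h 5).const_mul a5)).add
    ((h 6).const_mul a6)).add ((h 7).const_mul a7)).add ((h 8).const_mul a8)).add ((h 9).const_mul a9))
  convert H using 1
  · rfl
  · rfl
  · funext s; simp only [Pi.add_apply]; ring
  · push_cast; ring

/-- the bump profile in logarithmic coordinates -/
def bumpE (m r : ℝ) : ℝ := max 0 (4 - (Real.log r - Real.log m)^2)
/-- the test profile on `(0,∞)` -/
def psiE (β m r : ℝ) : ℝ := (bumpE m r)^2 * r ^ (-β)
/-- the globally defined test function -/
def qE (β m r : ℝ) : ℝ := psiE β m (max r (m * Real.exp (-3)))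
/-- the derivative of `psiE` -/
def DE (β m r : ℝ) : ℝ :=
  (2 * bumpE m r * (-(2 * (Real.log r - Real.log m)) * r⁻¹)) * r ^ (-β)
  + (bumpE m r)^2 * (-β * r ^ (-β-1))

variable {β m r : ℝ}

lemma bumpE_eq_zero (hm : 0 < m) (hr : 0 < r)
    (h : r ≤ m * Real.exp (-2) ∨ m * Real.exp 2 ≤ r) : bumpE m r = 0 := by
  have : (Real.log r - Real.log m)^2 ≥ 4 := by
    rcases h with h | h
    · have h1 : Real.log r ≤ Real.log m + (-2) := by
        calc Real.log r ≤ Real.log (m * Real.exp (-2)) := Real.log_le_log hr h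
          _ = Real.log m + (-2) := by rw [Real.log_mul hm.ne' (Real.exp_ne_zero _), Real.log_exp]
      nlinarith [sq_nonneg (Real.log r - Real.log m + 2)]
    · have h1 : Real.log m + 2 ≤ Real.log r := by
        calc Real.log m + 2 = Real.log (m * Real.exp 2) := by
              rw [Real.log_mul hm.ne' (Real.exp_ne_zero _), Real.log_exp]
          _ ≤ Real.log r := Real.log_le_log (by positivity) h
      nlinarith [sq_nonneg (Real.log r - Real.log m - 2)]
  exact max_eq_left (by linarith)

lemma DE_eq_zero (h : bumpE m r = 0) : DE β m r = 0 := by simp [DE, h]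

lemma qE_eq_psiE (hm : 0 < m) (h : m * Real.exp (-3) < r) : qE β m r = psiE β m r := by
  rw [qE, max_eq_left h.le]

lemma qE_eq_zero (hm : 0 < m) (h : r ≤ m * Real.exp (-2)) : qE β m r = 0 := by
  have ha' : (0:ℝ) < m * Real.exp (-3) := by positivity
  have h32 : m * Real.exp (-3) ≤ m * Real.exp (-2) :=
    mul_le_mul_of_nonneg_left (Real.exp_le_exp.2 (by norm_num)) hm.le
  have hb : bumpE m (max r (m * Real.exp (-3))) = 0 := by
    apply bumpE_eq_zero hm (lt_max_of_lt_right ha')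
    exact Or.inl (max_le h h32)
  simp [qE, psiE, hb]

lemma qE_eq_zero' (hm : 0 < m) (h : m * Real.exp 2 ≤ r) : qE β m r = 0 := by
  have ha' : (0:ℝ) < m * Real.exp (-3) := by positivity
  have h1 : m * Real.exp (-3) < r := by
    calc m * Real.exp (-3) < m * Real.exp 2 :=
          (mul_lt_mul_iff_right₀ hm).2 (Real.exp_lt_exp.2 (by norm_num))
      _ ≤ r := h
  rw [qE_eq_psiE hm h1, psiE, bumpE_eq_zero hm (ha'.trans h1) (Or.inr h)]
  simp

lemma psiE_hasDerivAt (hr : 0 < r) : HasDerivAt (psiE β m) (DE β m r) r := by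
  have h1 : HasDerivAt (fun r : ℝ => Real.log r - Real.log m) r⁻¹ r :=
    (Real.hasDerivAt_log hr.ne').sub_const _
  have h2 : HasDerivAt (fun r : ℝ => 4 - (Real.log r - Real.log m)^2)
      (-(2 * (Real.log r - Real.log m)) * r⁻¹) r := by
    have hsq : HasDerivAt (fun x : ℝ => 4 - x^2) (-(2 * (Real.log r - Real.log m)))
        (Real.log r - Real.log m) := by
      have := (hasDerivAt_pow 2 (Real.log r - Real.log m)).const_sub 4
      convert this using 1
      · rfl
      · rfl
      push_cast; ring
    exact hsq.comp (h := fun r : ℝ => Real.log r - Real.log m) r h1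
  have h3 : HasDerivAt (fun r : ℝ => (bumpE m r)^2)
      (2 * bumpE m r * (-(2 * (Real.log r - Real.log m)) * r⁻¹)) r :=
    (maxsq_hasDerivAt (4 - (Real.log r - Real.log m)^2)).comp (h := fun r : ℝ => 4 - (Real.log r - Real.log m)^2) r h2
  have h4 : HasDerivAt (fun r : ℝ => r ^ (-β)) (-β * r ^ (-β-1)) r :=
    Real.hasDerivAt_rpow_const (Or.inl hr.ne')
  exact h3.mul h4

lemma qE_hasDerivAt (hm : 0 < m) (h : m * Real.exp (-3) < r) :
    HasDerivAt (qE β m) (DE β m r) r := by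
  have hr0 : 0 < r := lt_trans (by positivity) h
  have hev : qE β m =ᶠ[nhds r] psiE β m := by
    filter_upwards [Ioi_mem_nhds h] with y hy
    exact qE_eq_psiE hm hy
  exact (psiE_hasDerivAt hr0).congr_of_eventuallyEq hev

lemma qE_hasDerivAt_zero (hm : 0 < m) (h : r < m * Real.exp (-2)) :
    HasDerivAt (qE β m) 0 r := by
  have hev : qE β m =ᶠ[nhds r] (fun _ => 0) := by
    filter_upwards [Iio_mem_nhds h] with y hy
    exact qE_eq_zero hm (le_of_lt hy)
  exact (hasDerivAt_const r (0:ℝ)).congr_of_eventuallyEq hev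

lemma a3_lt_a2 (hm : 0 < m) : m * Real.exp (-3) < m * Real.exp (-2) :=
  (mul_lt_mul_iff_right₀ hm).2 (Real.exp_lt_exp.2 (by norm_num))

lemma qE_differentiable (hm : 0 < m) : Differentiable ℝ (qE β m) := by
  intro x
  rcases lt_or_ge x (m * Real.exp (-2)) with h | h
  · exact (qE_hasDerivAt_zero hm h).differentiableAt
  · exact (qE_hasDerivAt hm ((a3_lt_a2 hm).trans_le h)).differentiableAt

lemma bumpE_le_four : bumpE m r ≤ 4 := by
  have : 4 - (Real.log r - Real.log m)^2 ≤ 4 := by nlinarith [sq_nonneg (Real.log r - Real.log m)]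
  exact max_le (by norm_num) this

lemma bumpE_nonneg : 0 ≤ bumpE m r := le_max_left _ _

lemma rpow_anti {a e r : ℝ} (h0 : 0 < a) (h : a ≤ r) (he : 0 ≤ e) : r ^ (-e) ≤ a ^ (-e) := by
  have hr0 : 0 < r := h0.trans_le h
  rw [Real.rpow_neg hr0.le, Real.rpow_neg h0.le]
  exact inv_anti₀ (Real.rpow_pos_of_pos h0 e) (Real.rpow_le_rpow h0.le h he)

lemma DE_bound (hm : 0 < m) (hβ : 0 ≤ β) (hr : m * Real.exp (-3) ≤ r) :
    |DE β m r| ≤ (32 + 16*β) * (m * Real.exp (-3)) ^ (-β-1) := by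
  set a' := m * Real.exp (-3) with ha'
  have ha'0 : 0 < a' := by positivity
  have hr0 : 0 < r := ha'0.trans_le hr
  have hrp : (0:ℝ) < r ^ (-β-1) := Real.rpow_pos_of_pos hr0 _
  have hap : (0:ℝ) < a' ^ (-β-1) := Real.rpow_pos_of_pos ha'0 _
  have hRle : r ^ (-β-1) ≤ a' ^ (-β-1) := by
    have := rpow_anti ha'0 hr (by linarith : (0:ℝ) ≤ β + 1)
    rwa [show -(β+1) = -β-1 by ring] at this
  rcases eq_or_ne (bumpE m r) 0 with hb | hb
  · rw [DE_eq_zero hb, abs_zero]; positivity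
  · have hs : (Real.log r - Real.log m)^2 ≤ 4 := by
      by_contra hc
      push_neg at hc
      exact hb (max_eq_left (by linarith))
    set s := Real.log r - Real.log m with hsdef
    have habs : |s| ≤ 2 := by nlinarith [sq_abs s, abs_nonneg s]
    have key : DE β m r = (2 * bumpE m r * (-(2*s))) * r^(-β-1)
        + ((bumpE m r)^2 * (-β)) * r^(-β-1) := by
      rw [DE, show -β = -β-1+1 by ring, Real.rpow_add_one hr0.ne']
      field_simp
      rw [hsdef]; ring
    rw [key]
    have hB4 : bumpE m r ≤ 4 := bumpE_le_four
    have hB0 : 0 ≤ bumpE m r := bumpE_nonneg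
    obtain ⟨hs1, hs2⟩ := abs_le.mp habs
    have hA1 : |(2 * bumpE m r * (-(2*s))) * r^(-β-1)| ≤ 32 * r^(-β-1) := by
      rw [abs_le]
      constructor <;>
      nlinarith [hrp.le, mul_nonneg (mul_nonneg (sub_nonneg.2 hB4) (by linarith : (0:ℝ) ≤ 2 - s)) hrp.le,
        mul_nonneg (mul_nonneg hB0 (by linarith : (0:ℝ) ≤ 2 - s)) hrp.le,
        mul_nonneg (mul_nonneg (sub_nonneg.2 hB4) (by linarith : (0:ℝ) ≤ s + 2)) hrp.le,
        mul_nonneg (mul_nonneg hB0 (by linarith : (0:ℝ) ≤ s + 2)) hrp.le]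
    have hA2 : |((bumpE m r)^2 * (-β)) * r^(-β-1)| ≤ 16 * β * r^(-β-1) := by
      rw [abs_le]
      have h16 : (0:ℝ) ≤ 16 - (bumpE m r)^2 := by nlinarith
      constructor <;>
      nlinarith [mul_nonneg (mul_nonneg (sq_nonneg (bumpE m r)) hβ) hrp.le,
        mul_nonneg (mul_nonneg h16 hβ) hrp.le]
    calc |(2 * bumpE m r * (-(2*s))) * r^(-β-1) + ((bumpE m r)^2 * (-β)) * r^(-β-1)|
        ≤ |(2 * bumpE m r * (-(2*s))) * r^(-β-1)| + |((bumpE m r)^2 * (-β)) * r^(-β-1)| :=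
          abs_add_le _ _
      _ ≤ 32 * r^(-β-1) + 16 * β * r^(-β-1) := add_le_add hA1 hA2
      _ = (32 + 16*β) * r^(-β-1) := by ring
      _ ≤ (32 + 16*β) * a' ^ (-β-1) := by nlinarith

/-- explicit antiderivative polynomial for the main part -/
def Hpoly (β c s : ℝ) : ℝ :=
  (-256*β) + (256*(β^2-c))*s + (256*β)*s^2 + (256/3 - 256/3*(β^2-c))*s^3
  + (-96*β)*s^4 + (-128/5 + 96/5*(β^2-c))*s^5 + (16*β)*s^6
  + (16/7 - 16/7*(β^2-c))*s^7 + (-β)*s^8 + ((β^2-c)/9)*s^9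

def HDpoly (β c x : ℝ) : ℝ :=
  (256*(β^2-c)) + 2*(256*β)*x + 3*(256/3 - 256/3*(β^2-c))*x^2 + 4*(-96*β)*x^3
  + 5*(-128/5 + 96/5*(β^2-c))*x^4 + 6*(16*β)*x^5 + 7*(16/7 - 16/7*(β^2-c))*x^6
  + 8*(-β)*x^7 + 9*((β^2-c)/9)*x^8

lemma Hpoly_hasDerivAt (β c x : ℝ) : HasDerivAt (Hpoly β c) (HDpoly β c x) x :=
  poly9_hasDerivAt _ _ _ _ _ _ _ _ _ _ x

/-- explicit antiderivative polynomial for the mass term -/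
def Tpoly (s : ℝ) : ℝ :=
  (499/4) + (13/2)*s + (-(13/2))*s^2 + (-81)*s^3 + (81/2)*s^4 + 3*s^5
  + (-1)*s^6 + (-2)*s^7 + (1/2)*s^8 + 0*s^9

def TDpoly (x : ℝ) : ℝ :=
  (13/2) + 2*(-(13/2))*x + 3*(-81)*x^2 + 4*(81/2)*x^3 + 5*3*x^4 + 6*(-1)*x^5
  + 7*(-2)*x^6 + 8*(1/2)*x^7 + 9*0*x^8

lemma Tpoly_hasDerivAt (x : ℝ) : HasDerivAt Tpoly (TDpoly x) x :=
  poly9_hasDerivAt _ _ _ _ _ _ _ _ _ _ x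

end EquatorAux


set_option maxHeartbeats 2000000 in
open EquatorAux in
/-- **Instability of the equator map in dimensions `2 ≤ N ≤ 6`** (from the
proof of Theorem 2.6(b)): there is a nonzero Lipschitz function `q` compactly
supported in `(0,1)` making the second variation of the reduced micromagnetic
energy at the equator profile negative. -/
theorem equator_map_instability
    (N : ℕ) (hN2 : 2 ≤ N) (hN6 : N ≤ 6) (η : ℝ) (hη : 0 < η)
    (Wt Wt' Wt'' : ℝ → ℝ)
    (hV1 : ∀ t ∈ Ici (0:ℝ), HasDerivWithinAt Wt (Wt' t) (Ici 0) t)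
    (hV2 : ∀ t ∈ Ici (0:ℝ), HasDerivWithinAt Wt' (Wt'' t) (Ici 0) t)
    (hV2c : ContinuousOn Wt'' (Ici 0))
    (hV0 : Wt 0 = 0)
    (hVnn : ∀ t ∈ Ici (0:ℝ), 0 ≤ Wt t)
    (hVcv : ∀ t ∈ Ioi (0:ℝ), 0 ≤ Wt'' t)
    :
    ∃ q : ℝ → ℝ,
      (∃ K : NNReal, LipschitzWith K q) ∧
      (∃ r : ℝ, q r ≠ 0) ∧
      HasCompactSupport q ∧
      tsupport q ⊆ Ioo 0 1 ∧
      ∫ r in Ioo (0:ℝ) 1,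
          (deriv q r ^ 2 - ((N:ℝ) - 1) / r ^ 2 * q r ^ 2
            + Wt' 0 / η ^ 2 * q r ^ 2) * r ^ (N - 1) < 0 := by
  classical
  set A : ℝ := Wt' 0 / η^2 with hA
  set β : ℝ := ((N:ℝ) - 2)/2 with hβ
  set c : ℝ := (N:ℝ) - 1 with hc
  have hN2' : (2:ℝ) ≤ (N:ℝ) := by exact_mod_cast hN2
  have hN6' : ((N:ℝ)) ≤ 6 := by exact_mod_cast hN6
  have hβ0 : 0 ≤ β := by rw [hβ]; linarith
  have hcβ : 1 ≤ c - β^2 := by rw [hc, hβ]; nlinarith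
  set b0 : ℝ := 1/(4*(|A|+1)) with hb0
  have hAnn : 0 ≤ |A| := abs_nonneg A
  have hb0pos : 0 < b0 := by rw [hb0]; positivity
  set m : ℝ := b0 * Real.exp (-2) with hm
  have hm0 : 0 < m := by rw [hm]; positivity
  set a : ℝ := m * Real.exp (-2) with ha
  set bb : ℝ := m * Real.exp 2 with hbb
  have ha0 : 0 < a := by rw [ha]; positivity
  have hbb0 : 0 < bb := by rw [hbb]; positivity
  have hab : a < bb := by
    rw [ha, hbb]
    exact (mul_lt_mul_iff_right₀ hm0).2 (Real.exp_lt_exp.2 (by norm_num))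
  have hbb_eq : bb = b0 := by
    rw [hbb, hm, mul_assoc, ← Real.exp_add]
    norm_num
  have hbb1 : bb < 1 := by
    rw [hbb_eq, hb0]
    rw [div_lt_one (by positivity)]
    nlinarith
  have haa' : m * Real.exp (-3) < a := a3_lt_a2 hm0
  -- the five claims
  refine ⟨qE β m, ?_, ?_, ?_, ?_, ?_⟩
  · -- Lipschitz
    refine ⟨((32 + 16*β) * (m * Real.exp (-3)) ^ (-β-1)).toNNReal, ?_⟩
    apply lipschitzWith_of_nnnorm_deriv_le (qE_differentiable hm0)
    intro x
    have hK0 : 0 ≤ (32 + 16*β) * (m * Real.exp (-3)) ^ (-β-1) := by positivity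
    have hb : |deriv (qE β m) x| ≤ (32 + 16*β) * (m * Real.exp (-3)) ^ (-β-1) := by
      rcases lt_or_ge x (m * Real.exp (-2)) with h | h
      · rw [(qE_hasDerivAt_zero hm0 h).deriv, abs_zero]
        exact hK0
      · rw [(qE_hasDerivAt hm0 ((a3_lt_a2 hm0).trans_le h)).deriv]
        exact DE_bound hm0 hβ0 ((a3_lt_a2 hm0).le.trans h)
    rw [← NNReal.coe_le_coe, coe_nnnorm, Real.norm_eq_abs, Real.coe_toNNReal _ hK0]
    exact hb
  · -- not identically zero
    refine ⟨m, ?_⟩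
    have h1 : m * Real.exp (-3) < m := by
      nlinarith [Real.exp_lt_one_iff.2 (show (-3:ℝ) < 0 by norm_num), hm0]
    rw [qE_eq_psiE hm0 h1, psiE, bumpE]
    have : Real.log m - Real.log m = 0 := by ring
    rw [this]
    have h2 : max (0:ℝ) (4 - 0^2) = 4 := by norm_num
    rw [h2]
    have := Real.rpow_pos_of_pos hm0 (-β)
    positivity
  · -- compact support
    apply HasCompactSupport.intro (isCompact_Icc (a := a) (b := bb))
    intro x hx
    simp only [mem_Icc, not_and_or, not_le] at hx
    rcases hx with hx | hx
    · exact qE_eq_zero hm0 (by rw [← ha]; exact hx.le)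
    · exact qE_eq_zero' hm0 (by rw [← hbb]; exact hx.le)
  · -- tsupport
    have hsupp : Function.support (qE β m) ⊆ Icc a bb := by
      intro x hx
      simp only [Function.mem_support] at hx
      constructor
      · by_contra h
        push_neg at h
        exact hx (qE_eq_zero hm0 (by rw [← ha]; exact h.le))
      · by_contra h
        push_neg at h
        exact hx (qE_eq_zero' hm0 (by rw [← hbb]; exact h.le))
    have h1 : tsupport (qE β m) ⊆ Icc a bb := closure_minimal hsupp isClosed_Icc
    exact h1.trans (Icc_subset_Ioo ha0 hbb1)
  · -- the integral
    have hcast : ((N-1:ℕ):ℝ) = (N:ℝ)-1 := by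
      have h1 : (1:ℕ) ≤ N := by omega
      push_cast [Nat.cast_sub h1]
      ring
    -- zero off (a, bb)
    have hqz : ∀ r : ℝ, r ∉ Ioo a bb → qE β m r = 0 := by
      intro r hr
      rw [mem_Ioo, not_and_or] at hr
      rcases hr with h | h
      · push_neg at h
        exact qE_eq_zero hm0 (by rw [← ha]; exact h)
      · push_neg at h
        exact qE_eq_zero' hm0 (by rw [← hbb]; exact h)
    have hdz : ∀ r : ℝ, 0 < r → r ∉ Ioo a bb → deriv (qE β m) r = 0 := by
      intro r hr0 hr
      rw [mem_Ioo, not_and_or] at hr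
      rcases hr with h | h
      · push_neg at h
        rcases lt_or_eq_of_le h with h' | h'
        · exact (qE_hasDerivAt_zero hm0 (by rw [← ha]; exact h')).deriv
        · subst h'
          rw [(qE_hasDerivAt hm0 haa').deriv]
          exact DE_eq_zero (bumpE_eq_zero hm0 ha0 (Or.inl (by rw [← ha])))
      · push_neg at h
        rw [(qE_hasDerivAt hm0 (haa'.trans (lt_of_lt_of_le hab h))).deriv]
        exact DE_eq_zero (bumpE_eq_zero hm0 hr0 (Or.inr (by rw [← hbb]; exact h)))
    have hsub : Ioo a bb ⊆ Ioo (0:ℝ) 1 := fun x hx => ⟨ha0.trans hx.1, hx.2.trans hbb1⟩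
    -- step 1: restrict to (a, bb)
    have step1 : (∫ r in Ioo (0:ℝ) 1,
          (deriv (qE β m) r ^ 2 - c / r ^ 2 * qE β m r ^ 2 + A * qE β m r ^ 2) * r ^ (N - 1))
        = ∫ r in Ioo a bb,
          (deriv (qE β m) r ^ 2 - c / r ^ 2 * qE β m r ^ 2 + A * qE β m r ^ 2) * r ^ (N - 1) := by
      rw [setIntegral_congr_fun (measurableSet_Ioo)
        (g := (Ioo a bb).indicator (fun r =>
          (deriv (qE β m) r ^ 2 - c / r ^ 2 * qE β m r ^ 2 + A * qE β m r ^ 2) * r ^ (N - 1)))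
        (fun r hr => ?_)]
      · rw [MeasureTheory.integral_indicator measurableSet_Ioo,
          Measure.restrict_restrict measurableSet_Ioo, inter_eq_left.2 hsub]
      · by_cases h : r ∈ Ioo a bb
        · rw [indicator_of_mem h]
        · rw [indicator_of_notMem h, hqz r h, hdz r hr.1 h]
          ring
    have step2 : (∫ r in Ioo a bb,
          (deriv (qE β m) r ^ 2 - c / r ^ 2 * qE β m r ^ 2 + A * qE β m r ^ 2) * r ^ (N - 1))
        = ∫ r in a..bb,
          (deriv (qE β m) r ^ 2 - c / r ^ 2 * qE β m r ^ 2 + A * qE β m r ^ 2) * r ^ (N - 1) := by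
      rw [intervalIntegral.integral_of_le hab.le, MeasureTheory.integral_Ioc_eq_integral_Ioo]
    -- FTC
    set Φ : ℝ → ℝ := fun r => Hpoly β c (Real.log r - Real.log m)
      + A * (r^2 * Tpoly (Real.log r - Real.log m)) with hΦdef
    have hderivΦ : ∀ r ∈ Icc a bb, HasDerivAt Φ
        ((deriv (qE β m) r ^ 2 - c / r ^ 2 * qE β m r ^ 2 + A * qE β m r ^ 2) * r ^ (N - 1)) r := by
      intro r hr
      obtain ⟨hra, hrb⟩ := hr
      have hr0 : 0 < r := ha0.trans_le hra
      set s := Real.log r - Real.log m with hs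
      have hsa : -2 ≤ s := by
        have h1 : Real.log a ≤ Real.log r := Real.log_le_log ha0 hra
        rw [ha, Real.log_mul hm0.ne' (Real.exp_ne_zero _), Real.log_exp] at h1
        rw [hs]; linarith
      have hsb : s ≤ 2 := by
        have h1 : Real.log r ≤ Real.log bb := Real.log_le_log hr0 hrb
        rw [hbb, Real.log_mul hm0.ne' (Real.exp_ne_zero _), Real.log_exp] at h1
        rw [hs]; linarith
      have hbump : bumpE m r = 4 - s^2 := by
        rw [bumpE, ← hs]
        exact max_eq_right (by nlinarith)
      have hq : qE β m r = (4 - s^2)^2 * r ^ (-β) := by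
        rw [qE_eq_psiE hm0 (haa'.trans_le hra), psiE, hbump]
      have hDr : deriv (qE β m) r = DE β m r := (qE_hasDerivAt hm0 (haa'.trans_le hra)).deriv
      have hDE2 : DE β m r = (2*(4-s^2)*(-(2*s)*r⁻¹)) * r^(-β) + (4-s^2)^2*(-β*r^(-β-1)) := by
        rw [DE, hbump, ← hs]
      -- derivative of Φ
      have hlog : HasDerivAt (fun t : ℝ => Real.log t - Real.log m) r⁻¹ r :=
        (Real.hasDerivAt_log hr0.ne').sub_const _
      have hH : HasDerivAt (fun t : ℝ => Hpoly β c (Real.log t - Real.log m))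
          (HDpoly β c s * r⁻¹) r := (Hpoly_hasDerivAt β c s).comp (h := fun t : ℝ => Real.log t - Real.log m) r hlog
      have hT : HasDerivAt (fun t : ℝ => Tpoly (Real.log t - Real.log m))
          (TDpoly s * r⁻¹) r := (Tpoly_hasDerivAt s).comp (h := fun t : ℝ => Real.log t - Real.log m) r hlog
      have hr2 : HasDerivAt (fun t : ℝ => t^2) (2*r) r := by
        have h2 := hasDerivAt_pow 2 r
        have h3 : ((2:ℕ):ℝ) * r ^ (2-1) = 2 * r := by norm_num
        rwa [h3] at h2
      have hΦ' : HasDerivAt Φ (HDpoly β c s * r⁻¹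
          + A * (2*r * Tpoly s + r^2 * (TDpoly s * r⁻¹))) r := by
        rw [hΦdef]
        exact hH.add ((hr2.mul hT).const_mul A)
      -- identify the derivative values
      have hv : r ^ (-β-1) = r^(-β) * r⁻¹ := by
        rw [show -β-1 = -β + (-1) by ring, Real.rpow_add hr0, Real.rpow_neg_one]
      have e1 : r ^ ((N:ℝ)-1) * r^(-β) * r^(-β) = r := by
        rw [← Real.rpow_add hr0, ← Real.rpow_add hr0,
          show (N:ℝ)-1 + -β + -β = 1 by rw [hβ]; ring, Real.rpow_one]
      have keyeq : (deriv (qE β m) r ^ 2 - c / r ^ 2 * qE β m r ^ 2 + A * qE β m r ^ 2) * r ^ (N - 1)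
          = HDpoly β c s * r⁻¹ + A * (2*r * Tpoly s + r^2 * (TDpoly s * r⁻¹)) := by
        calc (deriv (qE β m) r ^ 2 - c / r ^ 2 * qE β m r ^ 2 + A * qE β m r ^ 2) * r ^ (N - 1)
            = (r ^ ((N:ℝ)-1) * r^(-β) * r^(-β)) *
              (((2*(4-s^2)*(-(2*s)*r⁻¹)) + (4-s^2)^2*(-β)*r⁻¹)^2
                + (A - c/r^2)*(4-s^2)^4) := by
              rw [hDr, hDE2, hq, ← Real.rpow_natCast r (N-1), hcast, hv]
              ring
          _ = r * (((2*(4-s^2)*(-(2*s)*r⁻¹)) + (4-s^2)^2*(-β)*r⁻¹)^2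
                + (A - c/r^2)*(4-s^2)^4) := by rw [e1]
          _ = HDpoly β c s * r⁻¹ + A * (2*r * Tpoly s + r^2 * (TDpoly s * r⁻¹)) := by
              have hrr : r * r⁻¹ = 1 := mul_inv_cancel₀ hr0.ne'
              simp only [HDpoly, Tpoly, TDpoly]
              linear_combination (((-4*s*(4-s^2) - β*(4-s^2)^2)^2 - c*(4-s^2)^4) * r⁻¹
                - A * ((13/2) + 2*(-(13/2))*s + 3*(-81)*s^2 + 4*(81/2)*s^3 + 5*3*s^4
                  + 6*(-1)*s^5 + 7*(-2)*s^6 + 8*(1/2)*s^7 + 9*0*s^8) * r) * hrr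
      rw [keyeq]
      exact hΦ'
    -- integrability
    have hS0 : ∀ x ∈ Icc a bb, x ≠ 0 := fun x hx => (ha0.trans_le hx.1).ne'
    have hclog : ContinuousOn Real.log (Icc a bb) :=
      Real.continuousOn_log.mono (fun x hx => hS0 x hx)
    have hL : ContinuousOn (fun r : ℝ => Real.log r - Real.log m) (Icc a bb) :=
      hclog.sub continuousOn_const
    have hbumpc : ContinuousOn (bumpE m) (Icc a bb) := by
      have h4 : ContinuousOn (fun r : ℝ => 4 - (Real.log r - Real.log m)^2) (Icc a bb) :=
        continuousOn_const.sub (hL.pow 2)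
      exact (continuous_const.max continuous_id).comp_continuousOn h4
    have hrpow1 : ContinuousOn (fun r : ℝ => r ^ (-β)) (Icc a bb) := fun x hx =>
      (Real.continuousAt_rpow_const x (-β) (Or.inl (hS0 x hx))).continuousWithinAt
    have hrpow2 : ContinuousOn (fun r : ℝ => r ^ (-β-1)) (Icc a bb) := fun x hx =>
      (Real.continuousAt_rpow_const x (-β-1) (Or.inl (hS0 x hx))).continuousWithinAt
    have hinvc : ContinuousOn (fun r : ℝ => r⁻¹) (Icc a bb) :=
      continuousOn_inv₀.mono (fun x hx => hS0 x hx)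
    have hpsic : ContinuousOn (psiE β m) (Icc a bb) := (hbumpc.pow 2).mul hrpow1
    have hDEc : ContinuousOn (DE β m) (Icc a bb) := by
      have h1 : ContinuousOn (fun r : ℝ => -(2 * (Real.log r - Real.log m)) * r⁻¹) (Icc a bb) :=
        (continuousOn_const.mul hL).neg.mul hinvc
      exact (((continuousOn_const.mul hbumpc).mul h1).mul hrpow1).add
        ((hbumpc.pow 2).mul (continuousOn_const.mul hrpow2))
    have hGc : ContinuousOn (fun r : ℝ =>
        ((DE β m r)^2 - c/r^2 * (psiE β m r)^2 + A * (psiE β m r)^2) * r^(N-1)) (Icc a bb) :=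
      (((hDEc.pow 2).sub ((continuousOn_const.div ((continuous_pow 2).continuousOn)
        (fun x hx => pow_ne_zero 2 (hS0 x hx))).mul (hpsic.pow 2))).add
        (continuousOn_const.mul (hpsic.pow 2))).mul ((continuous_pow (N-1)).continuousOn)
    have hEq : EqOn (fun r : ℝ => (deriv (qE β m) r ^ 2 - c / r ^ 2 * qE β m r ^ 2
          + A * qE β m r ^ 2) * r ^ (N - 1))
        (fun r : ℝ => ((DE β m r)^2 - c/r^2 * (psiE β m r)^2 + A * (psiE β m r)^2) * r^(N-1))
        (Icc a bb) := by
      intro r hr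
      simp only
      rw [(qE_hasDerivAt hm0 (haa'.trans_le hr.1)).deriv, qE_eq_psiE hm0 (haa'.trans_le hr.1)]
    have hInt : IntervalIntegrable (fun r : ℝ => (deriv (qE β m) r ^ 2
        - c / r ^ 2 * qE β m r ^ 2 + A * qE β m r ^ 2) * r ^ (N - 1)) volume a bb := by
      apply ContinuousOn.intervalIntegrable
      rw [uIcc_of_le hab.le]
      exact hGc.congr hEq
    have hFTC : (∫ r in a..bb, (deriv (qE β m) r ^ 2 - c / r ^ 2 * qE β m r ^ 2
          + A * qE β m r ^ 2) * r ^ (N - 1)) = Φ bb - Φ a :=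
      intervalIntegral.integral_eq_sub_of_hasDerivAt
        (fun r hr => hderivΦ r (by rwa [uIcc_of_le hab.le] at hr)) hInt
    -- evaluate
    have hsbb : Real.log bb - Real.log m = 2 := by
      rw [hbb, Real.log_mul hm0.ne' (Real.exp_ne_zero _), Real.log_exp]; ring
    have hsa2 : Real.log a - Real.log m = -2 := by
      rw [ha, Real.log_mul hm0.ne' (Real.exp_ne_zero _), Real.log_exp]; ring
    have hval : Φ bb - Φ a = (32768/105 + (β^2-c)*(131072/315))
        + A*(bb^2*(63/4) - a^2*(6423/4)) := by
      rw [hΦdef]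
      simp only [hsbb, hsa2, Hpoly, Tpoly]
      ring
    -- final bounds
    have habs2 : |A| * bb^2 ≤ 1/64 := by
      have h1 : (0:ℝ) < (4*(|A|+1))^2 := by positivity
      rw [hbb_eq, hb0, div_pow, one_pow, mul_one_div, div_le_div_iff₀ h1 (by norm_num : (0:ℝ) < 64)]
      nlinarith [sq_nonneg (|A| - 1)]
    have haa2 : |A| * a^2 ≤ 1/64 := by
      nlinarith [ha0, hab, habs2, abs_nonneg A]
    have hmass : A*(bb^2*(63/4) - a^2*(6423/4)) ≤ 6486/256 := by
      nlinarith [habs2, haa2, mul_nonneg (sub_nonneg.2 (le_abs_self A)) (sq_nonneg bb),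
        mul_nonneg (by linarith [neg_abs_le A] : (0:ℝ) ≤ A + |A|) (sq_nonneg a)]
    have hH2 : 32768/105 + (β^2-c)*(131072/315) ≤ -32768/315 := by nlinarith [hcβ]
    rw [step1, step2, hFTC, hval]
    linarith [hmass, hH2]
end
end

section
/- Hardy decomposition identity for the zero mode of the second variation (Lemma 3.2): Let N ≥ 2 be an integer, ε > 0, η > 0, let W : (-∞,1] → ℝ and W̃ : [0,∞) → ℝ be of class C². Suppose f, g are C² functions on (0,1) satisfying, on (0,1), f'' + ((N-1)/r) f' - ((N-1)/r²) f = -(1/ε²) W'(1 - f² - g²) f and g'' + ((N-1)/r) g' = -(1/ε²) W'(1 - f² - g²) g + (1/η²) W̃'(g²) g, with f(r) > 0 and g(r) > 0 for all r ∈ (0,1). Then for all s, q ∈ C_c^∞((0,1)): ∫₀¹ r^{N-1} [ (s')² + ((N-1)/r²) s² + (q')² - (1/ε²) W'(1 - f² - g²)(s² + q²) + (1/η²) W̃'(g²) q² ] dr = ∫₀¹ r^{N-1} [ f² ((s/f)')² + g² ((q/g)')² ] dr. -/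
open Set MeasureTheory

noncomputable section

/-- Pattern lemma: a function continuous on `(0,1)` and vanishing off the
(compact) support of `s` is globally continuous and integrable. -/
theorem hardy_aux_integrable (s : ℝ → ℝ) (hscs : HasCompactSupport s)
    (hssup : tsupport s ⊆ Ioo 0 1) (h : ℝ → ℝ)
    (hc : ContinuousOn h (Ioo 0 1)) (h0 : ∀ r ∉ tsupport s, h r = 0) :
    Continuous h ∧ Integrable h := by
  have hcont : Continuous h := by
    rw [continuous_iff_continuousAt]
    intro x
    by_cases hx : x ∈ Ioo (0:ℝ) 1
    · exact hc.continuousAt (isOpen_Ioo.mem_nhds hx)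
    · have hx' : x ∉ tsupport s := fun hh => hx (hssup hh)
      have hev : h =ᶠ[nhds x] fun _ => 0 :=
        Filter.eventually_of_mem ((isClosed_tsupport s).isOpen_compl.mem_nhds hx')
          fun y hy => h0 y hy
      exact continuousAt_const.congr hev.symm
  exact ⟨hcont, hcont.integrable_of_hasCompactSupport
    (HasCompactSupport.intro hscs fun x hx => h0 x hx)⟩

/-- One-field Hardy decomposition on `(0,1)`. -/
theorem hardy_aux (N : ℕ) (hN : 2 ≤ N) (f f' f'' c : ℝ → ℝ)
    (hf1 : ∀ r ∈ Ioo (0:ℝ) 1, HasDerivAt f (f' r) r)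
    (hf2 : ∀ r ∈ Ioo (0:ℝ) 1, HasDerivAt f' (f'' r) r)
    (hf2c : ContinuousOn f'' (Ioo 0 1))
    (hcc : ContinuousOn c (Ioo 0 1))
    (hode : ∀ r ∈ Ioo (0:ℝ) 1, f'' r + ((N:ℝ) - 1) / r * f' r = c r * f r)
    (hfpos : ∀ r ∈ Ioo (0:ℝ) 1, 0 < f r)
    (s : ℝ → ℝ) (hs : ContDiff ℝ (⊤:ℕ∞) s) (hscs : HasCompactSupport s)
    (hssup : tsupport s ⊆ Ioo 0 1) :
    Integrable (fun r => r ^ (N-1) * (f r^2 * (deriv (fun t => s t / f t) r)^2)) ∧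
    ∫ r in Ioo (0:ℝ) 1, r ^ (N-1) * (deriv s r ^2 + c r * s r ^2)
      = ∫ r in Ioo (0:ℝ) 1, r ^ (N-1) * (f r^2 * (deriv (fun t => s t / f t) r)^2) := by
  have h1top : (1 : WithTop ℕ∞) ≤ ((⊤:ℕ∞) : WithTop ℕ∞) := by exact_mod_cast le_top
  have sdiff : Differentiable ℝ s := hs.differentiable (by simp)
  have scont : Continuous s := hs.continuous
  have sdc : Continuous (deriv s) := hs.continuous_deriv h1top
  have hs0 : ∀ r ∉ tsupport s, s r = 0 := fun r hr => image_eq_zero_of_notMem_tsupport hr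
  have hds0 : ∀ r ∉ tsupport s, deriv s r = 0 := fun r hr =>
    Function.notMem_support.mp fun h => hr (support_deriv_subset h)
  have hcf : ContinuousOn f (Ioo 0 1) := fun r hr =>
    (hf1 r hr).continuousAt.continuousWithinAt
  have hcf' : ContinuousOn f' (Ioo 0 1) := fun r hr =>
    (hf2 r hr).continuousAt.continuousWithinAt
  have hfne : ∀ r ∈ Ioo (0:ℝ) 1, f r ≠ 0 := fun r hr => (hfpos r hr).ne'
  -- derivative of the quotient
  have hud : ∀ r ∈ Ioo (0:ℝ) 1,
      HasDerivAt (fun t => s t / f t) ((deriv s r * f r - s r * f' r) / f r ^ 2) r :=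
    fun r hr => ((sdiff r).hasDerivAt).div (hf1 r hr) (hfne r hr)
  have hu0 : ∀ r ∉ tsupport s, deriv (fun t => s t / f t) r = 0 := by
    intro r hr
    have hev : (fun t => s t / f t) =ᶠ[nhds r] fun _ => 0 :=
      Filter.eventually_of_mem ((isClosed_tsupport s).isOpen_compl.mem_nhds hr)
        fun y hy => by simp [hs0 y hy]
    rw [hev.deriv_eq]
    simp
  -- the boundary-term function and its derivative
  set F : ℝ → ℝ := fun t => t ^ (N-1) * (f' t / f t) * s t ^ 2 with hFdef
  set DF : ℝ → ℝ := fun r =>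
      (((N-1 : ℕ) : ℝ) * r ^ (N-1-1) * (f' r / f r)
        + r ^ (N-1) * ((f'' r * f r - f' r * f' r) / f r ^ 2)) * s r ^ 2
      + r ^ (N-1) * (f' r / f r) * (((2:ℕ):ℝ) * s r ^ (2-1) * deriv s r) with hDFdef
  have hFder : ∀ r ∈ Ioo (0:ℝ) 1, HasDerivAt F (DF r) r := by
    intro r hr
    exact ((hasDerivAt_pow (N-1) r).mul
      ((hf2 r hr).div (hf1 r hr) (hfne r hr))).mul ((sdiff r).hasDerivAt.pow 2)
  have hF0 : ∀ r ∉ tsupport s, F r = 0 := fun r hr => by simp [hFdef, hs0 r hr]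
  have hdF0 : ∀ r ∉ tsupport s, deriv F r = 0 := by
    intro r hr
    have hev : F =ᶠ[nhds r] fun _ => 0 :=
      Filter.eventually_of_mem ((isClosed_tsupport s).isOpen_compl.mem_nhds hr)
        fun y hy => hF0 y hy
    rw [hev.deriv_eq]; simp
  have hdF : ∀ r ∈ Ioo (0:ℝ) 1, deriv F r = DF r := fun r hr => (hFder r hr).deriv
  have hFdiff : Differentiable ℝ F := by
    intro x
    by_cases hx : x ∈ Ioo (0:ℝ) 1
    · exact (hFder x hx).differentiableAt
    · have hx' : x ∉ tsupport s := fun hh => hx (hssup hh)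
      have hev : F =ᶠ[nhds x] fun _ => 0 :=
        Filter.eventually_of_mem ((isClosed_tsupport s).isOpen_compl.mem_nhds hx')
          fun y hy => hF0 y hy
      exact hev.differentiableAt_iff.mpr (differentiable_const (0:ℝ) x)
  -- continuity of the various integrands on (0,1)
  have hcDF : ContinuousOn DF (Ioo 0 1) := by
    apply ContinuousOn.add
    · apply ContinuousOn.mul
      · apply ContinuousOn.add
        · exact (continuousOn_const.mul (continuous_pow _).continuousOn).mul
            (hcf'.div hcf hfne)
        · exact (continuous_pow _).continuousOn.mul
            (((hf2c.mul hcf).sub (hcf'.mul hcf')).div (hcf.pow 2)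
              fun r hr => pow_ne_zero _ (hfne r hr))
      · exact (scont.pow 2).continuousOn
    · exact ((continuous_pow _).continuousOn.mul (hcf'.div hcf hfne)).mul
        ((continuous_const.mul (scont.pow (2-1))).mul sdc).continuousOn
  have hcderivF : ContinuousOn (deriv F) (Ioo 0 1) := hcDF.congr hdF
  set L : ℝ → ℝ := fun r => r ^ (N-1) * (deriv s r ^2 + c r * s r ^2) with hLdef
  set R : ℝ → ℝ := fun r =>
    r ^ (N-1) * (f r^2 * (deriv (fun t => s t / f t) r)^2) with hRdef
  have hcL : ContinuousOn L (Ioo 0 1) := by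
    apply (continuous_pow _).continuousOn.mul
    exact ((sdc.pow 2).continuousOn.add (hcc.mul (scont.pow 2).continuousOn))
  have hcR : ContinuousOn R (Ioo 0 1) := by
    apply (continuous_pow _).continuousOn.mul
    apply (hcf.pow 2).mul
    have : ContinuousOn (fun r => (deriv s r * f r - s r * f' r) / f r ^ 2) (Ioo 0 1) :=
      ((sdc.continuousOn.mul hcf).sub (scont.continuousOn.mul hcf')).div (hcf.pow 2)
        fun r hr => pow_ne_zero _ (hfne r hr)
    exact (this.congr fun r hr => (hud r hr).deriv).pow 2
  have hL0 : ∀ r ∉ tsupport s, L r = 0 := fun r hr => by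
    simp [hLdef, hs0 r hr, hds0 r hr]
  have hR0 : ∀ r ∉ tsupport s, R r = 0 := fun r hr => by
    simp [hRdef, hu0 r hr]
  obtain ⟨hcLg, hIL⟩ := hardy_aux_integrable s hscs hssup L hcL hL0
  obtain ⟨hcRg, hIR⟩ := hardy_aux_integrable s hscs hssup R hcR hR0
  obtain ⟨hcDFg, hIDF⟩ := hardy_aux_integrable s hscs hssup (deriv F) hcderivF hdF0
  -- key pointwise identity on (0,1)
  have key : ∀ r ∈ Ioo (0:ℝ) 1, L r = R r + deriv F r := by
    intro r hr
    have hr0 : r ≠ 0 := hr.1.ne'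
    have hfr : f r ≠ 0 := hfne r hr
    have hf'' : f'' r = c r * f r - ((N:ℝ) - 1) / r * f' r := by
      have := hode r hr; linarith
    obtain ⟨k, hk⟩ : ∃ k, N - 1 = k + 1 := ⟨N - 2, by omega⟩
    have e2 : N - 1 - 1 = k := by omega
    have e3 : ((N - 1 : ℕ) : ℝ) = (k : ℝ) + 1 := by rw [hk]; push_cast; ring
    rw [hdF r hr]
    simp only [hLdef, hRdef, hDFdef]
    rw [(hud r hr).deriv]
    have e4 : ((N:ℝ)) = (k:ℝ) + 2 := by
      have hN2 : N = k + 2 := by omega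
      rw [hN2]; push_cast; ring
    simp only [hf'', e2, e3, e4, hk, pow_succ, pow_one]
    field_simp
    norm_num
    ring
  -- integral identity
  have hzero : ∫ r, deriv F r = 0 := by
    have hF_cd : ContDiff ℝ 1 F := contDiff_one_iff_deriv.mpr ⟨hFdiff, hcDFg⟩
    have hF_cs : HasCompactSupport F := HasCompactSupport.intro hscs hF0
    have h1 : ∫ x in Ioi (-1:ℝ), deriv F x = - F (-1) :=
      HasCompactSupport.integral_Ioi_deriv_eq hF_cd hF_cs (-1)
    have h2 : ∫ x, deriv F x = ∫ x in Ioi (-1:ℝ), deriv F x := by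
      refine (setIntegral_eq_integral_of_forall_compl_eq_zero fun x hx => ?_).symm
      refine hdF0 x fun hmem => hx ?_
      have := (hssup hmem).1
      exact mem_Ioi.mpr (by linarith)
    have h3 : F (-1) = 0 := hF0 (-1) fun hmem => by
      have := (hssup hmem).1; linarith
    rw [h2, h1, h3, neg_zero]
  have eq1 : ∫ r in Ioo (0:ℝ) 1, L r = ∫ r, L r :=
    setIntegral_eq_integral_of_forall_compl_eq_zero fun x hx =>
      hL0 x fun hmem => hx (hssup hmem)
  have eq2 : ∫ r in Ioo (0:ℝ) 1, R r = ∫ r, R r :=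
    setIntegral_eq_integral_of_forall_compl_eq_zero fun x hx =>
      hR0 x fun hmem => hx (hssup hmem)
  have eq3 : (fun r => L r) = fun r => R r + deriv F r := by
    funext r
    by_cases hr : r ∈ Ioo (0:ℝ) 1
    · exact key r hr
    · have hr' : r ∉ tsupport s := fun hmem => hr (hssup hmem)
      rw [hL0 r hr', hR0 r hr', hdF0 r hr', add_zero]
  refine ⟨hIR, ?_⟩
  calc ∫ r in Ioo (0:ℝ) 1, L r = ∫ r, L r := eq1
    _ = ∫ r, (R r + deriv F r) := by rw [eq3]
    _ = (∫ r, R r) + ∫ r, deriv F r := integral_add hIR hIDF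
    _ = ∫ r, R r := by rw [hzero, add_zero]
    _ = ∫ r in Ioo (0:ℝ) 1, R r := eq2.symm


/-- **Hardy decomposition identity for the zero mode of the second variation**
(Lemma 3.2): if `(f,g)` solves the extended radial system on `(0,1)` with
`f > 0` and `g > 0`, then for all `s, q ∈ C_c^∞((0,1))` the zero-mode second
variation integrand decomposes as `f² ((s/f)')² + g² ((q/g)')²`. -/
theorem hardy_decomposition_zero_mode
    (N : ℕ) (hN : 2 ≤ N) (ε η : ℝ) (hε : 0 < ε) (hη : 0 < η)
    (W W' W'' : ℝ → ℝ)
    (hW1 : ∀ t ∈ Iic (1:ℝ), HasDerivWithinAt W (W' t) (Iic 1) t)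
    (hW2 : ∀ t ∈ Iic (1:ℝ), HasDerivWithinAt W' (W'' t) (Iic 1) t)
    (hW2c : ContinuousOn W'' (Iic 1))
    (Wt Wt' Wt'' : ℝ → ℝ)
    (hV1 : ∀ t ∈ Ici (0:ℝ), HasDerivWithinAt Wt (Wt' t) (Ici 0) t)
    (hV2 : ∀ t ∈ Ici (0:ℝ), HasDerivWithinAt Wt' (Wt'' t) (Ici 0) t)
    (hV2c : ContinuousOn Wt'' (Ici 0))
    (f f' f'' g g' g'' : ℝ → ℝ)
    (hf1 : ∀ r ∈ Ioo (0:ℝ) 1, HasDerivAt f (f' r) r)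
    (hf2 : ∀ r ∈ Ioo (0:ℝ) 1, HasDerivAt f' (f'' r) r)
    (hf2c : ContinuousOn f'' (Ioo 0 1))
    (hg1 : ∀ r ∈ Ioo (0:ℝ) 1, HasDerivAt g (g' r) r)
    (hg2 : ∀ r ∈ Ioo (0:ℝ) 1, HasDerivAt g' (g'' r) r)
    (hg2c : ContinuousOn g'' (Ioo 0 1))
    (odef : ∀ r ∈ Ioo (0:ℝ) 1,
      f'' r + ((N:ℝ) - 1) / r * f' r - ((N:ℝ) - 1) / r ^ 2 * f r
        = -(1 / ε ^ 2) * W' (1 - f r ^ 2 - g r ^ 2) * f r)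
    (odeg : ∀ r ∈ Ioo (0:ℝ) 1,
      g'' r + ((N:ℝ) - 1) / r * g' r
        = -(1 / ε ^ 2) * W' (1 - f r ^ 2 - g r ^ 2) * g r
          + (1 / η ^ 2) * Wt' (g r ^ 2) * g r)
    (hfpos : ∀ r ∈ Ioo (0:ℝ) 1, 0 < f r)
    (hgpos : ∀ r ∈ Ioo (0:ℝ) 1, 0 < g r) :
    ∀ s q : ℝ → ℝ,
      ContDiff ℝ (⊤:ℕ∞) s → HasCompactSupport s → tsupport s ⊆ Ioo 0 1 →
      ContDiff ℝ (⊤:ℕ∞) q → HasCompactSupport q → tsupport q ⊆ Ioo 0 1 →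
      ∫ r in Ioo (0:ℝ) 1,
          (r ^ (N - 1) * (deriv s r ^ 2 + ((N:ℝ) - 1) / r ^ 2 * s r ^ 2
            + deriv q r ^ 2
            - 1 / ε ^ 2 * W' (1 - f r ^ 2 - g r ^ 2) * (s r ^ 2 + q r ^ 2)
            + 1 / η ^ 2 * Wt' (g r ^ 2) * q r ^ 2))
        = ∫ r in Ioo (0:ℝ) 1,
            (r ^ (N - 1) * (f r ^ 2 * (deriv (fun t => s t / f t) r) ^ 2
              + g r ^ 2 * (deriv (fun t => q t / g t) r) ^ 2)) := by
  intro s q hs hscs hssup hq hqcs hqsup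
  have h1top : (1 : WithTop ℕ∞) ≤ ((⊤:ℕ∞) : WithTop ℕ∞) := by exact_mod_cast le_top
  have hcf : ContinuousOn f (Ioo 0 1) := fun r hr =>
    (hf1 r hr).continuousAt.continuousWithinAt
  have hcg : ContinuousOn g (Ioo 0 1) := fun r hr =>
    (hg1 r hr).continuousAt.continuousWithinAt
  have hW'c : ContinuousOn W' (Iic 1) := fun t ht =>
    (hW2 t ht).differentiableWithinAt.continuousWithinAt
  have hWt'c : ContinuousOn Wt' (Ici 0) := fun t ht =>
    (hV2 t ht).differentiableWithinAt.continuousWithinAt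
  have hcP : ContinuousOn (fun r => W' (1 - f r ^ 2 - g r ^ 2)) (Ioo 0 1) := by
    apply hW'c.comp ((continuousOn_const.sub (hcf.pow 2)).sub (hcg.pow 2))
    intro r hr
    simp only [mem_Iic, Pi.sub_apply, Pi.pow_apply]
    nlinarith [sq_nonneg (f r), sq_nonneg (g r)]
  have hcQ : ContinuousOn (fun r => Wt' (g r ^ 2)) (Ioo 0 1) := by
    apply hWt'c.comp (hcg.pow 2)
    intro r hr
    exact sq_nonneg (g r)
  set cf : ℝ → ℝ := fun r =>
    ((N:ℝ) - 1) / r ^ 2 - 1 / ε ^ 2 * W' (1 - f r ^ 2 - g r ^ 2) with hcfdef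
  set cg : ℝ → ℝ := fun r =>
    -(1 / ε ^ 2) * W' (1 - f r ^ 2 - g r ^ 2) + 1 / η ^ 2 * Wt' (g r ^ 2) with hcgdef
  have hccf : ContinuousOn cf (Ioo 0 1) := by
    apply ContinuousOn.sub
    · exact continuousOn_const.div (continuous_pow 2).continuousOn
        fun r hr => pow_ne_zero _ hr.1.ne'
    · exact continuousOn_const.mul hcP
  have hccg : ContinuousOn cg (Ioo 0 1) :=
    (continuousOn_const.mul hcP).add (continuousOn_const.mul hcQ)
  have odef' : ∀ r ∈ Ioo (0:ℝ) 1,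
      f'' r + ((N:ℝ) - 1) / r * f' r = cf r * f r := by
    intro r hr
    have h := odef r hr
    simp only [hcfdef]
    linear_combination h
  have odeg' : ∀ r ∈ Ioo (0:ℝ) 1,
      g'' r + ((N:ℝ) - 1) / r * g' r = cg r * g r := by
    intro r hr
    have h := odeg r hr
    simp only [hcgdef]
    linear_combination h
  obtain ⟨hIRs, hEs⟩ := hardy_aux N hN f f' f'' cf hf1 hf2 hf2c hccf odef' hfpos
    s hs hscs hssup
  obtain ⟨hIRq, hEq⟩ := hardy_aux N hN g g' g'' cg hg1 hg2 hg2c hccg odeg' hgpos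
    q hq hqcs hqsup
  -- integrability of the two pieces of the left-hand side
  have hILs : Integrable (fun r => r ^ (N-1) * (deriv s r ^2 + cf r * s r ^2)) := by
    refine (hardy_aux_integrable s hscs hssup _ ?_ ?_).2
    · exact (continuous_pow _).continuousOn.mul
        (((hs.continuous_deriv h1top).pow 2).continuousOn.add
          (hccf.mul (hs.continuous.pow 2).continuousOn))
    · intro r hr
      have h1 : s r = 0 := image_eq_zero_of_notMem_tsupport hr
      have h2 : deriv s r = 0 :=
        Function.notMem_support.mp fun h => hr (support_deriv_subset h)
      simp [h1, h2]
  have hILq : Integrable (fun r => r ^ (N-1) * (deriv q r ^2 + cg r * q r ^2)) := by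
    refine (hardy_aux_integrable q hqcs hqsup _ ?_ ?_).2
    · exact (continuous_pow _).continuousOn.mul
        (((hq.continuous_deriv h1top).pow 2).continuousOn.add
          (hccg.mul (hq.continuous.pow 2).continuousOn))
    · intro r hr
      have h1 : q r = 0 := image_eq_zero_of_notMem_tsupport hr
      have h2 : deriv q r = 0 :=
        Function.notMem_support.mp fun h => hr (support_deriv_subset h)
      simp [h1, h2]
  calc ∫ r in Ioo (0:ℝ) 1,
          (r ^ (N - 1) * (deriv s r ^ 2 + ((N:ℝ) - 1) / r ^ 2 * s r ^ 2
            + deriv q r ^ 2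
            - 1 / ε ^ 2 * W' (1 - f r ^ 2 - g r ^ 2) * (s r ^ 2 + q r ^ 2)
            + 1 / η ^ 2 * Wt' (g r ^ 2) * q r ^ 2))
      = ∫ r in Ioo (0:ℝ) 1,
          (r ^ (N-1) * (deriv s r ^2 + cf r * s r ^2)
            + r ^ (N-1) * (deriv q r ^2 + cg r * q r ^2)) := by
        refine setIntegral_congr_fun measurableSet_Ioo fun r _ => ?_
        simp only [hcfdef, hcgdef]
        ring
    _ = (∫ r in Ioo (0:ℝ) 1, r ^ (N-1) * (deriv s r ^2 + cf r * s r ^2))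
        + ∫ r in Ioo (0:ℝ) 1, r ^ (N-1) * (deriv q r ^2 + cg r * q r ^2) :=
        integral_add hILs.integrableOn hILq.integrableOn
    _ = (∫ r in Ioo (0:ℝ) 1,
          r ^ (N-1) * (f r^2 * (deriv (fun t => s t / f t) r)^2))
        + ∫ r in Ioo (0:ℝ) 1,
          r ^ (N-1) * (g r^2 * (deriv (fun t => q t / g t) r)^2) := by
        rw [hEs, hEq]
    _ = ∫ r in Ioo (0:ℝ) 1,
          (r ^ (N-1) * (f r^2 * (deriv (fun t => s t / f t) r)^2)
            + r ^ (N-1) * (g r^2 * (deriv (fun t => q t / g t) r)^2)) :=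
        (integral_add hIRs.integrableOn hIRq.integrableOn).symm
    _ = ∫ r in Ioo (0:ℝ) 1,
            (r ^ (N - 1) * (f r ^ 2 * (deriv (fun t => s t / f t) r) ^ 2
              + g r ^ 2 * (deriv (fun t => q t / g t) r) ^ 2)) := by
        refine setIntegral_congr_fun measurableSet_Ioo fun r _ => ?_
        ring
end
end
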